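/- arXiv:1909.02417 — 12 statements merged into one kernel-verified Lean document; each statement's English description precedes it below -/
import Mathlib

section
/- Let A be a nonnegative n×m real matrix and let r = rank(A ∘ A), where A ∘ A is the entrywise (Hadamard) square of A. Then the phaseless rank of A is at least √r, i.e., rank_θ(A)² ≥ r. -/
open Matrix

noncomputable def phaselessRank {n m : ℕ} (A : Matrix (Fin n) (Fin m) ℝ) : ℕ :=
  sInf {r | ∃ B : Matrix (Fin n) (Fin m) ℂ,
    (∀ i j, ‖B i j‖ = A i j) ∧ B.rank = r}

lemma exists_factorization {n m k : ℕ} (B : Matrix (Fin n) (Fin m) ℂ) (hk : B.rank = k) :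
    ∃ (C : Matrix (Fin n) (Fin k) ℂ) (D : Matrix (Fin k) (Fin m) ℂ),
      ∀ i j, B i j = ∑ a, C i a * D a j := by
  set S : Submodule ℂ (Fin n → ℂ) := Submodule.span ℂ (Set.range Bᵀ) with hS
  have hfr : Module.finrank ℂ S = k := by
    have := B.rank_eq_finrank_span_cols
    rw [hk] at this
    exact this.symm
  let b : Module.Basis (Fin k) ℂ S := (Module.finBasis ℂ S).reindex (finCongr hfr)
  refine ⟨Matrix.of fun i a => (b a : Fin n → ℂ) i,
    Matrix.of fun a j => b.repr ⟨Bᵀ j, Submodule.subset_span (Set.mem_range_self j)⟩ a, ?_⟩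
  intro i j
  have h1 : (⟨Bᵀ j, Submodule.subset_span (Set.mem_range_self j)⟩ : S) =
      ∑ a, b.repr ⟨Bᵀ j, Submodule.subset_span (Set.mem_range_self j)⟩ a • b a :=
    (b.sum_repr _).symm
  have h2 := congrArg (fun v : S => (v : Fin n → ℂ) i) h1
  simp only [Submodule.coe_sum, Submodule.coe_smul, Finset.sum_apply, Pi.smul_apply,
    smul_eq_mul] at h2
  rw [show B i j = Bᵀ j i from rfl, h2]
  simp [mul_comm]

theorem stmt_2 {n m : ℕ} (A : Matrix (Fin n) (Fin m) ℝ) (hA : ∀ i j, 0 ≤ A i j)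
    (r : ℕ) (hr : r = (Matrix.of fun i j => A i j * A i j).rank) :
    r ≤ (phaselessRank A) ^ 2 := by
  have hne : {s | ∃ B : Matrix (Fin n) (Fin m) ℂ,
      (∀ i j, ‖B i j‖ = A i j) ∧ B.rank = s}.Nonempty := by
    refine ⟨(A.map Complex.ofReal).rank, A.map Complex.ofReal, fun i j => ?_, rfl⟩
    simp [Matrix.map_apply, Complex.norm_real, abs_of_nonneg (hA i j)]
  obtain ⟨B, hB, hBrank⟩ := Nat.sInf_mem hne
  have hBrank' : B.rank = phaselessRank A := hBrank
  obtain ⟨C, D, hCD⟩ := exists_factorization B hBrank'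
  set E : Matrix (Fin n) (Fin (phaselessRank A) × Fin (phaselessRank A)) ℝ :=
    Matrix.of fun i p =>
      (C i p.1 * star (C i p.2)).re + (C i p.1 * star (C i p.2)).im with hE
  set F : Matrix (Fin (phaselessRank A) × Fin (phaselessRank A)) (Fin m) ℝ :=
    Matrix.of fun p j =>
      (D p.1 j * star (D p.2 j)).re - (D p.1 j * star (D p.2 j)).im with hF
  have key : (Matrix.of fun i j => A i j * A i j) = E * F := by
    ext i j
    set x : Fin (phaselessRank A) → Fin (phaselessRank A) → ℂ :=
      fun a b => C i a * star (C i b) with hx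
    set y : Fin (phaselessRank A) → Fin (phaselessRank A) → ℂ :=
      fun a b => D a j * star (D b j) with hy
    have hxswap : ∀ a b, x b a = star (x a b) := by
      intro a b; simp only [hx, star_mul', star_star]; ring
    have hyswap : ∀ a b, y b a = star (y a b) := by
      intro a b; simp only [hy, star_mul', star_star]; ring
    have hcross1 : ∑ a, ∑ b, (x a b).re * (y a b).im = 0 := by
      have hterm : ∀ a b, (x b a).re * (y b a).im = -((x a b).re * (y a b).im) := by
        intro a b
        rw [hxswap a b, hyswap a b]
        simp [Complex.star_def]
      have h := Finset.sum_comm (s := (Finset.univ : Finset (Fin (phaselessRank A))))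
        (t := Finset.univ) (f := fun a b => (x a b).re * (y a b).im)
      have h2 : (∑ b, ∑ a, (x a b).re * (y a b).im)
          = -∑ a, ∑ b, (x a b).re * (y a b).im := by
        simp only [← Finset.sum_neg_distrib, ← hterm]
      rw [h2] at h
      linarith
    have hcross2 : ∑ a, ∑ b, (x a b).im * (y a b).re = 0 := by
      have hterm : ∀ a b, (x b a).im * (y b a).re = -((x a b).im * (y a b).re) := by
        intro a b
        rw [hxswap a b, hyswap a b]
        simp [Complex.star_def]
      have h := Finset.sum_comm (s := (Finset.univ : Finset (Fin (phaselessRank A))))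
        (t := Finset.univ) (f := fun a b => (x a b).im * (y a b).re)
      have h2 : (∑ b, ∑ a, (x a b).im * (y a b).re)
          = -∑ a, ∑ b, (x a b).im * (y a b).re := by
        simp only [← Finset.sum_neg_distrib, ← hterm]
      rw [h2] at h
      linarith
    have hsum : ∑ a, ∑ b, x a b * y a b = (A i j : ℂ) * (A i j : ℂ) := by
      have step : ∑ a, ∑ b, x a b * y a b = B i j * star (B i j) := by
        rw [hCD i j, star_sum, Finset.sum_mul_sum]
        refine Finset.sum_congr rfl fun a _ => Finset.sum_congr rfl fun b _ => ?_
        simp only [hx, hy, star_mul']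
        ring
      rw [step, show star (B i j) = (starRingEnd ℂ) (B i j) from rfl, Complex.mul_conj,
        ← Complex.sq_norm, hB i j]
      push_cast; ring
    have hre := congrArg Complex.re hsum
    simp only [Complex.re_sum, Complex.mul_re, Complex.ofReal_re, Complex.ofReal_im,
      mul_zero, sub_zero] at hre
    show A i j * A i j = ∑ p : Fin (phaselessRank A) × Fin (phaselessRank A), E i p * F p j
    rw [Fintype.sum_prod_type]
    have expand : ∑ a, ∑ b, E i (a, b) * F (a, b) j
        = ∑ a, ∑ b, ((x a b).re * (y a b).re - (x a b).im * (y a b).im)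
          + (∑ a, ∑ b, (x a b).im * (y a b).re)
          - (∑ a, ∑ b, (x a b).re * (y a b).im) := by
      simp only [← Finset.sum_sub_distrib, ← Finset.sum_add_distrib]
      refine Finset.sum_congr rfl fun a _ => Finset.sum_congr rfl fun b _ => ?_
      simp only [hE, hF, Matrix.of_apply, hx, hy]
      ring
    rw [expand, hcross1, hcross2, add_zero, sub_zero]
    exact hre.symm
  rw [hr, key]
  calc (E * F).rank ≤ E.rank := Matrix.rank_mul_le_left E F
    _ ≤ Fintype.card (Fin (phaselessRank A) × Fin (phaselessRank A)) :=
        Matrix.rank_le_card_width E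
    _ = (phaselessRank A) ^ 2 := by simp [sq]
end

section
/- Let A be a nonnegative n×m real matrix and let r = rank(A ∘ A). Then the signless rank of A satisfies rank_±(A) ≥ (√(1+8r) − 1)/2, equivalently r ≤ binomial(rank_±(A)+1, 2). -/
open Matrix

noncomputable def signlessRank {n m : ℕ} (A : Matrix (Fin n) (Fin m) ℝ) : ℕ :=
  sInf {r | ∃ B : Matrix (Fin n) (Fin m) ℝ,
    (∀ i j, |B i j| = A i j) ∧ B.rank = r}

lemma sq_rank_le {n m : ℕ} (B : Matrix (Fin n) (Fin m) ℝ) :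
    (Matrix.of fun i j => B i j * B i j).rank ≤ (B.rank + 1).choose 2 := by
  classical
  set k := B.rank with hk
  set S : Submodule ℝ (Fin n → ℝ) := Submodule.span ℝ (Set.range Bᵀ) with hS
  have hfr : Module.finrank ℝ S = k := (B.rank_eq_finrank_span_cols).symm
  haveI : FiniteDimensional ℝ S := FiniteDimensional.finiteDimensional_submodule S
  let b : Module.Basis (Fin k) ℝ S := (Module.finBasis ℝ S).reindex (finCongr hfr)
  have hmem : ∀ j, Bᵀ j ∈ S := fun j => Submodule.subset_span ⟨j, rfl⟩
  have hrepr : ∀ j i, B i j = ∑ s, b.repr ⟨Bᵀ j, hmem j⟩ s * (b s : Fin n → ℝ) i := by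
    intro j i
    have := b.sum_repr ⟨Bᵀ j, hmem j⟩
    have h2 := congrArg (fun x : S => (x : Fin n → ℝ) i) this
    simp only [Submodule.coe_sum, Finset.sum_apply, Submodule.coe_smul, Pi.smul_apply,
      smul_eq_mul] at h2
    exact h2.symm
  let v : Sym2 (Fin k) → (Fin n → ℝ) :=
    Sym2.lift ⟨fun s t => fun i => (b s : Fin n → ℝ) i * (b t : Fin n → ℝ) i,
      fun s t => by funext i; exact mul_comm _ _⟩
  have hcol : ∀ j, (Matrix.of fun i j => B i j * B i j)ᵀ j ∈
      Submodule.span ℝ (Set.range v) := by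
    intro j
    have : (Matrix.of fun i j => B i j * B i j)ᵀ j
        = ∑ s, ∑ t, (b.repr ⟨Bᵀ j, hmem j⟩ s * b.repr ⟨Bᵀ j, hmem j⟩ t) • v s(s, t) := by
      funext i
      simp only [Matrix.transpose_apply, Matrix.of_apply, Finset.sum_apply,
        Pi.smul_apply, smul_eq_mul]
      rw [hrepr j i, Finset.sum_mul_sum]
      refine Finset.sum_congr rfl fun s _ => Finset.sum_congr rfl fun t _ => ?_
      simp only [v, Sym2.lift_mk]
      ring
    rw [this]
    exact Submodule.sum_mem _ fun s _ => Submodule.sum_mem _ fun t _ =>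
      Submodule.smul_mem _ _ (Submodule.subset_span ⟨s(s, t), rfl⟩)
  calc (Matrix.of fun i j => B i j * B i j).rank
      = Module.finrank ℝ (Submodule.span ℝ
          (Set.range (Matrix.of fun i j => B i j * B i j)ᵀ)) :=
        Matrix.rank_eq_finrank_span_cols _
    _ ≤ Module.finrank ℝ (Submodule.span ℝ (Set.range v)) := by
        apply Submodule.finrank_mono
        rw [Submodule.span_le]
        rintro _ ⟨j, rfl⟩
        exact hcol j
    _ ≤ Fintype.card (Sym2 (Fin k)) := finrank_range_le_card v
    _ = (k + 1).choose 2 := by rw [Sym2.card, Fintype.card_fin]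

theorem stmt_3 {n m : ℕ} (A : Matrix (Fin n) (Fin m) ℝ) (hA : ∀ i j, 0 ≤ A i j)
    (r : ℕ) (hr : r = (Matrix.of fun i j => A i j * A i j).rank) :
    r ≤ (signlessRank A + 1).choose 2 := by
  have hne : {r | ∃ B : Matrix (Fin n) (Fin m) ℝ,
      (∀ i j, |B i j| = A i j) ∧ B.rank = r}.Nonempty :=
    ⟨A.rank, A, fun i j => abs_of_nonneg (hA i j), rfl⟩
  obtain ⟨B, hB, hBr⟩ := Nat.sInf_mem hne
  have heq : (Matrix.of fun i j => A i j * A i j)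
      = (Matrix.of fun i j => B i j * B i j) := by
    ext i j
    simp only [Matrix.of_apply]
    rw [← hB i j, abs_mul_abs_self]
  rw [hr, heq]
  have := sq_rank_le B
  rwa [hBr] at this
end

section
/- The 4×4 derangement matrix D₄ (with zeros on the diagonal and ones elsewhere) has phaseless rank equal to 2: there exists a complex 4×4 matrix B of rank 2 with |B_{ij}| = (D₄)_{ij} for all i,j, and no such matrix of rank at most 1 exists. -/
open Matrix

def D4 : Matrix (Fin 4) (Fin 4) ℝ := fun i j => if i = j then 0 else 1

noncomputable def s3 : ℝ := Real.sqrt 3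
lemma s3_sq : s3 * s3 = 3 := Real.mul_self_sqrt (by norm_num)
noncomputable def xv : Fin 4 → ℂ := ![1, 1, 1, (s3:ℝ)]
noncomputable def yv : Fin 4 → ℂ := ![0, 1, (1 + s3*Complex.I)/2, (s3 + Complex.I)/2]
noncomputable def Bc : Matrix (Fin 4) (Fin 4) ℂ := fun i j => xv i * yv j - yv i * xv j

lemma abs_one_of (z : ℂ) (h : z.re^2 + z.im^2 = 1) : ‖z‖ = 1 := by
  rw [Complex.norm_def, Complex.normSq_apply]
  rw [show z.re*z.re + z.im*z.im = 1 by nlinarith]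
  exact Real.sqrt_one

lemma Bc_abs : ∀ i j, ‖Bc i j‖ = D4 i j := by
  intro i j
  fin_cases i <;> fin_cases j <;>
    simp only [Bc, xv, yv, D4] <;>
    first
      | (simp [mul_comm]; done)
      | (apply Eq.trans (b := (1:ℝ))
         · apply abs_one_of
           simp [div_eq_mul_inv]
           ring_nf
           first
             | nlinarith [s3_sq]
             | (left; nlinarith [s3_sq])
         · norm_num [Fin.ext_iff])

noncomputable def Mm : Matrix (Fin 4) (Fin 2) ℂ := fun i k => if k = 0 then xv i else yv i
noncomputable def Nm : Matrix (Fin 2) (Fin 4) ℂ := fun k j => if k = 0 then yv j else -xv j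

lemma Bc_factor : Bc = Mm * Nm := by
  ext i j
  simp [Bc, Mm, Nm, Matrix.mul_apply, Fin.sum_univ_two]
  ring

def Pm : Matrix (Fin 2) (Fin 4) ℂ := !![1,0,0,0; 0,1,0,0]

lemma rank_ge_two (B : Matrix (Fin 4) (Fin 4) ℂ)
    (h : ∀ i j, ‖B i j‖ = D4 i j) : 2 ≤ B.rank := by
  have h00 : B 0 0 = 0 := by
    have := h 0 0; simp [D4] at this; exact this
  have h11 : B 1 1 = 0 := by
    have := h 1 1; simp [D4] at this; exact this
  have h01 : B 0 1 ≠ 0 := by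
    intro hz
    have := h 0 1; rw [hz] at this; simp [D4] at this
  have h10 : B 1 0 ≠ 0 := by
    intro hz
    have := h 1 0; rw [hz] at this; simp [D4] at this
  set S : Matrix (Fin 2) (Fin 2) ℂ := Pm * B * Pmᵀ with hS
  have hSval : S = !![0, B 0 1; B 1 0, 0] := by
    ext k l
    fin_cases k <;> fin_cases l <;>
      simp [hS, Pm, Matrix.mul_apply, Matrix.vecMul, dotProduct,
        Matrix.vecHead, Matrix.vecTail, Matrix.transpose_apply, Fin.sum_univ_four, Fin.sum_univ_two, h00, h11]
  have hdet : S.det ≠ 0 := by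
    rw [hSval, Matrix.det_fin_two]
    simp
    exact ⟨h01, h10⟩
  have hunit : IsUnit S := (Matrix.isUnit_iff_isUnit_det S).2 (isUnit_iff_ne_zero.2 hdet)
  have hrS : S.rank = 2 := by
    rw [Matrix.rank_of_isUnit S hunit]
    simp
  calc 2 = S.rank := hrS.symm
    _ ≤ (B * Pmᵀ).rank := by
        rw [hS, Matrix.mul_assoc]
        exact Matrix.rank_mul_le_right _ _
    _ ≤ B.rank := Matrix.rank_mul_le_left _ _

theorem stmt_4 :
    (∃ B : Matrix (Fin 4) (Fin 4) ℂ,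
      (∀ i j, ‖B i j‖ = D4 i j) ∧ B.rank = 2) ∧
    (∀ B : Matrix (Fin 4) (Fin 4) ℂ,
      (∀ i j, ‖B i j‖ = D4 i j) → 1 < B.rank) := by
  constructor
  · refine ⟨Bc, Bc_abs, ?_⟩
    have hle : Bc.rank ≤ 2 := by
      rw [Bc_factor]
      calc (Mm * Nm).rank ≤ Mm.rank := Matrix.rank_mul_le_left _ _
        _ ≤ Fintype.card (Fin 2) := Matrix.rank_le_card_width _
        _ = 2 := by simp
    have hge : 2 ≤ Bc.rank := rank_ge_two Bc Bc_abs
    omega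
  · intro B hB
    have := rank_ge_two B hB
    omega
end

section
/- The 4×4 derangement matrix D₄ (zeros on the diagonal, ones elsewhere) has signless rank 4: every real 4×4 matrix whose entrywise absolute values are given by D₄ is nonsingular. -/
open Matrix

lemma detE : (Matrix.det (fun i j => if i = j then 0 else 1 : Matrix (Fin 4) (Fin 4) (ZMod 2))) = 1 := by
  show Matrix.det (Matrix.of fun i j => if i = j then (0 : ZMod 2) else 1) = 1
  simp [Matrix.det_succ_row_zero, Fin.sum_univ_succ]
  decide

lemma key (B : Matrix (Fin 4) (Fin 4) ℝ) (h : ∀ i j, |B i j| = D4 i j) : B.det ≠ 0 := by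
  obtain ⟨C, hBC, hCE⟩ : ∃ C : Matrix (Fin 4) (Fin 4) ℤ,
      B = C.map (Int.cast) ∧
      C.map (fun x : ℤ => (x : ZMod 2)) =
        (fun i j => if i = j then 0 else 1 : Matrix (Fin 4) (Fin 4) (ZMod 2)) := by
    classical
    refine ⟨fun i j => if i = j then 0 else if 0 < B i j then 1 else -1, ?_, ?_⟩
    · funext i j
      by_cases hij : i = j
      · have := h i j; simp [D4, hij] at this
        simp [Matrix.map, hij, this]
      · have := h i j; simp [D4, hij] at this
        rcases (abs_eq (by norm_num : (0:ℝ) ≤ 1)).mp this with h1 | h1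
        · simp [Matrix.map, hij, h1]
        · have hn : ¬ (0 < B i j) := by rw [h1]; norm_num
          rw [h1]; simp [Matrix.map, hij, hn]
    · funext i j
      by_cases hij : i = j
      · simp [Matrix.map, hij]
      · by_cases hp : 0 < B i j <;> simp [Matrix.map, hij, hp] <;> decide
  have hdet : B.det = ((C.det : ℤ) : ℝ) := by
    rw [hBC]
    exact (RingHom.map_det (Int.castRingHom ℝ) C).symm
  have hC2 : ((C.det : ℤ) : ZMod 2) = 1 := by
    have h2 : ((C.det : ℤ) : ZMod 2) = (C.map (fun x : ℤ => (x : ZMod 2))).det :=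
      RingHom.map_det (Int.castRingHom (ZMod 2)) C
    rw [h2, hCE, detE]
  have : C.det ≠ 0 := by
    intro h0; rw [h0] at hC2; simp at hC2
  rw [hdet]
  exact_mod_cast this

theorem stmt_5 :
    signlessRank D4 = 4 ∧
    ∀ B : Matrix (Fin 4) (Fin 4) ℝ, (∀ i j, |B i j| = D4 i j) → B.det ≠ 0 := by
  refine ⟨?_, key⟩
  have hset : {r | ∃ B : Matrix (Fin 4) (Fin 4) ℝ,
      (∀ i j, |B i j| = D4 i j) ∧ B.rank = r} = {4} := by
    ext r
    simp only [Set.mem_setOf_eq, Set.mem_singleton_iff]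
    constructor
    · rintro ⟨B, hB, rfl⟩
      have hu : IsUnit B := by
        rw [Matrix.isUnit_iff_isUnit_det]
        exact isUnit_iff_ne_zero.mpr (key B hB)
      simpa using Matrix.rank_of_isUnit B hu
    · rintro rfl
      refine ⟨D4, fun i j => ?_, ?_⟩
      · by_cases hij : i = j <;> simp [D4, hij]
      · have hu : IsUnit D4 := by
          rw [Matrix.isUnit_iff_isUnit_det]
          exact isUnit_iff_ne_zero.mpr
            (key D4 (fun i j => by by_cases hij : i = j <;> simp [D4, hij]))
        simpa using Matrix.rank_of_isUnit D4 hu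
  rw [signlessRank, hset]
  simp
end

section
/- A finite list of nonnegative real numbers a₁,…,aₙ is nonlopsided (no aₖ exceeds the sum of the others) if and only if there exist real numbers θ₁,…,θₙ such that the sum of aₖ·e^{iθₖ} over k equals zero. -/
open Finset Complex

lemma signs_lemma {ι : Type*} [DecidableEq ι] (s : Finset ι) (a : ι → ℝ) (B : ℝ) (hB : 0 ≤ B)
    (h0 : ∀ i ∈ s, 0 ≤ a i) (h1 : ∀ i ∈ s, a i ≤ B) :
    ∃ ε : ι → ℝ, (∀ i, ε i = 1 ∨ ε i = -1) ∧ |∑ i ∈ s, ε i * a i| ≤ B := by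
  classical
  induction s using Finset.induction with
  | empty => exact ⟨fun _ => 1, fun _ => Or.inl rfl, by simpa using hB⟩
  | @insert j s hj ih =>
    obtain ⟨ε, hε, hεs⟩ := ih (fun i hi => h0 i (mem_insert_of_mem hi))
      (fun i hi => h1 i (mem_insert_of_mem hi))
    set T := ∑ i ∈ s, ε i * a i with hT
    set σ : ℝ := if 0 ≤ T then -1 else 1 with hσ
    refine ⟨Function.update ε j σ, ?_, ?_⟩
    · intro i
      by_cases h : i = j
      · subst h; rw [Function.update_self]; by_cases h0T : 0 ≤ T <;> simp [hσ, h0T]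
      · rw [Function.update_of_ne h]; exact hε i
    · rw [Finset.sum_insert hj, Function.update_self]
      have hs : ∑ i ∈ s, Function.update ε j σ i * a i = T := by
        rw [hT]; apply Finset.sum_congr rfl
        intro i hi
        rw [Function.update_of_ne (ne_of_mem_of_not_mem hi hj)]
      rw [hs]
      have haj0 := h0 j (mem_insert_self j s)
      have haj1 := h1 j (mem_insert_self j s)
      rw [abs_le] at hεs ⊢
      by_cases h0T : 0 ≤ T <;> simp only [hσ, h0T, if_true, if_false] <;>
        constructor <;> nlinarith [hεs.1, hεs.2]

theorem stmt_7 {n : ℕ} (a : Fin n → ℝ) (ha : ∀ k, 0 ≤ a k) :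
    (∀ k, a k ≤ ∑ j ∈ Finset.univ.erase k, a j) ↔
    ∃ θ : Fin n → ℝ, ∑ k, (a k : ℂ) * Complex.exp ((θ k : ℂ) * Complex.I) = 0 := by
  constructor
  · intro h
    rcases Nat.eq_zero_or_pos n with hn | hn
    · subst hn; exact ⟨fun k => 0, by simp⟩
    have : Nonempty (Fin n) := ⟨⟨0, hn⟩⟩
    -- max index m
    obtain ⟨m, -, hm⟩ := Finset.exists_max_image (Finset.univ : Finset (Fin n)) a
      Finset.univ_nonempty
    obtain ⟨ε, hε, hεsum⟩ := signs_lemma (Finset.univ.erase m) a (a m) (ha m)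
      (fun i _ => ha i) (fun i _ => hm i (Finset.mem_univ i))
    set c : Fin n → ℝ := fun k => if ε k = 1 then 0 else Real.pi with hc
    set F : ℝ → ℝ := fun t =>
      ‖∑ k ∈ Finset.univ.erase m, (a k : ℂ) * Complex.exp (((c k * t : ℝ) : ℂ) * Complex.I)‖
      with hF
    have hFcont : Continuous F := by
      apply continuous_norm.comp
      apply continuous_finset_sum
      intro k _
      exact continuous_const.mul (Complex.continuous_exp.comp
        ((Complex.continuous_ofReal.comp (continuous_const.mul continuous_id)).mul
          continuous_const))
    have hF0 : F 0 = ∑ k ∈ Finset.univ.erase m, a k := by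
      simp only [hF, mul_zero, Complex.ofReal_zero, zero_mul, Complex.exp_zero, mul_one]
      rw [← Complex.ofReal_sum, Complex.norm_real, Real.norm_eq_abs,
        _root_.abs_of_nonneg (Finset.sum_nonneg fun i _ => ha i)]
    have hF1 : F 1 = |∑ k ∈ Finset.univ.erase m, ε k * a k| := by
      simp only [hF, mul_one]
      have : ∀ k ∈ Finset.univ.erase m,
          (a k : ℂ) * Complex.exp ((c k : ℂ) * Complex.I) = ((ε k * a k : ℝ) : ℂ) := by
        intro k _
        rcases hε k with h1 | h1
        · simp [hc, h1]
        · have : ε k ≠ 1 := by rw [h1]; norm_num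
          have hck : c k = Real.pi := by simp [hc, this]
          rw [hck, Complex.exp_pi_mul_I, h1]
          push_cast
          ring
      rw [Finset.sum_congr rfl this, ← Complex.ofReal_sum, Complex.norm_real, Real.norm_eq_abs]
    have hmem : a m ∈ Set.Icc (F 1) (F 0) := ⟨by rw [hF1]; exact hεsum, by rw [hF0]; exact h m⟩
    have := intermediate_value_Icc' (by norm_num : (0:ℝ) ≤ 1) (hFcont.continuousOn)
    obtain ⟨t₀, -, ht₀⟩ := this hmem
    set v : ℂ := ∑ k ∈ Finset.univ.erase m, (a k : ℂ) * Complex.exp (((c k * t₀ : ℝ) : ℂ) * Complex.I) with hv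
    have habs : ‖v‖ = a m := ht₀
    refine ⟨fun k => if k = m then (-v).arg else c k * t₀, ?_⟩
    rw [← Finset.add_sum_erase _ _ (Finset.mem_univ m)]
    have hrest : ∑ k ∈ Finset.univ.erase m,
        (a k : ℂ) * Complex.exp (((if k = m then (-v).arg else c k * t₀ : ℝ) : ℂ) * Complex.I) = v := by
      rw [hv]
      apply Finset.sum_congr rfl
      intro k hk
      have : k ≠ m := Finset.ne_of_mem_erase hk
      simp [this]
    rw [hrest]
    have hmterm : (a m : ℂ) * Complex.exp (((if m = m then (-v).arg else c m * t₀ : ℝ) : ℂ) * Complex.I) = -v := by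
      have hif : (if m = m then (-v).arg else c m * t₀) = (-v).arg := if_pos rfl
      rw [hif]
      have : (a m : ℂ) = (‖-v‖ : ℂ) := by rw [norm_neg, habs]
      rw [this, Complex.norm_mul_exp_arg_mul_I]
    rw [hmterm]
    ring
  · rintro ⟨θ, hθ⟩ k
    have hk : (a k : ℂ) * Complex.exp ((θ k : ℂ) * Complex.I)
        = -∑ j ∈ Finset.univ.erase k, (a j : ℂ) * Complex.exp ((θ j : ℂ) * Complex.I) := by
      rw [← Finset.add_sum_erase _ _ (Finset.mem_univ k)] at hθ
      linear_combination hθ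
    have h1 : ‖(a k : ℂ) * Complex.exp ((θ k : ℂ) * Complex.I)‖ = a k := by
      rw [norm_mul, Complex.norm_exp_ofReal_mul_I, mul_one, Complex.norm_real, Real.norm_eq_abs,
        _root_.abs_of_nonneg (ha k)]
    calc a k = ‖(a k : ℂ) * Complex.exp ((θ k : ℂ) * Complex.I)‖ := h1.symm
      _ = ‖∑ j ∈ Finset.univ.erase k, (a j : ℂ) * Complex.exp ((θ j : ℂ) * Complex.I)‖ := by
          rw [hk, norm_neg]
      _ ≤ ∑ j ∈ Finset.univ.erase k, ‖(a j : ℂ) * Complex.exp ((θ j : ℂ) * Complex.I)‖ :=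
          norm_sum_le _ _
      _ = ∑ j ∈ Finset.univ.erase k, a j := Finset.sum_congr rfl fun j _ => by
          rw [norm_mul, Complex.norm_exp_ofReal_mul_I, mul_one, Complex.norm_real, Real.norm_eq_abs,
            _root_.abs_of_nonneg (ha j)]
end

section
/- Let A be a nonnegative real n×m matrix with n ≤ m. Then rank_θ(A) < n if and only if there exists λ in the standard simplex of ℝⁿ (λᵢ ≥ 0, Σλᵢ = 1) such that for every column l = 1,…,m, the list {A_{1l}λ₁, …, A_{nl}λₙ} is not lopsided (i.e., A_{il}λᵢ ≤ Σ_{k≠i} A_{kl}λₖ for all i). -/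
open Matrix Finset

lemma rank_lt_iff' {n m : ℕ} (B : Matrix (Fin n) (Fin m) ℂ) :
    B.rank < n ↔ ∃ μ : Fin n → ℂ, μ ≠ 0 ∧ Matrix.vecMul μ B = 0 := by
  rw [← Matrix.rank_transpose]
  have hrn := LinearMap.finrank_range_add_finrank_ker (Bᵀ.mulVecLin)
  have hfin : Module.finrank ℂ (Fin n → ℂ) = n := by simp
  rw [hfin] at hrn
  have hr : Bᵀ.rank = Module.finrank ℂ (LinearMap.range Bᵀ.mulVecLin) := rfl
  constructor
  · intro h
    have hker : LinearMap.ker Bᵀ.mulVecLin ≠ ⊥ := by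
      intro hk
      rw [hk] at hrn
      simp [finrank_bot] at hrn
      omega
    obtain ⟨μ, hμmem, hμne⟩ := Submodule.exists_mem_ne_zero_of_ne_bot hker
    refine ⟨μ, hμne, ?_⟩
    have := LinearMap.mem_ker.mp hμmem
    rw [Matrix.mulVecLin_apply, Matrix.mulVec_transpose] at this
    exact this
  · rintro ⟨μ, hμne, hμ⟩
    have hker : LinearMap.ker Bᵀ.mulVecLin ≠ ⊥ := by
      intro hk
      apply hμne
      have : μ ∈ LinearMap.ker Bᵀ.mulVecLin := by
        rw [LinearMap.mem_ker, Matrix.mulVecLin_apply, Matrix.mulVec_transpose]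
        exact hμ
      rw [hk] at this
      simpa using this
    have : 0 < Module.finrank ℂ (LinearMap.ker Bᵀ.mulVecLin) := by
      rw [Nat.pos_iff_ne_zero]
      intro h0
      exact hker (Submodule.finrank_eq_zero.mp h0)
    omega


lemma exists_subset_sum_between {ι : Type*} [DecidableEq ι] (r : ι → ℝ) (B X : ℝ)
    (hX : 0 ≤ X) (t : Finset ι) (hB : ∀ i ∈ t, r i ≤ B) :
    ∃ t1 ⊆ t, ∑ i ∈ t1, r i ≤ X ∧ (t1 = t ∨ X - B ≤ ∑ i ∈ t1, r i) := by
  induction t using Finset.induction with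
  | empty => exact ⟨∅, Finset.Subset.refl _, by simpa using hX, Or.inl rfl⟩
  | @insert a t ha ih =>
    obtain ⟨t1, ht1, hsum, hcase⟩ := ih (fun i hi => hB i (Finset.mem_insert_of_mem hi))
    have haB : r a ≤ B := hB a (Finset.mem_insert_self a t)
    rcases hcase with rfl | hge
    · by_cases h : (∑ i ∈ t1, r i) + r a ≤ X
      · refine ⟨insert a t1, Finset.Subset.refl _, ?_, Or.inl rfl⟩
        rw [Finset.sum_insert ha]; linarith
      · exact ⟨t1, Finset.subset_insert _ _, hsum, Or.inr (by linarith)⟩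
    · exact ⟨t1, ht1.trans (Finset.subset_insert _ _), hsum, Or.inr hge⟩

lemma triangle_complex (a b c : ℝ) (ha : 0 ≤ a) (hb : 0 ≤ b) (hc : 0 ≤ c)
    (h1 : a ≤ b + c) (h2 : b ≤ a + c) (h3 : c ≤ a + b) :
    ∃ z1 z2 z3 : ℂ, ‖z1‖ = a ∧ ‖z2‖ = b ∧ ‖z3‖ = c ∧
      z1 + z2 + z3 = 0 := by
  rcases eq_or_lt_of_le ha with h0 | ha'
  · have hbc : b = c := le_antisymm (by linarith) (by linarith)
    refine ⟨0, (b : ℂ), -(b : ℂ), by simp [← h0], ?_, ?_, by ring⟩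
    · simp [abs_of_nonneg hb]
    · rw [norm_neg, Complex.norm_real, Real.norm_eq_abs, abs_of_nonneg hb, hbc]
  · set x : ℝ := (c^2 - a^2 - b^2)/(2*a) with hxdef
    have hax : 2 * a * x = c^2 - a^2 - b^2 := by
      rw [hxdef]; field_simp
    have f1 : c^2 - a^2 - b^2 ≤ 2*a*b := by nlinarith
    have f2 : -(2*a*b) ≤ c^2 - a^2 - b^2 := by nlinarith
    have hxb : x ≤ b := by rw [hxdef, div_le_iff₀ (by linarith : (0:ℝ) < 2*a)]; linarith
    have hbx : -b ≤ x := by rw [hxdef, le_div_iff₀ (by linarith : (0:ℝ) < 2*a)]; linarith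
    have hx2 : x^2 ≤ b^2 := by nlinarith
    set y := Real.sqrt (b^2 - x^2) with hydef
    have hy : y^2 = b^2 - x^2 := Real.sq_sqrt (by linarith)
    refine ⟨⟨a, 0⟩, ⟨x, y⟩, ⟨-a - x, -y⟩, ?_, ?_, ?_, ?_⟩
    · rw [Complex.norm_def, Complex.normSq_mk]
      rw [show a * a + 0 * 0 = a^2 by ring, Real.sqrt_sq ha]
    · rw [Complex.norm_def, Complex.normSq_mk]
      rw [show x * x + y * y = x^2 + y^2 by ring, hy,
        show x^2 + (b^2 - x^2) = b^2 by ring, Real.sqrt_sq hb]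
    · rw [Complex.norm_def, Complex.normSq_mk]
      rw [show (-a - x) * (-a - x) + -y * -y = a^2 + 2*a*x + x^2 + y^2 by ring, hy, hax,
        show a^2 + (c^2 - a^2 - b^2) + x^2 + (b^2 - x^2) = c^2 by ring, Real.sqrt_sq hc]
    · apply Complex.ext <;> simp

lemma abs_scale (ρ g : ℝ) (w : ℂ) (hρ : 0 ≤ ρ) (hg : ρ ≤ g) (hw : ‖w‖ = g) :
    ‖((ρ / g : ℝ) : ℂ) * w‖ = ρ := by
  rcases eq_or_lt_of_le (hρ.trans hg) with h0 | hg'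
  · have : ρ = 0 := le_antisymm (h0 ▸ hg) hρ
    simp [this, ← h0]
  · rw [norm_mul, Complex.norm_real, Real.norm_eq_abs, hw, abs_of_nonneg (div_nonneg hρ (le_of_lt hg')),
      div_mul_cancel₀ _ (ne_of_gt hg')]

lemma scale_sum {ι : Type*} (u : Finset ι) (r : ι → ℝ) (w : ℂ)
    (hw : ‖w‖ = ∑ i ∈ u, r i) :
    ∑ i ∈ u, ((r i / (∑ k ∈ u, r k) : ℝ) : ℂ) * w = w := by
  by_cases hg : (∑ k ∈ u, r k) = 0
  · have hw0 : w = 0 := by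
      rw [← norm_eq_zero]; rw [hw, hg]
    simp [hw0]
  · rw [← Finset.sum_mul]
    have : ∑ i ∈ u, ((r i / (∑ k ∈ u, r k) : ℝ) : ℂ) = 1 := by
      rw [← Complex.ofReal_sum, ← Finset.sum_div, div_self hg, Complex.ofReal_one]
    rw [this, one_mul]

lemma polygon {ι : Type*} [DecidableEq ι] (s : Finset ι) (r : ι → ℝ)
    (h0 : ∀ i ∈ s, 0 ≤ r i) (h2 : ∀ i ∈ s, 2 * r i ≤ ∑ k ∈ s, r k) :
    ∃ z : ι → ℂ, (∀ i ∈ s, ‖z i‖ = r i) ∧ ∑ i ∈ s, z i = 0 := by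
  rcases s.eq_empty_or_nonempty with rfl | hne
  · exact ⟨0, by simp, by simp⟩
  obtain ⟨i0, hi0, hmax⟩ := s.exists_max_image r hne
  set T := ∑ k ∈ s, r k with hT
  have hT0 : 0 ≤ T := Finset.sum_nonneg h0
  set t := s.erase i0 with ht
  have hts : t ⊆ s := Finset.erase_subset _ _
  obtain ⟨t1, ht1, hs1, hcase⟩ := exists_subset_sum_between r (r i0) (T/2) (by linarith) t
    (fun i hi => hmax i (hts hi))
  have ht1s : t1 ⊆ s := ht1.trans hts
  set a1 := r i0 with ha1
  set a2 := ∑ i ∈ t1, r i with ha2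
  set a3 := ∑ i ∈ t \ t1, r i with ha3
  have hsplit : a2 + a3 = ∑ i ∈ t, r i := by
    rw [ha2, ha3, add_comm]; exact Finset.sum_sdiff ht1
  have htot : a1 + a2 + a3 = T := by
    rw [add_assoc, hsplit, ha1, hT]
    exact Finset.add_sum_erase s r hi0
  have h2a1 : 2 * a1 ≤ T := h2 i0 hi0
  have h2a2 : a2 ≤ T / 2 := hs1
  have h2a3 : a3 ≤ T / 2 := by
    rcases hcase with rfl | hge
    · have : a3 = 0 := by rw [ha3, Finset.sdiff_self, Finset.sum_empty]
      linarith
    · linarith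
  have ha10 : 0 ≤ a1 := h0 i0 hi0
  have ha20 : 0 ≤ a2 := Finset.sum_nonneg fun i hi => h0 i (ht1s hi)
  have ha30 : 0 ≤ a3 := Finset.sum_nonneg fun i hi => h0 i (hts (Finset.mem_sdiff.mp hi).1)
  obtain ⟨w1, w2, w3, hw1, hw2, hw3, hwsum⟩ :=
    triangle_complex a1 a2 a3 ha10 ha20 ha30 (by linarith) (by linarith) (by linarith)
  classical
  refine ⟨fun i => if i = i0 then ((r i / a1 : ℝ) : ℂ) * w1
    else if i ∈ t1 then ((r i / a2 : ℝ) : ℂ) * w2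
    else ((r i / a3 : ℝ) : ℂ) * w3, ?_, ?_⟩
  · intro i hi
    by_cases hii : i = i0
    · subst hii
      simp only [if_pos rfl]
      exact abs_scale _ _ _ (h0 i hi) le_rfl hw1
    · by_cases hit : i ∈ t1
      · simp only [if_neg hii, if_pos hit]
        exact abs_scale _ _ _ (h0 i hi) (Finset.single_le_sum (fun j hj => h0 j (ht1s hj)) hit) hw2
      · simp only [if_neg hii, if_neg hit]
        have hmem : i ∈ t \ t1 := Finset.mem_sdiff.mpr ⟨Finset.mem_erase.mpr ⟨hii, hi⟩, hit⟩
        exact abs_scale _ _ _ (h0 i hi) (Finset.single_le_sum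
          (fun j hj => h0 j (hts (Finset.mem_sdiff.mp hj).1)) hmem) hw3
  · have hdecomp : ∀ f : ι → ℂ, ∑ i ∈ s, f i = f i0 + (∑ i ∈ t1, f i + ∑ i ∈ t \ t1, f i) := by
      intro f
      rw [add_comm (∑ i ∈ t1, f i), Finset.sum_sdiff ht1, ht]
      exact (Finset.add_sum_erase s f hi0).symm
    rw [hdecomp]
    have e1 : (if i0 = i0 then ((r i0 / a1 : ℝ) : ℂ) * w1
        else if i0 ∈ t1 then ((r i0 / a2 : ℝ) : ℂ) * w2 else ((r i0 / a3 : ℝ) : ℂ) * w3) = w1 := by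
      rw [if_pos rfl]
      have := scale_sum {i0} r w1 (by simpa using hw1)
      simpa using this
    have e2 : ∑ i ∈ t1, (if i = i0 then ((r i / a1 : ℝ) : ℂ) * w1
        else if i ∈ t1 then ((r i / a2 : ℝ) : ℂ) * w2 else ((r i / a3 : ℝ) : ℂ) * w3) = w2 := by
      rw [Finset.sum_congr rfl (fun i hi => ?_)]
      · exact scale_sum t1 r w2 hw2
      · have hii : i ≠ i0 := fun h => (Finset.mem_erase.mp (ht1 hi)).1 (h ▸ rfl)
        rw [if_neg hii, if_pos hi]
    have e3 : ∑ i ∈ t \ t1, (if i = i0 then ((r i / a1 : ℝ) : ℂ) * w1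
        else if i ∈ t1 then ((r i / a2 : ℝ) : ℂ) * w2 else ((r i / a3 : ℝ) : ℂ) * w3) = w3 := by
      rw [Finset.sum_congr rfl (fun i hi => ?_)]
      · exact scale_sum (t \ t1) r w3 hw3
      · obtain ⟨hit, hit1⟩ := Finset.mem_sdiff.mp hi
        have hii : i ≠ i0 := (Finset.mem_erase.mp hit).1
        rw [if_neg hii, if_neg hit1]
    rw [e1, e2, e3, ← add_assoc, hwsum]

theorem stmt_8 {n m : ℕ} (hnm : n ≤ m) (A : Matrix (Fin n) (Fin m) ℝ)
    (hA : ∀ i j, 0 ≤ A i j) :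
    phaselessRank A < n ↔
    ∃ lam : Fin n → ℝ, (∀ i, 0 ≤ lam i) ∧ (∑ i, lam i = 1) ∧
      ∀ l i, A i l * lam i ≤ ∑ k ∈ Finset.univ.erase i, A k l * lam k := by
  have hSne : {r | ∃ B : Matrix (Fin n) (Fin m) ℂ,
      (∀ i j, ‖B i j‖ = A i j) ∧ B.rank = r}.Nonempty :=
    ⟨_, (fun i j => (A i j : ℂ)), fun i j => by
      rw [Complex.norm_real, Real.norm_eq_abs, abs_of_nonneg (hA i j)], rfl⟩
  constructor
  · intro h
    obtain ⟨B, habs, hrank⟩ := Nat.sInf_mem hSne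
    obtain ⟨μ, hμne, hμ⟩ := (rank_lt_iff' B).mp (by rw [hrank]; exact h)
    set S := ∑ k, ‖μ k‖ with hS
    have hSpos : 0 < S := by
      obtain ⟨i, hi⟩ := Function.ne_iff.mp hμne
      have h1 : 0 < ‖μ i‖ := by
        simpa [norm_pos_iff] using hi
      exact lt_of_lt_of_le h1 (Finset.single_le_sum (f := fun k => ‖μ k‖)
        (fun k _ => norm_nonneg _) (Finset.mem_univ i))
    refine ⟨fun i => ‖μ i‖ / S,
      fun i => div_nonneg (norm_nonneg _) hSpos.le,
      by rw [← Finset.sum_div, ← hS, div_self hSpos.ne'], ?_⟩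
    intro l i
    have hcol : ∑ k, μ k * B k l = 0 := by
      have := congrFun hμ l
      simpa [Matrix.vecMul, dotProduct] using this
    have hsplit : μ i * B i l + ∑ k ∈ Finset.univ.erase i, μ k * B k l = 0 := by
      exact (Finset.add_sum_erase Finset.univ (fun k => μ k * B k l)
        (Finset.mem_univ i)).trans hcol
    have hle : ‖μ i * B i l‖ ≤
        ∑ k ∈ Finset.univ.erase i, ‖μ k * B k l‖ := by
      have heq : μ i * B i l = -∑ k ∈ Finset.univ.erase i, μ k * B k l := by
        linear_combination hsplit
      rw [heq, norm_neg]
      exact norm_sum_le _ _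
    have key : A i l * ‖μ i‖ ≤
        ∑ k ∈ Finset.univ.erase i, A k l * ‖μ k‖ := by
      calc A i l * ‖μ i‖ = ‖μ i * B i l‖ := by
            rw [norm_mul, habs]; ring
        _ ≤ ∑ k ∈ Finset.univ.erase i, ‖μ k * B k l‖ := hle
        _ = ∑ k ∈ Finset.univ.erase i, A k l * ‖μ k‖ := by
            refine Finset.sum_congr rfl fun k _ => ?_
            rw [norm_mul, habs]; ring
    have hgoal : A i l * (‖μ i‖ / S) = (A i l * ‖μ i‖) / S := by ring
    rw [hgoal]
    have : ∑ k ∈ Finset.univ.erase i, A k l * (‖μ k‖ / S)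
        = (∑ k ∈ Finset.univ.erase i, A k l * ‖μ k‖) / S := by
      rw [Finset.sum_div]
      exact Finset.sum_congr rfl fun k _ => by ring
    rw [this]
    gcongr
  · rintro ⟨lam, hlam0, hlamsum, hlam⟩
    have hpoly : ∀ l, ∃ z : Fin n → ℂ,
        (∀ i ∈ Finset.univ, ‖z i‖ = A i l * lam i) ∧ ∑ i, z i = 0 := by
      intro l
      refine polygon Finset.univ (fun i => A i l * lam i)
        (fun i _ => mul_nonneg (hA i l) (hlam0 i)) (fun i _ => ?_)
      have h1 := hlam l i
      rw [Finset.sum_erase_eq_sub (Finset.mem_univ i)] at h1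
      show 2 * (A i l * lam i) ≤ ∑ k, A k l * lam k
      linarith
    choose z hz1 hz2 using hpoly
    classical
    set B : Matrix (Fin n) (Fin m) ℂ := fun i l =>
      if lam i = 0 then (A i l : ℂ) else z l i / (lam i : ℂ) with hB
    have habs : ∀ i j, ‖B i j‖ = A i j := by
      intro i j
      by_cases hli : lam i = 0
      · simp only [hB, if_pos hli, Complex.norm_real, Real.norm_eq_abs, abs_of_nonneg (hA i j)]
      · simp only [hB, if_neg hli]
        rw [norm_div, hz1 j i (Finset.mem_univ i), Complex.norm_real, Real.norm_eq_abs,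
          abs_of_nonneg (hlam0 i), mul_div_assoc, div_self hli, mul_one]
    have hrank : B.rank < n := by
      refine (rank_lt_iff' B).mpr ⟨fun i => (lam i : ℂ), ?_, ?_⟩
      · intro hzero
        have : ∀ i, lam i = 0 := by
          intro i
          simpa [Complex.ofReal_eq_zero] using congrFun hzero i
        rw [Finset.sum_congr rfl fun i _ => this i, Finset.sum_const_zero] at hlamsum
        norm_num at hlamsum
      · funext l
        have : ∀ i, (lam i : ℂ) * B i l = z l i := by
          intro i
          by_cases hli : lam i = 0
          · have hz0 : z l i = 0 := by
              have := hz1 l i (Finset.mem_univ i)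
              rw [hli, mul_zero] at this
              exact norm_eq_zero.mp this
            simp [hB, hli, hz0]
          · simp only [hB, if_neg hli]
            rw [mul_div_cancel₀]
            exact_mod_cast hli
        have hsum : ∑ i, (lam i : ℂ) * B i l = 0 := by
          rw [Finset.sum_congr rfl fun i _ => this i]
          exact hz2 l
        simpa [Matrix.vecMul, dotProduct] using hsum
    calc phaselessRank A ≤ B.rank := Nat.sInf_le ⟨B, habs, rfl⟩
      _ < n := hrank
end

section
/- Let A be a nonnegative 3×3 real matrix with entries x_{ij}. Then rank_θ(A) ≤ 2 if and only if for every permutation σ of {1,2,3}, the inequality 2·x_{1σ(1)}x_{2σ(2)}x_{3σ(3)} ≤ Σ_{τ ∈ S₃} x_{1τ(1)}x_{2τ(2)}x_{3τ(3)} holds (i.e., each of the six monomials in the permanent of A is at most the sum of the other five). -/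
open Matrix

section Aux

open Complex

lemma tri_closure_nonneg' (x y z : ℝ) (hx : 0 ≤ x) (hy : 0 ≤ y) (hz : 0 ≤ z)
    (h1 : x ≤ y + z) (h2 : y ≤ x + z) (h3 : z ≤ x + y) :
    ∃ t1 t2 t3 : ℂ, ‖t1‖ = 1 ∧ ‖t2‖ = 1 ∧ ‖t3‖ = 1 ∧
      (x:ℂ) * t1 + (y:ℂ) * t2 + (z:ℂ) * t3 = 0 := by
  obtain ⟨c, hc⟩ : ∃ c : ℝ, c = (z^2 - x^2 - y^2)/(2*x*y) := ⟨_, rfl⟩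
  have hc2 : c^2 ≤ 1 := by
    rcases eq_or_ne (x*y) 0 with h | h
    · have hd : 2*x*y = 0 := by rw [mul_assoc, h, mul_zero]
      rw [hc, hd, div_zero]; norm_num
    · have hxy : 0 < x * y := lt_of_le_of_ne (mul_nonneg hx hy) (Ne.symm h)
      have hpos : (0:ℝ) < (2*x*y)^2 := by nlinarith
      rw [hc, div_pow, div_le_one hpos]
      nlinarith [mul_nonneg (mul_nonneg (sub_nonneg.2 h1) (by positivity : (0:ℝ) ≤ x+y+z))
        (mul_nonneg (sub_nonneg.2 h2) (sub_nonneg.2 h3))]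
  obtain ⟨s, hsdef⟩ : ∃ s : ℝ, s = Real.sqrt (1 - c^2) := ⟨_, rfl⟩
  have hs2 : s^2 = 1 - c^2 := by rw [hsdef]; exact Real.sq_sqrt (by linarith)
  obtain ⟨t2, ht2def⟩ : ∃ t2 : ℂ, t2 = (c:ℂ) + (s:ℂ) * I := ⟨_, rfl⟩
  have ht2 : ‖t2‖ = 1 := by
    rw [ht2def, Complex.norm_def, Complex.normSq_add_mul_I, hs2]; norm_num
  have hkey : Complex.normSq ((x:ℂ) + (y:ℂ) * t2) = z^2 := by
    have e : (x:ℂ) + (y:ℂ) * t2 = ((x + y*c : ℝ):ℂ) + ((y*s : ℝ):ℂ) * I := by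
      push_cast [ht2def]; ring
    rw [e, Complex.normSq_add_mul_I]
    have expand : (x + y*c)^2 + (y*s)^2 = x^2 + y^2 * (c^2 + s^2) + 2*(x*y)*c := by ring
    rw [expand, hs2]
    rcases eq_or_ne (x*y) 0 with h | h
    · rcases mul_eq_zero.1 h with h0 | h0
      · have hyz : y = z := le_antisymm (by linarith) (by linarith)
        rw [h0, hyz]; ring
      · have hxz : x = z := le_antisymm (by linarith) (by linarith)
        rw [h0, hxz]; ring
    · have hx0 : x ≠ 0 := fun h0 => h (by rw [h0, zero_mul])
      have hy0 : y ≠ 0 := fun h0 => h (by rw [h0, mul_zero])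
      have : 2*(x*y)*c = z^2 - x^2 - y^2 := by
        rw [hc]; field_simp
      rw [this]; ring
  rcases eq_or_ne z 0 with hz0 | hz0
  · refine ⟨1, t2, 1, by simp, ht2, by simp, ?_⟩
    have h0 : ((x:ℂ) + (y:ℂ) * t2) = 0 := by
      rw [← Complex.normSq_eq_zero, hkey, hz0]; ring
    rw [hz0]; push_cast; linear_combination h0
  · refine ⟨1, t2, -((x:ℂ) + (y:ℂ)*t2)/z, by simp, ht2, ?_, ?_⟩
    · rw [norm_div, norm_neg, Complex.norm_def, hkey, Complex.norm_real, Real.norm_eq_abs,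
        Real.sqrt_sq hz, _root_.abs_of_nonneg hz, div_self hz0]
    · have hzc : (z:ℂ) ≠ 0 := Complex.ofReal_ne_zero.2 hz0
      field_simp
      ring

lemma tri_closure' (x y z : ℝ) (h1 : |x| ≤ |y| + |z|) (h2 : |y| ≤ |x| + |z|)
    (h3 : |z| ≤ |x| + |y|) :
    ∃ t1 t2 t3 : ℂ, ‖t1‖ = 1 ∧ ‖t2‖ = 1 ∧ ‖t3‖ = 1 ∧
      (x:ℂ) * t1 + (y:ℂ) * t2 + (z:ℂ) * t3 = 0 := by
  obtain ⟨t1, t2, t3, a1, a2, a3, hsum⟩ :=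
    tri_closure_nonneg' |x| |y| |z| (abs_nonneg x) (abs_nonneg y) (abs_nonneg z) h1 h2 h3
  have key : ∀ (e : ℝ) (t : ℂ), ∃ t' : ℂ, ‖t'‖ = ‖t‖ ∧
      (e:ℂ) * t' = (|e| : ℝ) * t := by
    intro e t
    rcases le_or_gt 0 e with h | h
    · exact ⟨t, rfl, by rw [_root_.abs_of_nonneg h]⟩
    · exact ⟨-t, by rw [norm_neg], by rw [_root_.abs_of_neg h]; push_cast; ring⟩
  obtain ⟨t1', e1, f1⟩ := key x t1
  obtain ⟨t2', e2, f2⟩ := key y t2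
  obtain ⟨t3', e3, f3⟩ := key z t3
  exact ⟨t1', t2', t3', by rw [e1, a1], by rw [e2, a2], by rw [e3, a3],
    by rw [f1, f2, f3]; exact hsum⟩

def goodPair (a b : Fin 3 → ℝ) : Prop :=
  ∃ u v : Fin 3 → ℂ, (∀ i, ‖u i‖ = 1) ∧ (∀ i, ‖v i‖ = 1) ∧
    (∑ i, (a i : ℂ) * u i = ∑ i, (b i : ℂ) * v i) ∧ (∏ i, u i = ∏ i, v i)

lemma goodPair_symm {a b : Fin 3 → ℝ} (h : goodPair a b) : goodPair b a := by
  obtain ⟨u, v, hu, hv, hs, hp⟩ := h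
  exact ⟨v, u, hv, hu, hs.symm, hp.symm⟩

lemma goodPair_permL {a b : Fin 3 → ℝ} (π : Equiv.Perm (Fin 3))
    (h : goodPair (a ∘ π) b) : goodPair a b := by
  obtain ⟨u, v, hu, hv, hs, hp⟩ := h
  refine ⟨u ∘ π.symm, v, fun i => hu _, hv, ?_, ?_⟩
  · rw [← hs]
    rw [← Equiv.sum_comp π (fun i => (a i : ℂ) * (u ∘ π.symm) i)]
    simp [Function.comp]
  · rw [← hp]
    rw [← Equiv.prod_comp π (fun i => (u ∘ π.symm) i)]
    simp [Function.comp]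

lemma goodPair_permR {a b : Fin 3 → ℝ} (π : Equiv.Perm (Fin 3))
    (h : goodPair a (b ∘ π)) : goodPair a b :=
  goodPair_symm (goodPair_permL π (goodPair_symm h))

lemma goodPair_core (a b : Fin 3 → ℝ) (ha : ∀ i, 0 ≤ a i) (hb : ∀ i, 0 ≤ b i)
    (sa1 : a 0 ≤ a 1) (sa2 : a 1 ≤ a 2) (sb1 : b 0 ≤ b 1) (sb2 : b 1 ≤ b 2)
    (hmax : b 2 ≤ a 2) (hex : a 2 ≤ a 0 + a 1 + b 0 + b 1 + b 2) : goodPair a b := by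
  have ha0 := ha 0; have ha1 := ha 1; have ha2 := ha 2
  have hb0 := hb 0; have hb1 := hb 1; have hb2 := hb 2
  rcases le_total (a 1 + b 1 + b 0) (a 2 + a 0 + b 2) with hcase | hcase
  · obtain ⟨t1, t2, t3, u1, u2, u3, hsum⟩ :=
      tri_closure' (a 2 - b 0) (a 1 + b 1) (a 0 + b 2)
        (by rw [_root_.abs_of_nonneg (by linarith), _root_.abs_of_nonneg (by linarith),
              _root_.abs_of_nonneg (by linarith)]; linarith)
        (by rw [_root_.abs_of_nonneg (by linarith), _root_.abs_of_nonneg (by linarith),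
              _root_.abs_of_nonneg (by linarith)]; linarith)
        (by rw [_root_.abs_of_nonneg (by linarith), _root_.abs_of_nonneg (by linarith),
              _root_.abs_of_nonneg (by linarith)]; linarith)
    refine ⟨![t3, t2, t1], ![t1, -t2, -t3], ?_, ?_, ?_, ?_⟩
    · intro i; fin_cases i <;> simp [u1, u2, u3]
    · intro i; fin_cases i <;> simp [u1, u2, u3]
    · simp only [Fin.sum_univ_three, Matrix.cons_val_zero, Matrix.cons_val_one, Matrix.head_cons,
        Matrix.cons_val_two, Matrix.tail_cons]
      push_cast at hsum ⊢
      linear_combination hsum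
    · simp only [Fin.prod_univ_three, Matrix.cons_val_zero, Matrix.cons_val_one, Matrix.head_cons,
        Matrix.cons_val_two, Matrix.tail_cons]
      ring
  · obtain ⟨t1, t2, t3, u1, u2, u3, hsum⟩ :=
      tri_closure' (a 2 + b 1) (a 1 + b 0) (a 0 - b 2)
        (by rcases abs_cases (a 0 - b 2) with ⟨h, h'⟩ | ⟨h, h'⟩ <;>
              rw [_root_.abs_of_nonneg (by linarith : (0:ℝ) ≤ a 2 + b 1),
                _root_.abs_of_nonneg (by linarith : (0:ℝ) ≤ a 1 + b 0), h] <;> linarith)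
        (by rcases abs_cases (a 0 - b 2) with ⟨h, h'⟩ | ⟨h, h'⟩ <;>
              rw [_root_.abs_of_nonneg (by linarith : (0:ℝ) ≤ a 2 + b 1),
                _root_.abs_of_nonneg (by linarith : (0:ℝ) ≤ a 1 + b 0), h] <;> linarith)
        (by rcases abs_cases (a 0 - b 2) with ⟨h, h'⟩ | ⟨h, h'⟩ <;>
              rw [_root_.abs_of_nonneg (by linarith : (0:ℝ) ≤ a 2 + b 1),
                _root_.abs_of_nonneg (by linarith : (0:ℝ) ≤ a 1 + b 0), h] <;> linarith)
    refine ⟨![t3, t2, t1], ![-t2, -t1, t3], ?_, ?_, ?_, ?_⟩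
    · intro i; fin_cases i <;> simp [u1, u2, u3]
    · intro i; fin_cases i <;> simp [u1, u2, u3]
    · simp only [Fin.sum_univ_three, Matrix.cons_val_zero, Matrix.cons_val_one, Matrix.head_cons,
        Matrix.cons_val_two, Matrix.tail_cons]
      push_cast at hsum ⊢
      linear_combination hsum
    · simp only [Fin.prod_univ_three, Matrix.cons_val_zero, Matrix.cons_val_one, Matrix.head_cons,
        Matrix.cons_val_two, Matrix.tail_cons]
      ring

def perm3 (f : Fin 3 → Fin 3) (g : Fin 3 → Fin 3) (h1 : Function.LeftInverse g f)
    (h2 : Function.RightInverse g f) : Equiv.Perm (Fin 3) := ⟨f, g, h1, h2⟩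

lemma sort3 (f : Fin 3 → ℝ) :
    ∃ π : Equiv.Perm (Fin 3), f (π 0) ≤ f (π 1) ∧ f (π 1) ≤ f (π 2) := by
  rcases le_total (f 0) (f 1) with h01 | h01 <;>
  rcases le_total (f 1) (f 2) with h12 | h12 <;>
  rcases le_total (f 0) (f 2) with h02 | h02
  · exact ⟨perm3 ![0,1,2] ![0,1,2] (by decide) (by decide), by simpa using ⟨h01, h12⟩⟩
  · exact ⟨perm3 ![0,1,2] ![0,1,2] (by decide) (by decide), by simpa using ⟨h01, h12⟩⟩
  · exact ⟨perm3 ![0,2,1] ![0,2,1] (by decide) (by decide), by simpa using ⟨h02, h12⟩⟩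
  · exact ⟨perm3 ![2,0,1] ![1,2,0] (by decide) (by decide), by simpa using ⟨h02, h01⟩⟩
  · exact ⟨perm3 ![1,0,2] ![1,0,2] (by decide) (by decide), by simpa using ⟨h01, h02⟩⟩
  · exact ⟨perm3 ![1,2,0] ![2,0,1] (by decide) (by decide), by simpa using ⟨h12, h02⟩⟩
  · exact ⟨perm3 ![2,1,0] ![2,1,0] (by decide) (by decide), by simpa using ⟨h12, h01⟩⟩
  · exact ⟨perm3 ![2,1,0] ![2,1,0] (by decide) (by decide), by simpa using ⟨h12, h01⟩⟩

lemma goodPair_all (a b : Fin 3 → ℝ) (ha : ∀ i, 0 ≤ a i) (hb : ∀ i, 0 ≤ b i)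
    (hexa : ∀ i, 2 * a i ≤ (∑ i, a i) + (∑ i, b i))
    (hexb : ∀ i, 2 * b i ≤ (∑ i, a i) + (∑ i, b i)) : goodPair a b := by
  obtain ⟨π, hπ1, hπ2⟩ := sort3 a
  obtain ⟨ρ, hρ1, hρ2⟩ := sort3 b
  have hsa : a (π 0) + a (π 1) + a (π 2) = ∑ i, a i := by
    rw [← Equiv.sum_comp π a, Fin.sum_univ_three]
  have hsb : b (ρ 0) + b (ρ 1) + b (ρ 2) = ∑ i, b i := by
    rw [← Equiv.sum_comp ρ b, Fin.sum_univ_three]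
  rcases le_total (b (ρ 2)) (a (π 2)) with hm | hm
  · refine goodPair_permL π (goodPair_permR ρ (goodPair_core (a ∘ π) (b ∘ ρ)
      (fun i => ha _) (fun i => hb _) hπ1 hπ2 hρ1 hρ2 hm ?_))
    have := hexa (π 2); simp only [Function.comp_apply]; linarith
  · refine goodPair_symm (goodPair_permL ρ (goodPair_permR π (goodPair_core (b ∘ ρ) (a ∘ π)
      (fun i => hb _) (fun i => ha _) hρ1 hρ2 hπ1 hπ2 hm ?_)))
    have := hexb (ρ 2); simp only [Function.comp_apply]; linarith

def pc : Equiv.Perm (Fin 3) := perm3 ![1,2,0] ![2,0,1] (by decide) (by decide)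
def pc2 : Equiv.Perm (Fin 3) := perm3 ![2,0,1] ![1,2,0] (by decide) (by decide)
def s01 : Equiv.Perm (Fin 3) := perm3 ![1,0,2] ![1,0,2] (by decide) (by decide)
def s02 : Equiv.Perm (Fin 3) := perm3 ![2,1,0] ![2,1,0] (by decide) (by decide)
def s12 : Equiv.Perm (Fin 3) := perm3 ![0,2,1] ![0,2,1] (by decide) (by decide)

lemma univ_perm3 : (Finset.univ : Finset (Equiv.Perm (Fin 3))) =
    {1, pc, pc2, s01, s02, s12} := by decide

lemma sum_perm3 (f : Equiv.Perm (Fin 3) → ℝ) :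
    ∑ τ : Equiv.Perm (Fin 3), f τ = f 1 + f pc + f pc2 + f s01 + f s02 + f s12 := by
  rw [univ_perm3]
  rw [Finset.sum_insert (by decide), Finset.sum_insert (by decide),
    Finset.sum_insert (by decide), Finset.sum_insert (by decide),
    Finset.sum_insert (by decide), Finset.sum_singleton]
  ring

lemma perm3_cases (σ : Equiv.Perm (Fin 3)) :
    σ = 1 ∨ σ = pc ∨ σ = pc2 ∨ σ = s01 ∨ σ = s02 ∨ σ = s12 := by
  revert σ; decide

lemma key6 (z1 z2 z3 z4 z5 z6 : ℂ) (h : z1 + z2 + z3 = z4 + z5 + z6) :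
    2 * ‖z1‖ ≤ ‖z1‖ + ‖z2‖ + ‖z3‖ +
      ‖z4‖ + ‖z5‖ + ‖z6‖ := by
  have e : z1 = z4 + z5 + z6 + (-z2) + (-z3) := by linear_combination h
  have h1 : ‖z1‖ ≤ ‖z4‖ + ‖z5‖ + ‖z6‖ +
      ‖z2‖ + ‖z3‖ := by
    rw [e]
    calc ‖z4 + z5 + z6 + -z2 + -z3‖
        ≤ ‖z4 + z5 + z6 + -z2‖ + ‖-z3‖ := norm_add_le _ _
      _ ≤ ‖z4 + z5 + z6‖ + ‖-z2‖ + ‖-z3‖ := by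
          have := norm_add_le (z4 + z5 + z6) (-z2); linarith
      _ ≤ ‖z4‖ + ‖z5‖ + ‖z6‖ + ‖-z2‖ +
            ‖-z3‖ := by
          have h2 := norm_add_le (z4 + z5) z6
          have h3 := norm_add_le z4 z5; linarith
      _ = ‖z4‖ + ‖z5‖ + ‖z6‖ + ‖z2‖ +
            ‖z3‖ := by rw [norm_neg, norm_neg]
  linarith

lemma rank_le_two_of_det_zero (B : Matrix (Fin 3) (Fin 3) ℂ) (h : B.det = 0) :
    B.rank ≤ 2 := by
  obtain ⟨v, hv, hmul⟩ := (Matrix.exists_mulVec_eq_zero_iff).2 h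
  have hker : 0 < Module.finrank ℂ (LinearMap.ker B.mulVecLin) := by
    rw [Module.finrank_pos_iff_exists_ne_zero]
    exact ⟨⟨v, by simpa [Matrix.mulVecLin] using hmul⟩, by simpa using hv⟩
  have hrn := LinearMap.finrank_range_add_finrank_ker B.mulVecLin
  have hdom : Module.finrank ℂ (Fin 3 → ℂ) = 3 := by simp
  rw [hdom] at hrn
  have : B.rank = Module.finrank ℂ (LinearMap.range B.mulVecLin) := rfl
  omega

lemma rank_eq_three_of_det_ne_zero (B : Matrix (Fin 3) (Fin 3) ℂ) (h : B.det ≠ 0) :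
    B.rank = 3 := by
  have : IsUnit B := (Matrix.isUnit_iff_isUnit_det B).2 (isUnit_iff_ne_zero.2 h)
  simpa using B.rank_of_isUnit this

end Aux
open Complex ComplexConjugate

theorem stmt_12 (A : Matrix (Fin 3) (Fin 3) ℝ) (hA : ∀ i j, 0 ≤ A i j) :
    phaselessRank A ≤ 2 ↔
    ∀ σ : Equiv.Perm (Fin 3),
      2 * ∏ i, A i (σ i) ≤ ∑ τ : Equiv.Perm (Fin 3), ∏ i, A i (τ i) := by
  constructor
  · intro h σ
    unfold phaselessRank at h
    have hne : {r | ∃ B : Matrix (Fin 3) (Fin 3) ℂ,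
        (∀ i j, ‖B i j‖ = A i j) ∧ B.rank = r}.Nonempty :=
      ⟨(A.map (fun x => (x:ℂ))).rank, A.map (fun x => (x:ℂ)),
        fun i j => by simp [Matrix.map_apply, Complex.norm_real, _root_.abs_of_nonneg (hA i j)],
        rfl⟩
    obtain ⟨B, hB, hr⟩ := Nat.sInf_mem hne
    have hrank : B.rank ≤ 2 := by rw [hr]; exact h
    have hdet : B.det = 0 := by
      by_contra h0
      have h3 := rank_eq_three_of_det_ne_zero B h0
      rw [h3] at hrank; exact absurd hrank (by norm_num)
    rw [Matrix.det_fin_three] at hdet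
    have heven : B 0 0 * B 1 1 * B 2 2 + B 0 1 * B 1 2 * B 2 0 + B 0 2 * B 1 0 * B 2 1
        = B 0 0 * B 1 2 * B 2 1 + B 0 1 * B 1 0 * B 2 2 + B 0 2 * B 1 1 * B 2 0 := by
      linear_combination hdet
    have hm : ∀ i j k l m n : Fin 3,
        ‖B i j * B k l * B m n‖ = A i j * A k l * A m n := by
      intro i j k l m n; rw [norm_mul, norm_mul, hB, hB, hB]
    have hsum6 := sum_perm3 (fun τ => ∏ i, A i (τ i))
    rw [hsum6]
    simp only [Fin.prod_univ_three, Equiv.Perm.coe_one, id_eq, pc, pc2, s01, s02, s12, perm3,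
      Equiv.coe_fn_mk, Matrix.cons_val_zero, Matrix.cons_val_one, Matrix.head_cons,
      Matrix.cons_val_two, Matrix.tail_cons]
    rcases perm3_cases σ with hσ|hσ|hσ|hσ|hσ|hσ <;> subst hσ <;>
      simp only [Fin.prod_univ_three, Equiv.Perm.coe_one, id_eq, pc, pc2, s01, s02, s12, perm3,
        Equiv.coe_fn_mk, Matrix.cons_val_zero, Matrix.cons_val_one, Matrix.head_cons,
        Matrix.cons_val_two, Matrix.tail_cons]
    · have key := key6 (B 0 0 * B 1 1 * B 2 2) (B 0 1 * B 1 2 * B 2 0) (B 0 2 * B 1 0 * B 2 1)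
        (B 0 0 * B 1 2 * B 2 1) (B 0 1 * B 1 0 * B 2 2) (B 0 2 * B 1 1 * B 2 0)
        (by linear_combination heven)
      simp only [hm] at key; linarith
    · have key := key6 (B 0 1 * B 1 2 * B 2 0) (B 0 2 * B 1 0 * B 2 1) (B 0 0 * B 1 1 * B 2 2)
        (B 0 0 * B 1 2 * B 2 1) (B 0 1 * B 1 0 * B 2 2) (B 0 2 * B 1 1 * B 2 0)
        (by linear_combination heven)
      simp only [hm] at key; linarith
    · have key := key6 (B 0 2 * B 1 0 * B 2 1) (B 0 0 * B 1 1 * B 2 2) (B 0 1 * B 1 2 * B 2 0)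
        (B 0 0 * B 1 2 * B 2 1) (B 0 1 * B 1 0 * B 2 2) (B 0 2 * B 1 1 * B 2 0)
        (by linear_combination heven)
      simp only [hm] at key; linarith
    · have key := key6 (B 0 1 * B 1 0 * B 2 2) (B 0 0 * B 1 2 * B 2 1) (B 0 2 * B 1 1 * B 2 0)
        (B 0 0 * B 1 1 * B 2 2) (B 0 1 * B 1 2 * B 2 0) (B 0 2 * B 1 0 * B 2 1)
        (by linear_combination -heven)
      simp only [hm] at key; linarith
    · have key := key6 (B 0 2 * B 1 1 * B 2 0) (B 0 0 * B 1 2 * B 2 1) (B 0 1 * B 1 0 * B 2 2)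
        (B 0 0 * B 1 1 * B 2 2) (B 0 1 * B 1 2 * B 2 0) (B 0 2 * B 1 0 * B 2 1)
        (by linear_combination -heven)
      simp only [hm] at key; linarith
    · have key := key6 (B 0 0 * B 1 2 * B 2 1) (B 0 1 * B 1 0 * B 2 2) (B 0 2 * B 1 1 * B 2 0)
        (B 0 0 * B 1 1 * B 2 2) (B 0 1 * B 1 2 * B 2 0) (B 0 2 * B 1 0 * B 2 1)
        (by linear_combination -heven)
      simp only [hm] at key; linarith
  · intro hper
    unfold phaselessRank
    have hsum6 := sum_perm3 (fun τ => ∏ i, A i (τ i))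
    have hS : ∑ τ : Equiv.Perm (Fin 3), ∏ i, A i (τ i) =
        A 0 0*A 1 1*A 2 2 + A 0 1*A 1 2*A 2 0 + A 0 2*A 1 0*A 2 1 +
        (A 0 1*A 1 0*A 2 2 + A 0 2*A 1 1*A 2 0 + A 0 0*A 1 2*A 2 1) := by
      rw [hsum6]
      simp only [Fin.prod_univ_three, Equiv.Perm.coe_one, id_eq, pc, pc2, s01, s02, s12, perm3,
        Equiv.coe_fn_mk, Matrix.cons_val_zero, Matrix.cons_val_one, Matrix.head_cons,
        Matrix.cons_val_two, Matrix.tail_cons]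
      ring
    have hq1 := hper 1
    have hq2 := hper pc
    have hq3 := hper pc2
    have hq4 := hper s01
    have hq5 := hper s02
    have hq6 := hper s12
    rw [hS] at hq1 hq2 hq3 hq4 hq5 hq6
    simp only [Fin.prod_univ_three, Equiv.Perm.coe_one, id_eq, pc, pc2, s01, s02, s12, perm3,
      Equiv.coe_fn_mk, Matrix.cons_val_zero, Matrix.cons_val_one, Matrix.head_cons,
      Matrix.cons_val_two, Matrix.tail_cons] at hq1 hq2 hq3 hq4 hq5 hq6
    have hgp := goodPair_all
      ![A 0 0*A 1 1*A 2 2, A 0 1*A 1 2*A 2 0, A 0 2*A 1 0*A 2 1]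
      ![A 0 1*A 1 0*A 2 2, A 0 2*A 1 1*A 2 0, A 0 0*A 1 2*A 2 1]
      (by intro i; fin_cases i <;> simp <;>
        exact mul_nonneg (mul_nonneg (hA _ _) (hA _ _)) (hA _ _))
      (by intro i; fin_cases i <;> simp <;>
        exact mul_nonneg (mul_nonneg (hA _ _) (hA _ _)) (hA _ _))
      (by intro i; fin_cases i <;> simp [Fin.sum_univ_three] <;> linarith)
      (by intro i; fin_cases i <;> simp [Fin.sum_univ_three] <;> linarith)
    obtain ⟨u, v, hu, hv, hbal, hprod⟩ := hgp
    simp only [Fin.sum_univ_three, Fin.prod_univ_three, Matrix.cons_val_zero,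
      Matrix.cons_val_one, Matrix.head_cons, Matrix.cons_val_two, Matrix.tail_cons] at hbal hprod
    push_cast at hbal
    have hu0 : u 0 * conj (u 0) = 1 := by
      rw [Complex.mul_conj, Complex.normSq_eq_norm_sq, hu 0]; norm_num
    have habsW : ‖conj (u 0) * v 0 * v 1‖ = 1 := by
      rw [norm_mul, norm_mul, Complex.norm_conj, hu 0, hv 0, hv 1]; norm_num
    have hW : (conj (u 0) * v 0 * v 1) * conj (conj (u 0) * v 0 * v 1) = 1 := by
      rw [Complex.mul_conj, Complex.normSq_eq_norm_sq, habsW]; norm_num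
    obtain ⟨B, hBdef⟩ : ∃ B : Matrix (Fin 3) (Fin 3) ℂ, B = Matrix.of
      ![![(A 0 0:ℂ) * (conj (u 0) * v 0 * v 1), (A 0 1:ℂ) * (conj (u 0) * v 0 * v 1),
          (A 0 2:ℂ) * (conj (u 0) * v 0 * v 1)],
        ![(A 1 0:ℂ), (A 1 1:ℂ) * (v 1 * conj (conj (u 0) * v 0 * v 1)),
          (A 1 2:ℂ) * (u 1 * conj (conj (u 0) * v 0 * v 1))],
        ![(A 2 0:ℂ), (A 2 1:ℂ) * (u 2 * conj (conj (u 0) * v 0 * v 1)),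
          (A 2 2:ℂ) * (v 0 * conj (conj (u 0) * v 0 * v 1))]] := ⟨_, rfl⟩
    have habscW : ‖conj (conj (u 0) * v 0 * v 1)‖ = 1 := by
      rw [Complex.norm_conj]; exact habsW
    have hBabs : ∀ i j, ‖B i j‖ = A i j := by
      intro i j
      fin_cases i <;> fin_cases j <;>
        simp [hBdef, norm_mul, habsW, habscW, hu, hv, Complex.norm_real] <;>
        exact hA _ _
    have hdetB : B.det = 0 := by
      rw [hBdef, Matrix.det_fin_three]
      simp only [Matrix.of_apply, Matrix.cons_val', Matrix.cons_val_zero, Matrix.empty_val',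
        Matrix.cons_val_fin_one, Matrix.cons_val_one, Matrix.head_cons, Matrix.head_fin_const,
        Matrix.cons_val_two, Matrix.tail_cons]
      linear_combination hbal +
        ((A 0 0:ℂ)*(A 1 1:ℂ)*(A 2 2:ℂ)*(v 0 * v 1 * conj (conj (u 0) * v 0 * v 1)) -
         (A 0 0:ℂ)*(A 1 2:ℂ)*(A 2 1:ℂ)*(u 1 * u 2 * conj (conj (u 0) * v 0 * v 1)) +
         (A 0 1:ℂ)*(A 1 2:ℂ)*(A 2 0:ℂ)*(u 1) + (A 0 2:ℂ)*(A 1 0:ℂ)*(A 2 1:ℂ)*(u 2) -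
         (A 0 1:ℂ)*(A 1 0:ℂ)*(A 2 2:ℂ)*(v 0) - (A 0 2:ℂ)*(A 1 1:ℂ)*(A 2 0:ℂ)*(v 1)) * hW +
        (A 0 0:ℂ)*(A 1 1:ℂ)*(A 2 2:ℂ)*(u 0) * hW -
        (A 0 0:ℂ)*(A 1 1:ℂ)*(A 2 2:ℂ)*(conj (conj (u 0) * v 0 * v 1) * v 0 * v 1) * hu0 +
        (A 0 0:ℂ)*(A 1 2:ℂ)*(A 2 1:ℂ)*(u 1 * u 2 * conj (conj (u 0) * v 0 * v 1)) * hu0 -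
        (A 0 0:ℂ)*(A 1 2:ℂ)*(A 2 1:ℂ)*(v 2) * hW -
        (A 0 0:ℂ)*(A 1 2:ℂ)*(A 2 1:ℂ)*(conj (u 0) * conj (conj (u 0) * v 0 * v 1)) * hprod
    exact le_trans (Nat.sInf_le ⟨B, hBabs, rfl⟩) (rank_le_two_of_det_zero B hdetB)
end

section
/- Let x, y be nonnegative reals and let C be the 3×3 circulant matrix with rows (1,x,y), (y,1,x), (x,y,1). Then rank_θ(C) ≤ 2 if and only if x + y ≥ 1 and y ≤ x + 1 and x ≤ y + 1. -/
open Matrix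

lemma aux_rank_le_two_iff (B : Matrix (Fin 3) (Fin 3) ℂ) : B.rank ≤ 2 ↔ B.det = 0 := by
  constructor
  · intro h
    by_contra hd
    have hu : IsUnit B := (Matrix.isUnit_iff_isUnit_det B).2 (isUnit_iff_ne_zero.2 hd)
    have := Matrix.rank_of_isUnit B hu
    simp [Fintype.card_fin] at this
    omega
  · intro hd
    obtain ⟨v, hv, hBv⟩ := (Matrix.exists_mulVec_eq_zero_iff).2 hd
    have hker : 0 < Module.finrank ℂ (LinearMap.ker B.mulVecLin) := by
      rw [Module.finrank_pos_iff]
      exact ⟨⟨⟨v, by simpa using hBv⟩, 0, by simpa using hv⟩⟩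
    have hrn := LinearMap.finrank_range_add_finrank_ker B.mulVecLin
    rw [Module.finrank_fintype_fun_eq_card] at hrn
    have : B.rank = Module.finrank ℂ (LinearMap.range B.mulVecLin) := rfl
    simp [Fintype.card_fin] at hrn
    omega

lemma aux_hex (a b c d e f : ℂ) (h : a + b + c + d + e + f = 0) :
    ‖a‖ ≤ ‖b‖ + ‖c‖ + ‖d‖ +
      ‖e‖ + ‖f‖ := by
  have ha : a = -(b + c + d + e + f) := by linear_combination h
  rw [ha, norm_neg]
  calc ‖b + c + d + e + f‖
      ≤ ‖b + c + d + e‖ + ‖f‖ := norm_add_le _ _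
    _ ≤ (‖b + c + d‖ + ‖e‖) + ‖f‖ := by
        gcongr; exact norm_add_le _ _
    _ ≤ ((‖b + c‖ + ‖d‖) + ‖e‖) + ‖f‖ := by
        gcongr; exact norm_add_le _ _
    _ ≤ (((‖b‖ + ‖c‖) + ‖d‖) + ‖e‖) + ‖f‖ := by
        gcongr; exact norm_add_le _ _
    _ = _ := by ring

lemma aux_forward (x y : ℝ) (hx : 0 ≤ x) (hy : 0 ≤ y) (B : Matrix (Fin 3) (Fin 3) ℂ)
    (hB : ∀ i j, ‖B i j‖ = !![1, x, y; y, 1, x; x, y, 1] i j)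
    (hdet : B.det = 0) :
    1 ≤ x + y ∧ y ≤ x + 1 ∧ x ≤ y + 1 := by
  have h00 := hB 0 0; have h01 := hB 0 1; have h02 := hB 0 2
  have h10 := hB 1 0; have h11 := hB 1 1; have h12 := hB 1 2
  have h20 := hB 2 0; have h21 := hB 2 1; have h22 := hB 2 2
  simp at h00 h01 h02 h10 h11 h12 h20 h21 h22
  rw [Matrix.det_fin_three] at hdet
  set t1 := B 0 0 * B 1 1 * B 2 2
  set t2 := B 0 0 * B 1 2 * B 2 1
  set t3 := B 0 1 * B 1 0 * B 2 2
  set t4 := B 0 1 * B 1 2 * B 2 0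
  set t5 := B 0 2 * B 1 0 * B 2 1
  set t6 := B 0 2 * B 1 1 * B 2 0
  have a1 : ‖t1‖ = 1 := by simp [t1, _root_.map_mul, h00, h11, h22]
  have a2 : ‖t2‖ = x * y := by simp [t2, _root_.map_mul, h00, h12, h21]
  have a3 : ‖t3‖ = x * y := by simp [t3, _root_.map_mul, h01, h10, h22]
  have a4 : ‖t4‖ = x ^ 3 := by simp [t4, _root_.map_mul, h01, h12, h20]; ring
  have a5 : ‖t5‖ = y ^ 3 := by simp [t5, _root_.map_mul, h02, h10, h21]; ring
  have a6 : ‖t6‖ = x * y := by simp [t6, _root_.map_mul, h02, h11, h20]; ring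
  have hsum : t1 + (-t2) + (-t3) + t4 + t5 + (-t6) = 0 := by linear_combination hdet
  have e1 := aux_hex t1 (-t2) (-t3) t4 t5 (-t6) (by linear_combination hsum)
  have e4 := aux_hex t4 t1 (-t2) (-t3) t5 (-t6) (by linear_combination hsum)
  have e5 := aux_hex t5 t1 (-t2) (-t3) t4 (-t6) (by linear_combination hsum)
  simp only [norm_neg, a1, a2, a3, a4, a5, a6] at e1 e4 e5
  refine ⟨?_, ?_, ?_⟩
  · nlinarith [sq_nonneg (x - y), sq_nonneg (x + y), mul_nonneg hx hy, sq_nonneg (x*y)]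
  · nlinarith [sq_nonneg (x - y), sq_nonneg (x + 1), mul_nonneg hx hy, sq_nonneg (x - 1)]
  · nlinarith [sq_nonneg (x - y), sq_nonneg (y + 1), mul_nonneg hx hy, sq_nonneg (y - 1)]

lemma aux_triangle (x y : ℝ) (hx : 0 ≤ x) (hy : 0 ≤ y)
    (h1 : 1 ≤ x + y) (h2 : y ≤ x + 1) (h3 : x ≤ y + 1) :
    ∃ u v : ℂ, ‖u‖ = x ∧ ‖v‖ = y ∧ 1 + u + v = 0 := by
  rcases eq_or_lt_of_le hx with hx0 | hx0
  · have hy1 : y = 1 := by linarith [hx0]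
    exact ⟨0, -1, by simp [← hx0], by simp [hy1], by ring⟩
  · set c : ℝ := (y^2 - 1 - x^2) / (2*x) with hc
    have h2x : (2*x) ≠ 0 := by positivity
    have hxc : 2 * x * c = y^2 - 1 - x^2 := by rw [hc]; field_simp
    have hc1 : c^2 ≤ 1 := by
      rw [div_pow, div_le_one (by positivity)]
      nlinarith [mul_nonneg (mul_nonneg (by linarith : (0:ℝ) ≤ x + 1 - y)
        (by linarith : (0:ℝ) ≤ x + 1 + y)) (mul_nonneg (by linarith : (0:ℝ) ≤ y + 1 - x)
        (by linarith : (0:ℝ) ≤ x + y - 1))]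
    set s : ℝ := Real.sqrt (1 - c^2) with hs
    have hs2 : s^2 = 1 - c^2 := Real.sq_sqrt (by linarith)
    refine ⟨⟨x*c, x*s⟩, ⟨-1 - x*c, -(x*s)⟩, ?_, ?_, ?_⟩
    · have : ‖(⟨x*c, x*s⟩ : ℂ)‖ = Real.sqrt (x^2) := by
        rw [Complex.norm_def, Complex.normSq_mk]
        congr 1; nlinarith
      rw [this, Real.sqrt_sq hx]
    · have : ‖(⟨-1 - x*c, -(x*s)⟩ : ℂ)‖ = Real.sqrt (y^2) := by
        rw [Complex.norm_def, Complex.normSq_mk]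
        congr 1; nlinarith
      rw [this, Real.sqrt_sq hy]
    · apply Complex.ext <;> simp

theorem stmt_13 (x y : ℝ) (hx : 0 ≤ x) (hy : 0 ≤ y) :
    phaselessRank !![1, x, y; y, 1, x; x, y, 1] ≤ 2 ↔
    1 ≤ x + y ∧ y ≤ x + 1 ∧ x ≤ y + 1 := by
  set S : Set ℕ := {r | ∃ B : Matrix (Fin 3) (Fin 3) ℂ,
    (∀ i j, ‖B i j‖ = !![1, x, y; y, 1, x; x, y, 1] i j) ∧ B.rank = r} with hS
  have hrank : phaselessRank !![1, x, y; y, 1, x; x, y, 1] = sInf S := rfl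
  constructor
  · intro h
    -- S is nonempty
    have hne : S.Nonempty := by
      refine ⟨(Matrix.of fun i j => ((!![1, x, y; y, 1, x; x, y, 1] : Matrix (Fin 3) (Fin 3) ℝ) i j : ℂ)).rank,
        _, fun i j => ?_, rfl⟩
      have : (0:ℝ) ≤ !![1, x, y; y, 1, x; x, y, 1] i j := by
        fin_cases i <;> fin_cases j <;> simp [hx, hy]
      simpa using abs_of_nonneg this
    obtain ⟨B, hB, hBr⟩ := Nat.sInf_mem hne
    rw [hrank] at h
    have hB2 : B.rank ≤ 2 := by omega
    exact aux_forward x y hx hy B hB ((aux_rank_le_two_iff B).1 hB2)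
  · rintro ⟨h1, h2, h3⟩
    obtain ⟨u, v, hu, hv, huv⟩ := aux_triangle x y hx hy h1 h2 h3
    set B : Matrix (Fin 3) (Fin 3) ℂ := !![1, u, v; v, 1, u; u, v, 1] with hBdef
    have hmod : ∀ i j, ‖B i j‖ = !![1, x, y; y, 1, x; x, y, 1] i j := by
      intro i j
      fin_cases i <;> fin_cases j <;> simp [hBdef, hu, hv]
    have hdet : B.det = 0 := by
      rw [hBdef, Matrix.det_fin_three]
      norm_num
      simp only [Matrix.cons_val]
      linear_combination (1 + u^2 + v^2 - u - v - u*v) * huv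
    have hle : B.rank ≤ 2 := (aux_rank_le_two_iff B).2 hdet
    rw [hrank]
    exact le_trans (Nat.sInf_le ⟨B, hmod, rfl⟩) hle
end

section
/- Let A = mI_n + J_n where m is an integer with 1 ≤ m < n−2, I_n is the n×n identity and J_n the all-ones matrix. Then rank_θ(A) ≥ m + 2. -/
open Matrix

open Finset in
lemma align_of_abs_sum_eq {ι : Type*} (s : Finset ι) (z : ι → ℂ)
    (h : ‖∑ i ∈ s, z i‖ = ∑ i ∈ s, ‖z i‖) :
    ∀ i ∈ s, (‖∑ k ∈ s, z k‖ : ℂ) * z i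
      = (‖z i‖ : ℂ) * ∑ k ∈ s, z k := by
  set w := ∑ k ∈ s, z k with hw
  have hle : ∀ j ∈ s, ((starRingEnd ℂ) w * z j).re ≤ ‖w‖ * ‖z j‖ := by
    intro j _
    calc ((starRingEnd ℂ) w * z j).re ≤ ‖(starRingEnd ℂ) w * z j‖ :=
          Complex.re_le_norm _
      _ = ‖w‖ * ‖z j‖ := by
          rw [norm_mul, Complex.norm_conj]
  have hsum : ∑ j ∈ s, ((starRingEnd ℂ) w * z j).re
      = ∑ j ∈ s, ‖w‖ * ‖z j‖ := by
    have h1 : ∑ j ∈ s, ((starRingEnd ℂ) w * z j).re = ((starRingEnd ℂ) w * w).re := by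
      rw [← Complex.re_sum, ← Finset.mul_sum, ← hw]
    have h2 : ((starRingEnd ℂ) w * w).re = ‖w‖ * ‖w‖ := by
      rw [mul_comm, Complex.mul_conj, ← Complex.sq_norm]
      simp [pow_two]
    rw [h1, h2, ← Finset.mul_sum, ← h]
  have hkey := (Finset.sum_eq_sum_iff_of_le hle).mp hsum
  intro i hi
  have hk := hkey i hi
  have h0 : Complex.normSq ((‖w‖ : ℂ) * z i - (‖z i‖ : ℂ) * w) = 0 := by
    have hre : ((starRingEnd ℂ) w * z i).re = w.re * (z i).re + w.im * (z i).im := by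
      simp [Complex.mul_re, Complex.conj_re, Complex.conj_im]
    have haw : ‖w‖ ^ 2 = w.re ^ 2 + w.im ^ 2 := by
      rw [Complex.sq_norm, Complex.normSq_apply]; ring
    have haz : ‖z i‖ ^ 2 = (z i).re ^ 2 + (z i).im ^ 2 := by
      rw [Complex.sq_norm, Complex.normSq_apply]; ring
    have hk' : w.re * (z i).re + w.im * (z i).im = ‖w‖ * ‖z i‖ := by
      rw [← hre, hk]
    simp only [Complex.normSq_apply, Complex.sub_re, Complex.sub_im, Complex.mul_re,
      Complex.mul_im, Complex.ofReal_re, Complex.ofReal_im]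
    linear_combination (((z i).re^2 + (z i).im^2) - 2*‖z i‖^2) * haw
      - (w.re^2 + w.im^2) * haz - 2*(‖w‖ * ‖z i‖) * hk'
  have hz := Complex.normSq_eq_zero.mp h0
  linear_combination hz

open Finset in
lemma exists_dep {n m : ℕ} (B : Matrix (Fin n) (Fin n) ℂ) (hr : B.rank < m + 2)
    (T : Finset (Fin n)) (hT : T.card = m + 2) :
    ∃ c : Fin n → ℂ, c ≠ 0 ∧ (∀ i ∉ T, c i = 0) ∧ ∀ j, ∑ i, c i * B i j = 0 := by
  classical
  have hfd : FiniteDimensional ℂ (Submodule.span ℂ (Set.range B)) :=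
    FiniteDimensional.span_of_finite ℂ (Set.finite_range B)
  have hnli : ¬ LinearIndependent ℂ (fun i : T => B i) := by
    intro hli
    let v : T → Submodule.span ℂ (Set.range B) :=
      fun i => ⟨B i, Submodule.subset_span ⟨(i : Fin n), rfl⟩⟩
    have hv : LinearIndependent ℂ v :=
      LinearIndependent.of_comp (Submodule.span ℂ (Set.range B)).subtype hli
    have hcard := hv.fintype_card_le_finrank
    rw [show Set.range B = Set.range (Matrix.row B) from rfl, ← Matrix.rank_eq_finrank_span_row] at hcard
    rw [Fintype.card_coe, hT] at hcard
    omega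
  rw [Fintype.not_linearIndependent_iff] at hnli
  obtain ⟨g, hg, i0, hi0⟩ := hnli
  refine ⟨fun i => if h : i ∈ T then g ⟨i, h⟩ else 0, ?_, ?_, ?_⟩
  · intro hzero
    apply hi0
    have := congrFun hzero (i0 : Fin n)
    simpa [i0.2] using this
  · intro i hi; simp [hi]
  · intro j
    have h1 : ∑ i, (if h : i ∈ T then g ⟨i, h⟩ else 0) * B i j
        = ∑ i ∈ T, (if h : i ∈ T then g ⟨i, h⟩ else 0) * B i j := by
      refine (Finset.sum_subset (Finset.subset_univ T) ?_).symm
      intro x _ hx; simp [hx]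
    have h2 : ∑ i ∈ T, (if h : i ∈ T then g ⟨i, h⟩ else 0) * B i j
        = ∑ i : T, g i * B i j := by
      rw [← Finset.sum_attach T (fun i => (if h : i ∈ T then g ⟨i, h⟩ else 0) * B i j)]
      refine Finset.sum_congr rfl ?_
      intro x _; simp [x.2]
    have h3 := congrFun hg j
    simp only [Finset.sum_apply, Pi.smul_apply, smul_eq_mul, Pi.zero_apply] at h3
    rw [h1, h2]
    exact h3

open Finset in
lemma structure_lemma{n m : ℕ} (B : Matrix (Fin n) (Fin n) ℂ)
    (habs : ∀ i j, ‖B i j‖ = if i = j then (m : ℝ) + 1 else 1)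
    (T : Finset (Fin n)) (hT : T.card = m + 2)
    (c : Fin n → ℂ) (hc0 : c ≠ 0) (hsupp : ∀ i ∉ T, c i = 0)
    (hdep : ∀ j, ∑ i, c i * B i j = 0) :
    ∃ μ : ℝ, 0 < μ ∧ (∀ i ∈ T, ‖c i‖ = μ) ∧
      ∀ j ∈ T, ∀ i ∈ T, i ≠ j → ((m : ℂ) + 1) * (c i * B i j) = -(c j * B j j) := by
  classical
  have hsum : ∀ j, ∑ i ∈ T, c i * B i j = 0 := by
    intro j
    rw [← hdep j]
    refine (Finset.sum_subset (Finset.subset_univ T) ?_)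
    intro x _ hx; simp [hsupp x hx]
  set S : ℝ := ∑ k ∈ T, ‖c k‖ with hS
  have hSpos : 0 < S := by
    obtain ⟨i0, hi0⟩ := Function.ne_iff.mp hc0
    have hi0T : i0 ∈ T := by
      by_contra hnot; exact hi0 (hsupp i0 hnot)
    refine Finset.sum_pos' (fun k _ => norm_nonneg _) ⟨i0, hi0T, ?_⟩
    simpa using (norm_pos_iff.mpr hi0)
  have hdiag : ∀ j ∈ T, c j * B j j = -∑ i ∈ T.erase j, c i * B i j := by
    intro j hj
    have h0 := hsum j
    rw [← Finset.add_sum_erase T _ hj] at h0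
    linear_combination h0
  have habs_erase : ∀ j ∈ T, ∀ i ∈ T.erase j,
      ‖c i * B i j‖ = ‖c i‖ := by
    intro j hj i hi
    rw [norm_mul, habs i j, if_neg (Finset.mem_erase.mp hi).1, mul_one]
  have habs_diag : ∀ j, ‖c j * B j j‖ = ‖c j‖ * ((m : ℝ) + 1) := by
    intro j
    rw [norm_mul, habs j j, if_pos rfl]
  have hsum_erase : ∀ j ∈ T, ∑ i ∈ T.erase j, ‖c i‖
      = S - ‖c j‖ := by
    intro j hj
    rw [hS, Finset.sum_erase_eq_sub hj]
  have hstep : ∀ j ∈ T, ((m : ℝ) + 2) * ‖c j‖ ≤ S := by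
    intro j hj
    have h1 : ‖c j * B j j‖ ≤ S - ‖c j‖ := by
      rw [hdiag j hj, norm_neg]
      calc ‖∑ i ∈ T.erase j, c i * B i j‖
          ≤ ∑ i ∈ T.erase j, ‖c i * B i j‖ :=
            norm_sum_le _ _
        _ = ∑ i ∈ T.erase j, ‖c i‖ :=
            Finset.sum_congr rfl (habs_erase j hj)
        _ = S - ‖c j‖ := hsum_erase j hj
    rw [habs_diag j] at h1
    nlinarith [norm_nonneg (c j)]
  have hsumeq : ∑ j ∈ T, ((m : ℝ) + 2) * ‖c j‖ = ∑ j ∈ T, S := by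
    rw [← Finset.mul_sum, ← hS, Finset.sum_const, hT]

    ring
  have habsall : ∀ j ∈ T, ((m : ℝ) + 2) * ‖c j‖ = S :=
    (Finset.sum_eq_sum_iff_of_le hstep).mp hsumeq
  set μ : ℝ := S / ((m : ℝ) + 2) with hμ
  have hm2 : (0:ℝ) < (m : ℝ) + 2 := by positivity
  have hμpos : 0 < μ := by positivity
  have habsμ : ∀ i ∈ T, ‖c i‖ = μ := by
    intro i hi
    have := habsall i hi
    rw [hμ]
    field_simp
    linarith
  refine ⟨μ, hμpos, habsμ, ?_⟩
  intro j hj i hi hij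
  -- triangle equality on the erased sum
  have htri : ‖∑ i ∈ T.erase j, c i * B i j‖
      = ∑ i ∈ T.erase j, ‖c i * B i j‖ := by
    have h1 : ‖∑ i ∈ T.erase j, c i * B i j‖ = μ * ((m : ℝ) + 1) := by
      have : (∑ i ∈ T.erase j, c i * B i j) = -(c j * B j j) := by
        rw [hdiag j hj]; ring
      rw [this, norm_neg, habs_diag j, habsμ j hj]
    have h2 : ∑ i ∈ T.erase j, ‖c i * B i j‖ = μ * ((m : ℝ) + 1) := by
      rw [Finset.sum_congr rfl (habs_erase j hj), hsum_erase j hj, habsμ j hj]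
      have hcount : S = ((m : ℝ) + 2) * μ := by
        rw [hμ]; field_simp
      rw [hcount]; ring
    rw [h1, h2]
  have hal := align_of_abs_sum_eq (T.erase j) (fun i => c i * B i j) htri i
    (Finset.mem_erase.mpr ⟨hij, hi⟩)
  have hw : (∑ k ∈ T.erase j, c k * B k j) = -(c j * B j j) := by
    rw [hdiag j hj]; ring
  rw [hw] at hal
  have habsw : ‖-(c j * B j j)‖ = μ * ((m : ℝ) + 1) := by
    rw [norm_neg, habs_diag j, habsμ j hj]
  rw [habsw, habs_erase j hj i (Finset.mem_erase.mpr ⟨hij, hi⟩), habsμ i hi] at hal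
  -- hal : ↑(μ * (m+1)) * (c i * B i j) = ↑μ * -(c j * B j j)
  have hμC : (μ : ℂ) ≠ 0 := by
    exact_mod_cast ne_of_gt hμpos
  apply mul_left_cancel₀ hμC
  push_cast at hal ⊢
  linear_combination hal

open Finset in
lemma rank_lower_bound {n m : ℕ} (hm : 1 ≤ m) (hn : m + 2 < n)
    (B : Matrix (Fin n) (Fin n) ℂ)
    (habs : ∀ i j, ‖B i j‖ = if i = j then (m : ℝ) + 1 else 1) :
    m + 2 ≤ B.rank := by
  classical
  by_contra hlt
  push_neg at hlt
  -- index bookkeeping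
  have hmn : m + 1 ≤ n := by omega
  set W : Finset (Fin n) := Finset.univ.map ⟨Fin.castLE hmn, Fin.castLE_injective hmn⟩
    with hWdef
  have hWmem : ∀ i : Fin n, i ∈ W ↔ (i : ℕ) < m + 1 := by
    intro i
    rw [hWdef, Finset.mem_map]
    constructor
    · rintro ⟨a, -, rfl⟩; exact a.2
    · intro hi; exact ⟨⟨(i : ℕ), hi⟩, Finset.mem_univ _, by ext; rfl⟩
  have hWcard : W.card = m + 1 := by
    rw [hWdef, Finset.card_map, Finset.card_univ, Fintype.card_fin]
  set p : Fin n := ⟨m + 1, by omega⟩ with hpdef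
  set q : Fin n := ⟨m + 2, hn⟩ with hqdef
  have hpW : p ∉ W := by rw [hWmem]; simp [hpdef]
  have hqW : q ∉ W := by rw [hWmem]; simp [hqdef]
  have hpq : p ≠ q := by
    rw [hpdef, hqdef]; intro h; exact absurd (congrArg Fin.val h) (by simp)
  set T : Finset (Fin n) := insert p W with hTdef
  set T' : Finset (Fin n) := insert q W with hT'def
  have hTcard : T.card = m + 2 := by rw [hTdef, Finset.card_insert_of_notMem hpW, hWcard]
  have hT'card : T'.card = m + 2 := by rw [hT'def, Finset.card_insert_of_notMem hqW, hWcard]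
  obtain ⟨c, hc0, hcsupp, hcdep⟩ := exists_dep B hlt T hTcard
  obtain ⟨c', hc'0, hc'supp, hc'dep⟩ := exists_dep B hlt T' hT'card
  obtain ⟨μ, hμpos, hμ, hstr⟩ := structure_lemma B habs T hTcard c hc0 hcsupp hcdep
  obtain ⟨μ', hμ'pos, hμ', hstr'⟩ := structure_lemma B habs T' hT'card c' hc'0 hc'supp hc'dep
  -- a fixed element of W
  set a : Fin n := ⟨0, by omega⟩ with hadef
  have haW : a ∈ W := by rw [hWmem]; simp [hadef]
  have haT : a ∈ T := Finset.mem_insert_of_mem haW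
  have haT' : a ∈ T' := Finset.mem_insert_of_mem haW
  have hpT : p ∈ T := Finset.mem_insert_self _ _
  have hqT' : q ∈ T' := Finset.mem_insert_self _ _
  -- the key compatibility relation on W
  have hkey : ∀ i ∈ W, c' i * (c a * B a a) = c i * (c' a * B a a) := by
    intro i hi
    by_cases hia : i = a
    · subst hia; ring
    · have h1 := hstr a haT i (Finset.mem_insert_of_mem hi) hia
      have h2 := hstr' a haT' i (Finset.mem_insert_of_mem hi) hia
      have h3 : c' i * (((m : ℂ) + 1) * (c i * B i a))
          = c i * (((m : ℂ) + 1) * (c' i * B i a)) := by ring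
      rw [h1, h2] at h3
      linear_combination -h3
  -- the dependence of c evaluated on column q, restricted to T
  have hqe : c p * B p q + ∑ i ∈ W, c i * B i q = 0 := by
    have h0 : ∑ i ∈ T, c i * B i q = 0 := by
      rw [← hcdep q]
      refine Finset.sum_subset (Finset.subset_univ T) ?_
      intro x _ hx; simp [hcsupp x hx]
    rwa [hTdef, Finset.sum_insert hpW] at h0
  -- each W-term, suitably scaled, is a constant
  have hterm : ∀ i ∈ W, (((m : ℂ) + 1) * (c' a * B a a)) * (c i * B i q)
      = (c a * B a a) * (-(c' q * B q q)) := by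
    intro i hi
    have hiq : i ≠ q := by
      intro h; rw [h] at hi; exact hqW hi
    have hs := hstr' q hqT' i (Finset.mem_insert_of_mem hi) hiq
    have hk := hkey i hi
    linear_combination (-(((m : ℂ) + 1) * B i q)) * hk + (c a * B a a) * hs
  -- assemble the final scalar identity
  have hfinal : ((m : ℂ) + 1) * ((c a * B a a) * (-(c' q * B q q)))
      = -((((m : ℂ) + 1) * (c' a * B a a)) * (c p * B p q)) := by
    have h0 : ∑ i ∈ W, (((m : ℂ) + 1) * (c' a * B a a)) * (c i * B i q)
        = (W.card : ℂ) * ((c a * B a a) * (-(c' q * B q q))) := by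
      rw [Finset.sum_congr rfl hterm, Finset.sum_const, nsmul_eq_mul]
    have h1 : (((m : ℂ) + 1) * (c' a * B a a)) * (c p * B p q)
        + ∑ i ∈ W, (((m : ℂ) + 1) * (c' a * B a a)) * (c i * B i q) = 0 := by
      rw [← Finset.mul_sum, ← mul_add, hqe, mul_zero]
    rw [h0, hWcard] at h1
    push_cast at h1 ⊢
    linear_combination h1
  -- take absolute values
  have haaB : ‖B a a‖ = (m : ℝ) + 1 := by rw [habs a a, if_pos rfl]
  have hqqB : ‖B q q‖ = (m : ℝ) + 1 := by rw [habs q q, if_pos rfl]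
  have hpqB : ‖B p q‖ = 1 := by rw [habs p q, if_neg hpq]
  have habs_m1 : ‖(m : ℂ) + 1‖ = (m : ℝ) + 1 := by
    have h : ((m : ℂ) + 1) = (((m : ℝ) + 1 : ℝ) : ℂ) := by push_cast; ring
    rw [h, Complex.norm_of_nonneg (by positivity)]
  have habsfinal := congrArg norm hfinal
  simp only [norm_mul, norm_neg] at habsfinal
  rw [hμ a haT, hμ' a haT', hμ' q hqT', hμ p hpT, haaB, hqqB, hpqB, habs_m1] at habsfinal
  -- contradiction
  have hm1 : (1 : ℝ) ≤ (m : ℝ) := by exact_mod_cast hm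
  have hne : ((m : ℝ) + 1) ^ 2 ≠ 0 := by positivity
  have h2 : ((m : ℝ) + 1) ^ 2 * (((m : ℝ) + 1) * (μ * μ'))
      = ((m : ℝ) + 1) ^ 2 * (μ * μ') := by linear_combination habsfinal
  have h3 := mul_left_cancel₀ hne h2
  nlinarith [mul_pos hμpos hμ'pos, h3, hm1]

theorem stmt_15 {n m : ℕ} (hm : 1 ≤ m) (hn : m + 2 < n) :
    m + 2 ≤ phaselessRank
      (Matrix.of fun i j : Fin n => if i = j then (m : ℝ) + 1 else 1) := by
  classical
  have hSne : {r | ∃ B : Matrix (Fin n) (Fin n) ℂ,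
      (∀ i j, ‖B i j‖
        = (Matrix.of fun i j : Fin n => if i = j then (m : ℝ) + 1 else 1) i j) ∧
      B.rank = r}.Nonempty := by
    refine ⟨_, Matrix.of (fun i j => (((if i = j then (m : ℝ) + 1 else 1) : ℝ) : ℂ)), ?_, rfl⟩
    intro i j
    simp only [Matrix.of_apply, Complex.norm_real, Real.norm_eq_abs]
    rw [abs_of_nonneg]
    split <;> positivity
  unfold phaselessRank
  obtain ⟨B, hB, hrank⟩ := Nat.sInf_mem hSne
  rw [← hrank]
  have habs : ∀ i j, ‖B i j‖ = if i = j then (m : ℝ) + 1 else 1 := by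
    intro i j; simpa using hB i j
  exact rank_lower_bound hm hn B habs
end

section
/- Let A be a nonnegative real n×m matrix with n ≤ m, and suppose every k×k submatrix of A has phaseless rank strictly less than k, for some k ≤ n. Then rank_θ(A) ≤ n − ⌊(n−1)/(k−1)⌋. -/
open Matrix

/-- rank bound from independent left-kernel vectors -/
lemma rank_add_le_of_kernel {n m q : ℕ} (B : Matrix (Fin n) (Fin m) ℂ)
    (v : Fin q → (Fin n → ℂ)) (hv : LinearIndependent ℂ v)
    (hvB : ∀ s, v s ᵥ* B = 0) : B.rank + q ≤ n := by
  have hker : ∀ s, v s ∈ LinearMap.ker (Bᵀ.mulVecLin) := by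
    intro s
    simp [Matrix.mulVecLin, Matrix.mulVec_transpose, hvB s]
  have hspan : Submodule.span ℂ (Set.range v) ≤ LinearMap.ker (Bᵀ.mulVecLin) := by
    rw [Submodule.span_le]
    rintro x ⟨s, rfl⟩; exact hker s
  have h1 : q ≤ Module.finrank ℂ (LinearMap.ker (Bᵀ.mulVecLin)) := by
    have := finrank_span_eq_card hv
    calc q = Module.finrank ℂ (Submodule.span ℂ (Set.range v)) := by
              rw [this, Fintype.card_fin]
      _ ≤ _ := Submodule.finrank_mono hspan
  have h2 : Bᵀ.rank + Module.finrank ℂ (LinearMap.ker (Bᵀ.mulVecLin)) = n := by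
    have := LinearMap.finrank_range_add_finrank_ker (Bᵀ.mulVecLin)
    simpa [Matrix.rank] using this
  have h3 : B.rank = Bᵀ.rank := (Matrix.rank_transpose B).symm
  omega

/-- kernel vector from low rank -/
lemma exists_kernel_of_rank_lt {k m : ℕ} (B : Matrix (Fin k) (Fin m) ℂ)
    (h : B.rank < k) : ∃ c : Fin k → ℂ, c ≠ 0 ∧ ∀ j, ∑ i, c i * B i j = 0 := by
  have h2 : Bᵀ.rank + Module.finrank ℂ (LinearMap.ker (Bᵀ.mulVecLin)) = k := by
    have := LinearMap.finrank_range_add_finrank_ker (Bᵀ.mulVecLin)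
    simpa [Matrix.rank] using this
  have h3 : Bᵀ.rank = B.rank := Matrix.rank_transpose B
  have hker : LinearMap.ker (Bᵀ.mulVecLin) ≠ ⊥ := by
    intro hbot
    rw [hbot] at h2
    simp at h2; omega
  obtain ⟨c, hc, hc0⟩ := Submodule.exists_mem_ne_zero_of_ne_bot hker
  refine ⟨c, hc0, fun j => ?_⟩
  have := LinearMap.mem_ker.mp hc
  have hj := congrFun (show Bᵀ *ᵥ c = 0 from this) j
  simpa [Matrix.mulVec, dotProduct, mul_comm] using hj

/-- zero sum implies polygon inequality -/
lemma polygon_ineq_of_sum_eq_zero {k : ℕ} (z : Fin k → ℂ) (hz : ∑ i, z i = 0) (i : Fin k) :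
    2 * ‖z i‖ ≤ ∑ i', ‖z i'‖ := by
  have h1 : z i = -∑ i' ∈ Finset.univ.erase i, z i' := by
    have := Finset.add_sum_erase Finset.univ z (Finset.mem_univ i)
    rw [hz] at this
    exact eq_neg_of_add_eq_zero_left this
  have h2 : ‖z i‖ ≤ ∑ i' ∈ Finset.univ.erase i, ‖z i'‖ := by
    rw [h1, norm_neg]
    exact (norm_sum_le _ _)
  have h3 : ∑ i', ‖z i'‖ =
      ‖z i‖ + ∑ i' ∈ Finset.univ.erase i, ‖z i'‖ := by
    rw [← Finset.add_sum_erase Finset.univ _ (Finset.mem_univ i)]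
  rw [h3]; linarith



lemma polygon_perm {k : ℕ} (a : Fin k → ℝ) (σ : Equiv.Perm (Fin k))
    (h : ∃ z : Fin k → ℂ, (∀ i, ‖z i‖ = a (σ i)) ∧ ∑ i, z i = 0) :
    ∃ z : Fin k → ℂ, (∀ i, ‖z i‖ = a i) ∧ ∑ i, z i = 0 := by
  obtain ⟨z, h1, h2⟩ := h
  refine ⟨z ∘ σ.symm, fun i => by simpa using h1 (σ.symm i), ?_⟩
  simpa [h2] using (Equiv.sum_comp σ.symm z)

lemma polygon_exists : ∀ k : ℕ, ∀ a : Fin k → ℝ, (∀ i, 0 ≤ a i) →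
    (∀ i, 2 * a i ≤ ∑ i', a i') →
    ∃ z : Fin k → ℂ, (∀ i, ‖z i‖ = a i) ∧ ∑ i, z i = 0 := by
  intro k
  induction k using Nat.strong_induction_on with
  | _ k IH =>
  match k with
  | 0 => exact fun a _ _ => ⟨0, fun i => i.elim0, by simp⟩
  | 1 =>
    intro a h0 h2
    have h := h2 0
    rw [Fin.sum_univ_one] at h
    have : a 0 = 0 := by linarith [h0 0]
    refine ⟨0, fun i => ?_, by simp⟩
    fin_cases i <;> simp [this]
  | 2 =>
    intro a h0 h2
    have ha := h2 0; have hb := h2 1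
    rw [Fin.sum_univ_two] at ha hb
    have heq : a 0 = a 1 := by linarith
    refine ⟨![(a 0 : ℂ), -(a 0 : ℂ)], fun i => ?_, by simp [Fin.sum_univ_two]⟩
    fin_cases i <;>
      simp [Complex.norm_real, Real.norm_eq_abs, abs_of_nonneg (h0 0), ← heq]
  | 3 =>
    intro a h0 h2
    have ha := h2 0; have hb := h2 1; have hc := h2 2
    rw [Fin.sum_univ_three] at ha hb hc
    set f : ℝ → ℝ := fun θ => ‖(a 0 : ℂ) + (a 1 : ℂ) * Complex.exp (θ * Complex.I)‖
      with hf
    have hcont : ContinuousOn f (Set.Icc 0 Real.pi) := by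
      apply Continuous.continuousOn
      exact continuous_norm.comp (by continuity)
    have hf0 : f 0 = a 0 + a 1 := by
      simp only [hf]
      norm_num
      rw [← Complex.ofReal_add, Complex.norm_real, Real.norm_eq_abs, abs_of_nonneg (by linarith [h0 0, h0 1])]
    have hfpi : f Real.pi = |a 0 - a 1| := by
      simp only [hf, Complex.exp_pi_mul_I]
      rw [show (a 0 : ℂ) + (a 1 : ℂ) * (-1) = ((a 0 - a 1 : ℝ) : ℂ) by push_cast; ring,
        Complex.norm_real, Real.norm_eq_abs]
    have hmem : a 2 ∈ Set.Icc (f Real.pi) (f 0) := by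
      constructor
      · rw [hfpi, abs_le]; constructor <;> linarith
      · rw [hf0]; linarith
    obtain ⟨θ, _, hθ⟩ := intermediate_value_Icc' Real.pi_nonneg hcont hmem
    refine ⟨![(a 0 : ℂ), (a 1 : ℂ) * Complex.exp (θ * Complex.I),
      -((a 0 : ℂ) + (a 1 : ℂ) * Complex.exp (θ * Complex.I))], fun i => ?_,
      by simp [Fin.sum_univ_three]⟩
    fin_cases i
    · simp [Complex.norm_real, Real.norm_eq_abs, abs_of_nonneg (h0 0)]
    · simp [Complex.norm_exp, Complex.norm_real, Real.norm_eq_abs, abs_of_nonneg (h0 1)]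
    · show ‖-_‖ = a 2
      rw [norm_neg]
      exact hθ
  | (k+4) =>
    intro a h0 h2
    -- find two smallest entries
    obtain ⟨i₀, _, hi₀⟩ := Finset.exists_min_image Finset.univ a ⟨0, Finset.mem_univ 0⟩
    obtain ⟨j', hj'⟩ := exists_ne i₀
    obtain ⟨j₀, hj₀mem, hj₀⟩ := Finset.exists_min_image (Finset.univ.erase i₀) a
      ⟨j', Finset.mem_erase.mpr ⟨hj', Finset.mem_univ _⟩⟩
    have hj₀ne : j₀ ≠ i₀ := (Finset.mem_erase.mp hj₀mem).1
    -- build permutation sending 0 to i₀ and 1 to j₀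
    set τ := Equiv.swap (0 : Fin (k+4)) i₀ with hτ
    set j₁ := τ.symm j₀ with hj₁def
    have h01 : (0 : Fin (k+4)) ≠ 1 := by simp [Fin.ext_iff]
    have hj₁0 : j₁ ≠ 0 := by
      intro h
      apply hj₀ne
      have : τ j₁ = j₀ := Equiv.apply_symm_apply τ j₀
      rw [h] at this
      simp [hτ] at this
      exact this.symm
    set σ := (Equiv.swap (1 : Fin (k+4)) j₁).trans τ with hσ
    have hσ0 : σ 0 = i₀ := by
      simp [hσ, Equiv.trans_apply, Equiv.swap_apply_of_ne_of_ne h01 (Ne.symm hj₁0), hτ]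
    have hσ1 : σ 1 = j₀ := by
      simp [hσ, Equiv.trans_apply, Equiv.swap_apply_left, hj₁def]
    apply polygon_perm a σ
    set b : Fin (k+4) → ℝ := fun i => a (σ i) with hbdef
    have hb0 : ∀ i, b 0 ≤ b i := fun i => by
      rw [hbdef]; simp only [hσ0]; exact hi₀ _ (Finset.mem_univ _)
    have hb1 : ∀ i : Fin (k+4), i ≠ 0 → b 1 ≤ b i := by
      intro i hi
      rw [hbdef]; simp only [hσ1]
      apply hj₀
      refine Finset.mem_erase.mpr ⟨?_, Finset.mem_univ _⟩
      rw [← hσ0]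
      exact fun h => hi (σ.injective h)
    have hbnn : ∀ i, 0 ≤ b i := fun i => h0 _
    have hbsum : ∑ i, b i = ∑ i, a i := Equiv.sum_comp σ a
    have hb2 : ∀ i, 2 * b i ≤ ∑ i', b i' := fun i => by rw [hbsum]; exact h2 _
    -- the merged vector
    set c : Fin (k+3) → ℝ := Fin.cons (b 0 + b 1) (fun i : Fin (k+2) => b i.succ.succ)
      with hcdef
    have hcsum : ∑ i, c i = ∑ i, b i := by
      rw [Fin.sum_univ_succ c, Fin.sum_univ_succ b, Fin.sum_univ_succ (fun i : Fin (k+3) => b i.succ)]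
      simp [hcdef, Fin.succ_zero_eq_one]
      ring
    have hcnn : ∀ i, 0 ≤ c i := by
      intro i
      induction i using Fin.cases with
      | zero => simpa [hcdef] using add_nonneg (hbnn 0) (hbnn 1)
      | succ j => simpa [hcdef] using hbnn j.succ.succ
    have e2 : Fin (k+4) := ⟨2, by omega⟩
    have hc2 : ∀ i, 2 * c i ≤ ∑ i', c i' := by
      intro i
      rw [hcsum]
      induction i using Fin.cases with
      | zero =>
        simp only [hcdef, Fin.cons_zero]
        -- 2 * (b 0 + b 1) ≤ ∑ b
        have h2' : ({(⟨2, by omega⟩ : Fin (k+4)), ⟨3, by omega⟩} : Finset (Fin (k+4)))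
            ⊆ (Finset.univ.erase 1).erase 0 := by
          intro x hx
          simp only [Finset.mem_insert, Finset.mem_singleton] at hx
          rcases hx with rfl | rfl <;>
            simp [Finset.mem_erase, Fin.ext_iff]
        have hsub : ∑ x ∈ ({(⟨2, by omega⟩ : Fin (k+4)), ⟨3, by omega⟩} : Finset (Fin (k+4))), b x
            ≤ ∑ x ∈ (Finset.univ.erase 1).erase 0, b x :=
          Finset.sum_le_sum_of_subset_of_nonneg h2' (fun i _ _ => hbnn i)
        have hpair : ∑ x ∈ ({(⟨2, by omega⟩ : Fin (k+4)), ⟨3, by omega⟩} : Finset (Fin (k+4))), b x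
            = b ⟨2, by omega⟩ + b ⟨3, by omega⟩ := by
          rw [Finset.sum_pair (by simp [Fin.ext_iff])]
        have hrest : ∑ x ∈ (Finset.univ.erase 1).erase 0, b x = ∑ i', b i' - b 0 - b 1 := by
          have h1mem : (1 : Fin (k+4)) ∈ Finset.univ := Finset.mem_univ _
          have h0mem : (0 : Fin (k+4)) ∈ Finset.univ.erase 1 :=
            Finset.mem_erase.mpr ⟨h01, Finset.mem_univ _⟩
          have e1 := Finset.add_sum_erase Finset.univ b h1mem
          have e0 := Finset.add_sum_erase (Finset.univ.erase 1) b h0mem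
          linarith
        have hge0 : b 0 ≤ b ⟨2, by omega⟩ := hb0 _
        have hge1 : b 1 ≤ b ⟨3, by omega⟩ := hb1 _ (by simp [Fin.ext_iff])
        linarith
      | succ j =>
        simp only [hcdef, Fin.cons_succ]
        exact hb2 _
    obtain ⟨w, hw1, hw2⟩ := IH (k+3) (by omega) c hcnn hc2
    -- split w 0 into two pieces
    set s := b 0 + b 1 with hsdef
    set z0 : ℂ := ((b 0 / s : ℝ) : ℂ) * w 0 with hz0
    set z1 : ℂ := ((b 1 / s : ℝ) : ℂ) * w 0 with hz1
    have hw0abs : ‖w 0‖ = s := by simpa [hcdef] using hw1 0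
    have hkey : z0 + z1 = w 0 ∧ ‖z0‖ = b 0 ∧ ‖z1‖ = b 1 := by
      by_cases hs : s = 0
      · have hb00 : b 0 = 0 := le_antisymm (by rw [hsdef] at hs; linarith [hbnn 1]) (hbnn 0)
        have hb10 : b 1 = 0 := le_antisymm (by rw [hsdef] at hs; linarith [hbnn 0]) (hbnn 1)
        have hw00 : w 0 = 0 := by
          have := hw0abs; rw [hs] at this
          exact norm_eq_zero.mp this
        refine ⟨by rw [hz0, hz1, hw00]; ring, ?_, ?_⟩ <;>
          simp [hz0, hz1, hw00, hb00, hb10]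
      · have hspos : 0 < s := lt_of_le_of_ne (hsdef ▸ add_nonneg (hbnn 0) (hbnn 1)) (Ne.symm hs)
        refine ⟨?_, ?_, ?_⟩
        · rw [hz0, hz1]
          rw [show ((b 0 / s : ℝ) : ℂ) * w 0 + ((b 1 / s : ℝ) : ℂ) * w 0
            = (((b 0 + b 1) / s : ℝ) : ℂ) * w 0 by push_cast; ring]
          rw [← hsdef, div_self hs]
          simp
        · rw [hz0, norm_mul, hw0abs, Complex.norm_real, Real.norm_eq_abs,
            abs_of_nonneg (div_nonneg (hbnn 0) hspos.le), div_mul_cancel₀ _ hs]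
        · rw [hz1, norm_mul, hw0abs, Complex.norm_real, Real.norm_eq_abs,
            abs_of_nonneg (div_nonneg (hbnn 1) hspos.le), div_mul_cancel₀ _ hs]
    obtain ⟨hzsum, hz0abs, hz1abs⟩ := hkey
    refine ⟨Fin.cons z0 (Fin.cons z1 (fun i : Fin (k+2) => w i.succ)), ?_, ?_⟩
    · intro i
      induction i using Fin.cases with
      | zero => simpa using hz0abs
      | succ j =>
        induction j using Fin.cases with
        | zero => simpa [Fin.succ_zero_eq_one] using hz1abs
        | succ i =>
          simp only [Fin.cons_succ]
          simpa [hcdef] using hw1 i.succ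
    · rw [Fin.sum_univ_succ, Fin.sum_univ_succ]
      simp only [Fin.cons_succ, Fin.cons_zero]
      have : ∑ i : Fin (k+2), w i.succ = -(w 0) := by
        have := Fin.sum_univ_succ w
        rw [hw2] at this
        linear_combination -this
      rw [this]
      rw [← hzsum]
      ring

/-- phaselessRank set is nonempty -/
lemma phaselessRank_mem {n m : ℕ} (A : Matrix (Fin n) (Fin m) ℝ) (hA : ∀ i j, 0 ≤ A i j) :
    ∃ B : Matrix (Fin n) (Fin m) ℂ,
      (∀ i j, ‖B i j‖ = A i j) ∧ B.rank = phaselessRank A := by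
  have hne : {r | ∃ B : Matrix (Fin n) (Fin m) ℂ,
      (∀ i j, ‖B i j‖ = A i j) ∧ B.rank = r}.Nonempty := by
    refine ⟨Matrix.rank (fun i j => ((A i j : ℝ) : ℂ)), fun i j => ((A i j : ℝ) : ℂ), fun i j => ?_, rfl⟩
    rw [Complex.norm_real, Real.norm_eq_abs, abs_of_nonneg (hA i j)]
  exact Nat.sInf_mem hne

/-- extraction of common weights for a strip, via Helly -/
lemma exists_weights {n m K : ℕ} (hKm : K + 1 ≤ m)
    (A : Matrix (Fin n) (Fin m) ℝ) (hA : ∀ i j, 0 ≤ A i j)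
    (ρ : Fin (K+1) → Fin n)
    (hsub : ∀ f : Fin (K+1) → Fin m, Function.Injective f →
      phaselessRank (A.submatrix ρ f) < K + 1) :
    ∃ d : Fin (K+1) → ℝ, (∀ i, 0 ≤ d i) ∧ (∑ i, d i = 1) ∧
      ∀ j i, 2 * (d i * A (ρ i) j) ≤ ∑ i', d i' * A (ρ i') j := by
  classical
  set φ : (Fin K → ℝ) → (Fin (K+1) → ℝ) := fun y => Fin.snoc y (1 - ∑ i, y i) with hφ
  have hφaff : ∀ (y₁ y₂ : Fin K → ℝ) (t u : ℝ), t + u = 1 →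
      φ (t • y₁ + u • y₂) = fun i => t * φ y₁ i + u * φ y₂ i := by
    intro y₁ y₂ t u htu
    funext i
    induction i using Fin.lastCases with
    | last =>
      simp only [hφ, Fin.snoc_last]
      rw [Finset.sum_congr rfl (fun i _ => show (t • y₁ + u • y₂) i = t * y₁ i + u * y₂ i from rfl),
        Finset.sum_add_distrib, ← Finset.mul_sum, ← Finset.mul_sum]
      nlinarith [htu]
    | cast i =>
      simp only [hφ, Fin.snoc_castSucc]
      rfl
  set F : Fin m → Set (Fin K → ℝ) := fun j =>
    {y | (∀ i, 0 ≤ φ y i) ∧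
      ∀ i, 2 * (φ y i * A (ρ i) j) ≤ ∑ i', φ y i' * A (ρ i') j} with hF
  have hconv : ∀ j, Convex ℝ (F j) := by
    intro j y₁ hy₁ y₂ hy₂ t u ht hu htu
    have hc := hφaff y₁ y₂ t u htu
    constructor
    · intro i
      rw [hc]
      exact add_nonneg (mul_nonneg ht (hy₁.1 i)) (mul_nonneg hu (hy₂.1 i))
    · intro i
      have hsum : ∑ i', φ (t • y₁ + u • y₂) i' * A (ρ i') j
          = t * (∑ i', φ y₁ i' * A (ρ i') j) + u * (∑ i', φ y₂ i' * A (ρ i') j) := by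
        rw [Finset.mul_sum, Finset.mul_sum, ← Finset.sum_add_distrib]
        refine Finset.sum_congr rfl (fun i' _ => ?_)
        rw [hc]; ring
      rw [hsum]
      have hci : φ (t • y₁ + u • y₂) i = t * φ y₁ i + u * φ y₂ i := by rw [hc]
      rw [hci]
      have h1 := hy₁.2 i
      have h2 := hy₂.2 i
      nlinarith [mul_le_mul_of_nonneg_left h1 ht, mul_le_mul_of_nonneg_left h2 hu]
  -- every K+1 of the F j intersect
  have hinter : ∀ I : Finset (Fin m), I ⊆ Finset.univ →
      I.card ≤ Module.finrank ℝ (Fin K → ℝ) + 1 → (⋂ j ∈ I, F j).Nonempty := by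
    intro I _ hIcard
    rw [Module.finrank_pi, Fintype.card_fin] at hIcard
    obtain ⟨J, hIJ, _, hJcard⟩ := Finset.exists_subsuperset_card_eq (Finset.subset_univ I)
      hIcard (by simpa using hKm)
    suffices h : (⋂ j ∈ J, F j).Nonempty by
      exact h.mono (Set.biInter_mono hIJ (fun _ _ => Set.Subset.rfl))
    set f : Fin (K+1) → Fin m := fun i => J.orderEmbOfFin hJcard i with hfdef
    have hfinj : Function.Injective f := (J.orderEmbOfFin hJcard).injective
    have hrank := hsub f hfinj
    obtain ⟨B, hBabs, hBrank⟩ := phaselessRank_mem (A.submatrix ρ f)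
      (fun i j => hA _ _)
    obtain ⟨c, hc0, hcB⟩ := exists_kernel_of_rank_lt B (by rw [hBrank]; exact hrank)
    set t : ℝ := ∑ i, ‖c i‖ with ht
    have htpos : 0 < t := by
      obtain ⟨i₀, hi₀⟩ := Function.ne_iff.mp hc0
      exact Finset.sum_pos' (fun i _ => norm_nonneg _)
        ⟨i₀, Finset.mem_univ _, by simpa using hi₀⟩
    set d : Fin (K+1) → ℝ := fun i => ‖c i‖ / t with hd
    have hdsum : ∑ i, d i = 1 := by
      rw [hd, ← Finset.sum_div, ← ht, div_self htpos.ne']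
    have hpoly : ∀ (jj : Fin (K+1)) (i : Fin (K+1)),
        2 * (d i * A (ρ i) (f jj)) ≤ ∑ i', d i' * A (ρ i') (f jj) := by
      intro jj i
      have hz := polygon_ineq_of_sum_eq_zero (fun i => c i * B i jj) (hcB jj) i
      have habs : ∀ i', ‖c i' * B i' jj‖ = ‖c i'‖ * A (ρ i') (f jj) := by
        intro i'
        rw [norm_mul, hBabs i' jj]; rfl
      rw [habs i] at hz
      rw [Finset.sum_congr rfl (fun i' _ => habs i')] at hz
      have expand : ∑ i', d i' * A (ρ i') (f jj)
          = (∑ i', ‖c i'‖ * A (ρ i') (f jj)) / t := by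
        rw [Finset.sum_div]
        exact Finset.sum_congr rfl (fun i' _ => by rw [hd]; ring)
      rw [expand, hd]
      rw [div_mul_eq_mul_div, le_div_iff₀ htpos]
      calc 2 * (‖c i‖ * A (ρ i) (f jj) / t) * t
          = 2 * (‖c i‖ * A (ρ i) (f jj)) := by field_simp
        _ ≤ _ := hz
    -- the common point of the K+1 sets
    set y : Fin K → ℝ := fun i => d i.castSucc with hy
    have hφy : φ y = d := by
      funext i
      induction i using Fin.lastCases with
      | last =>
        simp only [hφ, Fin.snoc_last, hy]
        have := Fin.sum_univ_castSucc (f := d)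
        rw [hdsum] at this
        linarith
      | cast i => simp only [hφ, Fin.snoc_castSucc, hy]
    refine ⟨y, ?_⟩
    rw [Set.mem_iInter₂]
    intro j hj
    have : j ∈ Set.range f := by
      rw [hfdef]
      show j ∈ Set.range (J.orderEmbOfFin hJcard)
      rw [Finset.range_orderEmbOfFin]
      exact_mod_cast hj
    obtain ⟨jj, rfl⟩ := this
    refine ⟨?_, ?_⟩
    · intro i; rw [hφy]; exact div_nonneg (norm_nonneg _) htpos.le
    · intro i
      rw [hφy]
      exact hpoly jj i
  obtain ⟨y, hy⟩ := Convex.helly_theorem' (s := Finset.univ)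
    (fun j _ => hconv j) hinter
  rw [Set.mem_iInter₂] at hy
  have hy0 := hy ⟨0, by omega⟩ (Finset.mem_univ _)
  refine ⟨φ y, hy0.1, ?_, fun j i => (hy j (Finset.mem_univ _)).2 i⟩
  rw [hφ]
  rw [Fin.sum_univ_castSucc]
  simp

/-- totalized row entries -/
noncomputable def alph {n m : ℕ} (K : ℕ) (A : Matrix (Fin n) (Fin m) ℝ)
    (s : ℕ) (i : Fin (K+2)) (j : Fin m) : ℝ :=
  if h : s*(K+1) + i.val < n then A ⟨s*(K+1) + i.val, h⟩ j else 0

lemma alph_nonneg {n m : ℕ} (K : ℕ) (A : Matrix (Fin n) (Fin m) ℝ)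
    (hA : ∀ i j, 0 ≤ A i j) (s : ℕ) (i : Fin (K+2)) (j : Fin m) :
    0 ≤ alph K A s i j := by
  rw [alph]
  split
  · exact hA _ _
  · exact le_refl 0

lemma alph_eq_of_row_eq {n m : ℕ} (K : ℕ) (A : Matrix (Fin n) (Fin m) ℝ)
    {s s' : ℕ} {i i' : Fin (K+2)} (h : s*(K+1) + i.val = s'*(K+1) + i'.val) (j : Fin m) :
    alph K A s i j = alph K A s' i' j := by
  rw [alph, alph, h]

lemma alph_shift {n m : ℕ} (K : ℕ) (A : Matrix (Fin n) (Fin m) ℝ)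
    (s : ℕ) (j : Fin m) :
    alph K A s (Fin.last (K+1)) j = alph K A (s+1) 0 j := by
  apply alph_eq_of_row_eq
  simp [Fin.last]
  ring

noncomputable def bottomVal {n m : ℕ} (K : ℕ) (A : Matrix (Fin n) (Fin m) ℝ)
    (D : ℕ → Fin (K+2) → ℝ) (j : Fin m) (s : ℕ) (z : Fin (K+2) → ℂ) : ℂ :=
  if D s (Fin.last (K+1)) = 0 then ((alph K A s (Fin.last (K+1)) j : ℝ) : ℂ)
  else z (Fin.last (K+1)) / (D s (Fin.last (K+1)) : ℂ)

lemma bottomVal_abs {n m : ℕ} (K : ℕ) (A : Matrix (Fin n) (Fin m) ℝ)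
    (hA : ∀ i j, 0 ≤ A i j)
    (D : ℕ → Fin (K+2) → ℝ) (hD0 : ∀ s i, 0 ≤ D s i) (j : Fin m) (s : ℕ)
    (z : Fin (K+2) → ℂ)
    (hz : ‖z (Fin.last (K+1))‖ = D s (Fin.last (K+1)) * alph K A s (Fin.last (K+1)) j) :
    ‖bottomVal K A D j s z‖ = alph K A s (Fin.last (K+1)) j := by
  rw [bottomVal]
  split
  · rw [Complex.norm_real, Real.norm_eq_abs, abs_of_nonneg (alph_nonneg K A hA s _ j)]
  · rename_i hD
    rw [norm_div, hz, Complex.norm_real, Real.norm_eq_abs, abs_of_nonneg (hD0 s _)]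
    exact mul_div_cancel_left₀ _ hD

lemma align_spec (Y0 : ℂ) (e : ℝ) (he : 0 ≤ e) (w : ℂ)
    (h : ‖Y0‖ = e * ‖w‖) :
    ∃ u : ℂ, ‖u‖ = 1 ∧ u * Y0 = (e : ℝ) * w := by
  by_cases hY0 : Y0 = 0
  · refine ⟨1, by simp, ?_⟩
    rw [hY0, mul_zero]
    rw [hY0, norm_zero] at h
    rcases mul_eq_zero.mp h.symm with h' | h'
    · rw [h']; simp
    · rw [norm_eq_zero.mp h', mul_zero]
  · refine ⟨(e : ℝ) * w / Y0, ?_, div_mul_cancel₀ _ hY0⟩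
    rw [norm_div, norm_mul, Complex.norm_real, Real.norm_eq_abs, abs_of_nonneg he, ← h,
      div_self (by simpa using hY0)]


lemma polygon_exists_anchor {k : ℕ} (a : Fin k → ℝ) (h0 : ∀ i, 0 ≤ a i)
    (h2 : ∀ i, 2 * a i ≤ ∑ i', a i') (i0 : Fin k) (e : ℝ) (he : 0 ≤ e) (w : ℂ)
    (hai0 : a i0 = e * ‖w‖) :
    ∃ z : Fin k → ℂ, (∀ i, ‖z i‖ = a i) ∧ (∑ i, z i = 0) ∧
      z i0 = (e : ℝ) * w := by
  obtain ⟨Y, hY1, hY2⟩ := polygon_exists k a h0 h2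
  obtain ⟨u, hu1, hu2⟩ := align_spec (Y i0) e he w (by rw [hY1 i0]; exact hai0)
  refine ⟨u • Y, fun i => ?_, ?_, hu2⟩
  · show ‖u * Y i‖ = _
    rw [norm_mul, hu1, one_mul]
    exact hY1 i
  · rw [show ∑ i, (u • Y) i = u * ∑ i, Y i from by rw [Finset.mul_sum]; rfl, hY2, mul_zero]

/-- the recursive phase choice down the strips, for a fixed column `j` -/
noncomputable def ZZ {n m : ℕ} (K : ℕ) (A : Matrix (Fin n) (Fin m) ℝ)
    (hA : ∀ i j, 0 ≤ A i j)
    (D : ℕ → Fin (K+2) → ℝ) (hD0 : ∀ s i, 0 ≤ D s i)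
    (hDpoly : ∀ s (j : Fin m) (i : Fin (K+2)),
      2 * (D s i * alph K A s i j) ≤ ∑ i', D s i' * alph K A s i' j)
    (j : Fin m) : (s : ℕ) → {z : Fin (K+2) → ℂ //
      (∀ i, ‖z i‖ = D s i * alph K A s i j) ∧ ∑ i, z i = 0}
  | 0 =>
    have h := polygon_exists (K+2) (fun i => D 0 i * alph K A 0 i j)
        (fun i => mul_nonneg (hD0 0 i) (alph_nonneg K A hA 0 i j)) (hDpoly 0 j)
    ⟨h.choose, h.choose_spec⟩
  | (s+1) =>
    have h := polygon_exists_anchor (fun i => D (s+1) i * alph K A (s+1) i j)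
        (fun i => mul_nonneg (hD0 (s+1) i) (alph_nonneg K A hA (s+1) i j))
        (hDpoly (s+1) j) 0 (D (s+1) 0) (hD0 (s+1) 0)
        (bottomVal K A D j s (ZZ K A hA D hD0 hDpoly j s).1)
        (by
          show D (s+1) 0 * alph K A (s+1) 0 j = _
          rw [bottomVal_abs K A hA D hD0 j s _ ((ZZ K A hA D hD0 hDpoly j s).2.1 _),
            alph_shift K A s j])
    ⟨h.choose, h.choose_spec.1, h.choose_spec.2.1⟩

lemma ZZ_succ_zero {n m : ℕ} (K : ℕ) (A : Matrix (Fin n) (Fin m) ℝ)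
    (hA : ∀ i j, 0 ≤ A i j)
    (D : ℕ → Fin (K+2) → ℝ) (hD0 : ∀ s i, 0 ≤ D s i)
    (hDpoly : ∀ s (j : Fin m) (i : Fin (K+2)),
      2 * (D s i * alph K A s i j) ≤ ∑ i', D s i' * alph K A s i' j)
    (j : Fin m) (s : ℕ) :
    (ZZ K A hA D hD0 hDpoly j (s+1)).1 0 =
      ((D (s+1) 0 : ℝ) : ℂ) * bottomVal K A D j s (ZZ K A hA D hD0 hDpoly j s).1 := by
  conv_lhs => rw [ZZ]
  exact (polygon_exists_anchor (fun i => D (s+1) i * alph K A (s+1) i j)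
        (fun i => mul_nonneg (hD0 (s+1) i) (alph_nonneg K A hA (s+1) i j))
        (hDpoly (s+1) j) 0 (D (s+1) 0) (hD0 (s+1) 0)
        (bottomVal K A D j s (ZZ K A hA D hD0 hDpoly j s).1)
        (by
          rw [bottomVal_abs K A hA D hD0 j s _ ((ZZ K A hA D hD0 hDpoly j s).2.1 _),
            alph_shift K A s j])).choose_spec.2.2

lemma build_B {n m K : ℕ} (A : Matrix (Fin n) (Fin m) ℝ) (hA : ∀ i j, 0 ≤ A i j)
    (q : ℕ) (hq : q * (K+1) + 1 ≤ n)
    (D : ℕ → Fin (K+2) → ℝ) (hD0 : ∀ s i, 0 ≤ D s i)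
    (hDpoly : ∀ s (j : Fin m) (i : Fin (K+2)),
      2 * (D s i * alph K A s i j) ≤ ∑ i', D s i' * alph K A s i' j)
    (v : Fin q → Fin n → ℂ)
    (hv : ∀ (s : Fin q) (r : Fin n), v s r =
      if h : s.val*(K+1) ≤ r.val ∧ r.val ≤ s.val*(K+1)+(K+1)
      then ((D s.val ⟨r.val - s.val*(K+1), by omega⟩ : ℝ) : ℂ) else 0) :
    ∃ B : Matrix (Fin n) (Fin m) ℂ, (∀ i j, ‖B i j‖ = A i j) ∧
      ∀ s, v s ᵥ* B = 0 := by
  classical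
  set Zf := fun j => ZZ K A hA D hD0 hDpoly j with hZf
  set ent : ℕ → Fin (K+2) → Fin m → Fin n → ℂ := fun s i j r =>
    if D s i = 0 then ((A r j : ℝ) : ℂ) else (Zf j s).1 i / ((D s i : ℝ) : ℂ) with hent
  set B : Matrix (Fin n) (Fin m) ℂ := fun r j =>
    if r.val = 0 then ent 0 0 j r
    else if r.val ≤ q*(K+1) then
      ent ((r.val-1)/(K+1)) ⟨(r.val-1)%(K+1)+1,
        by have := Nat.mod_lt (r.val-1) (show 0 < K+1 by omega); omega⟩ j r
    else ((A r j : ℝ) : ℂ) with hB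
  have hZzero : ∀ (j : Fin m) (s' : ℕ) (i' : Fin (K+2)), D s' i' = 0 → (Zf j s').1 i' = 0 := by
    intro j s' i' hD'
    have := (Zf j s').2.1 i'
    rw [hD', zero_mul] at this
    exact norm_eq_zero.mp this
  have hent_mul : ∀ (s' : ℕ) (i' : Fin (K+2)) (j : Fin m) (r : Fin n),
      ((D s' i' : ℝ) : ℂ) * ent s' i' j r = (Zf j s').1 i' := by
    intro s' i' j r
    simp only [hent]
    by_cases hD' : D s' i' = 0
    · rw [if_pos hD', hZzero j s' i' hD', hD']
      simp
    · rw [if_neg hD', mul_div_cancel₀]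
      simpa using hD'
  -- the key evaluation
  have hBR : ∀ (s : ℕ), s < q → ∀ (i : Fin (K+2)) (hrow : s*(K+1)+i.val < n) (j : Fin m),
      ((D s i : ℝ) : ℂ) * B ⟨s*(K+1)+i.val, hrow⟩ j = (Zf j s).1 i := by
    intro s hs i hrow j
    rcases Nat.eq_zero_or_pos i.val with hi0 | hip
    · -- top row of the strip
      have hieq : i = 0 := Fin.ext (by simpa using hi0)
      subst hieq
      rcases Nat.eq_zero_or_pos s with hs0 | hsp
      · -- very first row
        subst hs0
        have hc1 : 0*(K+1) + (0 : Fin (K+2)).val = 0 := by simp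
        simp only [hB]
        rw [if_pos hc1]
        exact hent_mul 0 0 j _
      · -- shared row: s = t+1
        obtain ⟨t, rfl⟩ : ∃ t, s = t + 1 := ⟨s - 1, by omega⟩
        have hc1 : ¬((t+1)*(K+1) + (0 : Fin (K+2)).val = 0) := by
          simp only [Fin.val_zero, Nat.add_zero]
          positivity
        have hle : (t+1)*(K+1) + (0 : Fin (K+2)).val ≤ q*(K+1) := by
          simp only [Fin.val_zero, Nat.add_zero]
          exact Nat.mul_le_mul_right _ hs.le
        have hdiv : ((t+1)*(K+1) + (0 : Fin (K+2)).val - 1)/(K+1) = t := by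
          simp only [Fin.val_zero, Nat.add_zero]
          have h1 : (t+1)*(K+1) - 1 = K + (K+1)*t := by ring_nf; omega
          rw [h1, Nat.add_mul_div_left _ _ (show 0 < K+1 by omega), Nat.div_eq_of_lt (by omega)]
          omega
        have hmod : ((t+1)*(K+1) + (0 : Fin (K+2)).val - 1)%(K+1) = K := by
          simp only [Fin.val_zero, Nat.add_zero]
          have h1 : (t+1)*(K+1) - 1 = K + (K+1)*t := by ring_nf; omega
          rw [h1, Nat.add_mul_mod_self_left, Nat.mod_eq_of_lt (by omega)]
        simp only [hB]
        rw [if_neg hc1, if_pos hle, hdiv]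
        have hmk : (⟨((t+1)*(K+1) + (0 : Fin (K+2)).val - 1)%(K+1)+1,
            by have := Nat.mod_lt ((t+1)*(K+1) + (0 : Fin (K+2)).val - 1) (show 0 < K+1 by omega); omega⟩ : Fin (K+2))
            = Fin.last (K+1) := by
          apply Fin.ext
          simp only [hmod, Fin.val_last]
        rw [hmk]
        -- the entry equals bottomVal of strip t
        have hentbv : ent t (Fin.last (K+1)) j ⟨(t+1)*(K+1)+(0 : Fin (K+2)).val, hrow⟩
            = bottomVal K A D j t (Zf j t).1 := by
          simp only [hent, bottomVal]
          have : alph K A t (Fin.last (K+1)) j = A ⟨(t+1)*(K+1)+(0 : Fin (K+2)).val, hrow⟩ j := by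
            rw [alph_shift K A t j, alph, dif_pos (show (t+1)*(K+1)+(0 : Fin (K+2)).val < n from hrow)]
          rw [this]
        rw [hentbv]
        exact (ZZ_succ_zero K A hA D hD0 hDpoly j t).symm
    · -- interior row
      have hc1 : ¬(s*(K+1) + i.val = 0) := by omega
      have hle : s*(K+1) + i.val ≤ q*(K+1) := by
        have h1 : s + 1 ≤ q := hs
        have h2 : i.val ≤ K+1 := by omega
        have h3 : (s+1)*(K+1) ≤ q*(K+1) := Nat.mul_le_mul_right _ h1
        have h4 : s*(K+1)+i.val ≤ (s+1)*(K+1) := by ring_nf; omega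
        omega
      have hdiv : (s*(K+1) + i.val - 1)/(K+1) = s := by
        have h1 : s*(K+1)+i.val - 1 = (i.val - 1) + (K+1)*s := by
          have : i.val ≤ K+1 := by omega
          ring_nf; omega
        rw [h1, Nat.add_mul_div_left _ _ (show 0 < K+1 by omega),
          Nat.div_eq_of_lt (by omega)]
        omega
      have hmod : (s*(K+1) + i.val - 1)%(K+1) = i.val - 1 := by
        have h1 : s*(K+1)+i.val - 1 = (i.val - 1) + (K+1)*s := by ring_nf; omega
        rw [h1, Nat.add_mul_mod_self_left, Nat.mod_eq_of_lt (by omega)]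
      simp only [hB]
      rw [if_neg hc1, if_pos hle, hdiv]
      have hmk : (⟨(s*(K+1) + i.val - 1)%(K+1)+1,
          by have := Nat.mod_lt (s*(K+1) + i.val - 1) (show 0 < K+1 by omega); omega⟩ : Fin (K+2))
          = i := by
        apply Fin.ext
        simp only [hmod]
        omega
      rw [hmk]
      exact hent_mul s i j _
  refine ⟨B, ?_, ?_⟩
  · -- modulus condition
    intro r j
    have habs_ent : ∀ (s : ℕ) (i : Fin (K+2)), s*(K+1)+i.val = r.val →
        ‖ent s i j r‖ = A r j := by
      intro s i hrow
      have hrn : s*(K+1)+i.val < n := hrow ▸ r.isLt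
      have halph : alph K A s i j = A r j := by
        rw [alph, dif_pos hrn]
        congr 1
        exact Fin.ext hrow
      simp only [hent]
      by_cases hD' : D s i = 0
      · rw [if_pos hD', Complex.norm_real, Real.norm_eq_abs, abs_of_nonneg (hA r j)]
      · rw [if_neg hD', norm_div, (Zf j s).2.1 i, Complex.norm_real, Real.norm_eq_abs,
          abs_of_nonneg (hD0 s i), halph, mul_div_cancel_left₀ _ hD']
    simp only [hB]
    by_cases h0 : r.val = 0
    · rw [if_pos h0]
      exact habs_ent 0 0 (by simp [h0])
    · rw [if_neg h0]
      by_cases hmid : r.val ≤ q*(K+1)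
      · rw [if_pos hmid]
        have key : (r.val-1)/(K+1)*(K+1) + ((r.val-1)%(K+1)+1) = r.val := by
          have h1 := Nat.div_add_mod (r.val - 1) (K+1)
          have h3 : 1 ≤ r.val := Nat.pos_of_ne_zero h0
          calc (r.val-1)/(K+1)*(K+1) + ((r.val-1)%(K+1)+1)
              = ((K+1)*((r.val-1)/(K+1)) + (r.val-1)%(K+1)) + 1 := by ring
            _ = (r.val-1)+1 := by rw [h1]
            _ = r.val := by omega
        exact habs_ent _ _ key
      · rw [if_neg hmid]
        rw [Complex.norm_real, Real.norm_eq_abs, abs_of_nonneg (hA r j)]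
  · -- kernel condition
    intro s
    funext j
    have hrmk : ∀ i : Fin (K+2), s.val*(K+1)+i.val < n := by
      intro i
      have h1 : s.val + 1 ≤ q := s.isLt
      have h2 : i.val ≤ K+1 := by omega
      have h4 : s.val*(K+1)+i.val ≤ (s.val+1)*(K+1) := by ring_nf; omega
      have h3 : (s.val+1)*(K+1) ≤ q*(K+1) := Nat.mul_le_mul_right _ h1
      omega
    set rmk : Fin (K+2) → Fin n := fun i => ⟨s.val*(K+1)+i.val, hrmk i⟩ with hrmkdef
    have hinj : ∀ x ∈ Finset.univ, ∀ y ∈ Finset.univ, rmk x = rmk y → x = y := by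
      intro x _ y _ hxy
      have := congrArg Fin.val hxy
      simp only [hrmkdef] at this
      exact Fin.ext (by omega)
    show ∑ r, v s r * B r j = 0
    have hzero : ∀ r ∈ Finset.univ, r ∉ Finset.univ.image rmk → v s r * B r j = 0 := by
      intro r _ hr
      have : v s r = 0 := by
        rw [hv]
        rw [dif_neg]
        intro hcond
        apply hr
        refine Finset.mem_image.mpr ⟨⟨r.val - s.val*(K+1), by omega⟩, Finset.mem_univ _, ?_⟩
        apply Fin.ext
        simp only [hrmkdef]
        omega
      rw [this, zero_mul]
    rw [← Finset.sum_subset (Finset.subset_univ (Finset.univ.image rmk)) hzero,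
      Finset.sum_image hinj]
    have hterm : ∀ i : Fin (K+2), v s (rmk i) * B (rmk i) j = (Zf j s.val).1 i := by
      intro i
      have hvval : v s (rmk i) = ((D s.val i : ℝ) : ℂ) := by
        rw [hv, dif_pos (show s.val*(K+1) ≤ (rmk i).val ∧ (rmk i).val ≤ s.val*(K+1)+(K+1) by
          constructor
          · simp only [hrmkdef]; omega
          · simp only [hrmkdef]; omega)]
        congr 2
        apply Fin.ext
        simp only [hrmkdef]
        omega
      rw [hvval]
      exact hBR s.val s.isLt i (hrmk i) j
    rw [Finset.sum_congr rfl (fun i _ => hterm i)]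
    exact (Zf j s.val).2.2

lemma v_indep {n m K q : ℕ} (A : Matrix (Fin n) (Fin m) ℝ)
    (D : ℕ → Fin (K+2) → ℝ)
    (hDsum : ∀ s : ℕ, s < q → ∑ i, D s i = 1)
    (B : Matrix (Fin n) (Fin m) ℂ)
    (habs : ∀ i j, ‖B i j‖ = A i j)
    (hrows : ∀ r : Fin n, ∃ j, A r j ≠ 0)
    (hq : q * (K+1) + 1 ≤ n)
    (v : Fin q → Fin n → ℂ)
    (hv : ∀ (s : Fin q) (r : Fin n), v s r =
      if h : s.val*(K+1) ≤ r.val ∧ r.val ≤ s.val*(K+1)+(K+1)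
      then ((D s.val ⟨r.val - s.val*(K+1), by omega⟩ : ℝ) : ℂ) else 0)
    (hvB : ∀ s, v s ᵥ* B = 0) :
    LinearIndependent ℂ v := by
  rw [Fintype.linearIndependent_iff]
  intro g hg
  by_contra hcon
  push_neg at hcon
  obtain ⟨s₀, hs₀⟩ := hcon
  classical
  set S := Finset.univ.filter (fun s => g s ≠ 0) with hS
  have hSne : S.Nonempty := ⟨s₀, by simp [hS, hs₀]⟩
  set t := S.max' hSne with htdef
  have hgt : g t ≠ 0 := (Finset.mem_filter.mp (S.max'_mem hSne)).2
  have htlt : (t : ℕ) < q := t.isLt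
  have hwin : ∀ i : Fin (K+2), t.val*(K+1)+i.val < n := by
    intro i
    have h1 : t.val + 1 ≤ q := htlt
    have h2 : i.val ≤ K+1 := by omega
    have h4 : t.val*(K+1)+i.val ≤ (t.val+1)*(K+1) := by ring_nf; omega
    have h3 : (t.val+1)*(K+1) ≤ q*(K+1) := Nat.mul_le_mul_right _ h1
    omega
  -- other kernel vectors in the sum vanish on rows of the strip of t (above the top row)
  have hother : ∀ (s : Fin q), s ≠ t → g s ≠ 0 → ∀ (r : Fin n),
      t.val*(K+1) < r.val → v s r = 0 := by
    intro s hst hgs r hr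
    have hsmem : s ∈ S := by simp [hS, hgs]
    have hsle : (s : ℕ) ≤ (t : ℕ) := S.le_max' s hsmem
    have hslt : (s : ℕ) < (t : ℕ) := lt_of_le_of_ne hsle (fun h => hst (Fin.ext h))
    rw [hv, dif_neg]
    intro hcond
    have h1 : (s.val+1)*(K+1) ≤ t.val*(K+1) := Nat.mul_le_mul_right _ hslt
    have h2 := hcond.2
    have h3 : (s.val+1)*(K+1) = s.val*(K+1)+(K+1) := by ring
    omega
  -- step 1: all weights of strip t above the top row vanish
  have hD0i : ∀ i : Fin (K+2), 1 ≤ i.val → D t.val i = 0 := by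
    intro i hi
    set r : Fin n := ⟨t.val*(K+1)+i.val, hwin i⟩ with hrdef
    have h := congrFun hg r
    rw [Finset.sum_apply] at h
    simp only [Pi.smul_apply, smul_eq_mul, Pi.zero_apply] at h
    rw [Finset.sum_eq_single t] at h
    · have hvt : v t r = ((D t.val i : ℝ) : ℂ) := by
        rw [hv, dif_pos (show t.val*(K+1) ≤ r.val ∧ r.val ≤ t.val*(K+1)+(K+1) by
          constructor
          · simp only [hrdef]; omega
          · simp only [hrdef]; omega)]
        congr 2
        apply Fin.ext
        simp only [hrdef]
        omega
      rw [hvt] at h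
      rcases mul_eq_zero.mp h with h' | h'
      · exact absurd h' hgt
      · exact_mod_cast h'
    · intro s _ hst
      by_cases hgs : g s = 0
      · rw [hgs, zero_mul]
      · rw [hother s hst hgs r (by simp only [hrdef]; omega), mul_zero]
    · intro habs'
      exact absurd (Finset.mem_univ t) habs'
  have hD00 : D t.val 0 ≠ 0 := by
    intro hz
    have hsum := hDsum t.val htlt
    rw [Fin.sum_univ_succ, hz, zero_add] at hsum
    rw [Finset.sum_eq_zero (fun i _ => hD0i i.succ (by simp))] at hsum
    simp at hsum
  -- step 2: the top row of B vanishes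
  set top : Fin n := ⟨t.val*(K+1), by have := hwin 0; simpa using this⟩ with htop
  have hBtop : ∀ j, B top j = 0 := by
    intro j
    have h := congrFun (hvB t) j
    simp only [Matrix.vecMul, dotProduct, Pi.zero_apply] at h
    rw [Finset.sum_eq_single top] at h
    · have hvt : v t top = ((D t.val 0 : ℝ) : ℂ) := by
        rw [hv, dif_pos (⟨Nat.le_refl _, by
          show t.val*(K+1) ≤ t.val*(K+1)+(K+1); omega⟩ :
          t.val*(K+1) ≤ top.val ∧ top.val ≤ t.val*(K+1)+(K+1))]
        congr 2
        apply Fin.ext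
        show top.val - t.val*(K+1) = 0
        show t.val*(K+1) - t.val*(K+1) = 0
        omega
      rw [hvt] at h
      rcases mul_eq_zero.mp h with h' | h'
      · exact absurd (by exact_mod_cast h') hD00
      · exact h'
    · intro r _ hrtop
      by_cases hwin' : t.val*(K+1) ≤ r.val ∧ r.val ≤ t.val*(K+1)+(K+1)
      · have : v t r = ((D t.val ⟨r.val - t.val*(K+1), by omega⟩ : ℝ) : ℂ) := by
          rw [hv, dif_pos hwin']
        rw [this, hD0i ⟨r.val - t.val*(K+1), by omega⟩ (by
          simp only []
          have : r.val ≠ t.val*(K+1) := fun hc => hrtop (Fin.ext (by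
            show r.val = t.val*(K+1); exact hc))
          omega)]
        simp
      · rw [hv, dif_neg hwin', zero_mul]
    · intro habs'
      exact absurd (Finset.mem_univ top) habs'
  obtain ⟨j, hj⟩ := hrows top
  exact hj (by rw [← habs top j, hBtop j, norm_zero])

lemma phaselessRank_le_of_exists {n m : ℕ} (A : Matrix (Fin n) (Fin m) ℝ)
    (B : Matrix (Fin n) (Fin m) ℂ) (habs : ∀ i j, ‖B i j‖ = A i j)
    {c : ℕ} (hc : B.rank ≤ c) : phaselessRank A ≤ c :=
  le_trans (Nat.sInf_le ⟨B, habs, rfl⟩) hc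

theorem main_aux : ∀ n : ℕ, ∀ m k : ℕ, n ≤ m → k ≤ n →
    ∀ A : Matrix (Fin n) (Fin m) ℝ, (∀ i j, 0 ≤ A i j) →
    (∀ (g : Fin k → Fin n) (f : Fin k → Fin m),
      Function.Injective g → Function.Injective f →
      phaselessRank (A.submatrix g f) < k) →
    phaselessRank A ≤ n - (n - 1) / (k - 1) := by
  intro n
  induction n using Nat.strong_induction_on with
  | _ n IH =>
  intro m k hnm hk A hA hsub
  match k, hk with
  | 0, hk =>
    exact absurd (hsub Fin.elim0 Fin.elim0 (fun x => x.elim0) (fun x => x.elim0))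
      (Nat.not_lt_zero _)
  | 1, hk =>
    -- bound is n, trivial
    have : (1:ℕ) - 1 = 0 := rfl
    rw [this, Nat.div_zero, Nat.sub_zero]
    obtain ⟨B, hB, hBrank⟩ := phaselessRank_mem A hA
    rw [← hBrank]
    exact le_trans (Matrix.rank_le_card_height B) (by simp)
  | (K+2), hk =>
    set q := (n-1)/(K+1) with hqdef
    have hn1 : K + 1 ≤ n - 1 := by omega
    have hq1 : 1 ≤ q := by
      rw [hqdef]
      exact Nat.one_le_div_iff (by omega) |>.mpr hn1
    have hqn : q * (K+1) ≤ n - 1 := by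
      rw [hqdef]
      exact Nat.div_mul_le_self _ _
    have hq : q * (K+1) + 1 ≤ n := by omega
    have hgoal : n - (n - 1) / (K + 2 - 1) = n - q := by rw [show (K+2-1 : ℕ) = K+1 from rfl, hqdef]
    rw [hgoal]
    by_cases hrows : ∀ r : Fin n, ∃ j, A r j ≠ 0
    · -- main construction
      classical
      have hrowlt : ∀ (s : Fin q) (i : Fin (K+2)), s.val*(K+1)+i.val < n := by
        intro s i
        have h1 : s.val + 1 ≤ q := s.isLt
        have h2 : i.val ≤ K+1 := by omega
        have h4 : s.val*(K+1)+i.val ≤ (s.val+1)*(K+1) := by ring_nf; omega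
        have h3 : (s.val+1)*(K+1) ≤ q*(K+1) := Nat.mul_le_mul_right _ h1
        omega
      have hstrip : ∀ s : Fin q, ∃ d : Fin (K+2) → ℝ, (∀ i, 0 ≤ d i) ∧ (∑ i, d i = 1) ∧
          ∀ (j : Fin m) (i : Fin (K+2)),
            2 * (d i * A ⟨s.val*(K+1)+i.val, hrowlt s i⟩ j)
              ≤ ∑ i', d i' * A ⟨s.val*(K+1)+i'.val, hrowlt s i'⟩ j := by
        intro s
        set ρ : Fin (K+2) → Fin n := fun i => ⟨s.val*(K+1)+i.val, hrowlt s i⟩ with hρdef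
        have hρ : Function.Injective ρ := by
          intro x y hxy
          have := congrArg Fin.val hxy
          simp only [hρdef] at this
          exact Fin.ext (by omega)
        exact exists_weights (K := K+1) (by omega) A hA ρ
          (fun f hf => hsub ρ f hρ hf)
      choose dd hdd0 hdd1 hdd2 using hstrip
      set D : ℕ → Fin (K+2) → ℝ := fun s => if hs : s < q then dd ⟨s, hs⟩ else 0 with hD
      have hD0 : ∀ s i, 0 ≤ D s i := by
        intro s i
        simp only [hD]
        split
        · exact hdd0 _ i
        · exact le_refl 0
      have hDsum : ∀ s : ℕ, s < q → ∑ i, D s i = 1 := by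
        intro s hs
        simp only [hD, dif_pos hs]
        exact hdd1 _
      have halphval : ∀ (s : Fin q) (i : Fin (K+2)) (j : Fin m),
          alph K A s.val i j = A ⟨s.val*(K+1)+i.val, hrowlt s i⟩ j := by
        intro s i j
        rw [alph, dif_pos (hrowlt s i)]
      have hDpoly : ∀ s (j : Fin m) (i : Fin (K+2)),
          2 * (D s i * alph K A s i j) ≤ ∑ i', D s i' * alph K A s i' j := by
        intro s j i
        by_cases hs : s < q
        · simp only [hD, dif_pos hs]
          have h1 := hdd2 ⟨s, hs⟩ j i
          rw [halphval ⟨s, hs⟩ i j]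
          calc 2 * (dd ⟨s, hs⟩ i * A ⟨s*(K+1)+i.val, hrowlt ⟨s, hs⟩ i⟩ j)
              ≤ ∑ i', dd ⟨s, hs⟩ i' * A ⟨s*(K+1)+i'.val, hrowlt ⟨s, hs⟩ i'⟩ j := h1
            _ = ∑ i', dd ⟨s, hs⟩ i' * alph K A s i' j := by
                refine Finset.sum_congr rfl (fun i' _ => ?_)
                rw [halphval ⟨s, hs⟩ i' j]
        · simp only [hD, dif_neg hs]
          simp
      set v : Fin q → Fin n → ℂ := fun s r =>
        if h : s.val*(K+1) ≤ r.val ∧ r.val ≤ s.val*(K+1)+(K+1)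
        then ((D s.val ⟨r.val - s.val*(K+1), by omega⟩ : ℝ) : ℂ) else 0 with hvdef
      obtain ⟨B, hBabs, hBv⟩ := build_B A hA q hq D hD0 hDpoly v (fun _ _ => rfl)
      have hind := v_indep A D hDsum B hBabs hrows hq v (fun _ _ => rfl) hBv
      have hrank := rank_add_le_of_kernel B v hind hBv
      exact phaselessRank_le_of_exists A B hBabs (by omega)
    · push_neg at hrows
      obtain ⟨r0, hr0⟩ := hrows
      by_cases hnk : K + 2 < n
      · -- delete the zero row
        obtain ⟨n', rfl⟩ : ∃ n', n = n' + 1 := ⟨n - 1, by omega⟩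
        set A' : Matrix (Fin n') (Fin m) ℝ := A.submatrix r0.succAbove id with hA'
        have hsub' : ∀ (g : Fin (K+2) → Fin n') (f : Fin (K+2) → Fin m),
            Function.Injective g → Function.Injective f →
            phaselessRank (A'.submatrix g f) < K+2 := by
          intro g f hg hf
          rw [hA', Matrix.submatrix_submatrix]
          exact hsub _ _ (Fin.succAbove_right_injective.comp hg) (by simpa using hf)
        have hres := IH n' (by omega) m (K+2) (by omega) (by omega) A'
          (fun i j => hA _ _) hsub'
        obtain ⟨B', hB'abs, hB'rank⟩ := phaselessRank_mem A' (fun i j => hA _ _)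
        set P : Matrix (Fin (n'+1)) (Fin n') ℂ :=
          fun r i => if r = r0.succAbove i then 1 else 0 with hP
        set B : Matrix (Fin (n'+1)) (Fin m) ℂ := P * B' with hBdef
        have habs : ∀ r j, ‖B r j‖ = A r j := by
          intro r j
          rw [hBdef, Matrix.mul_apply]
          by_cases hr : r = r0
          · rw [Finset.sum_eq_zero (fun i _ => by
              rw [hP]
              simp only []
              rw [if_neg (by rw [hr]; exact (Fin.succAbove_ne r0 i).symm), zero_mul])]
            rw [norm_zero, hr, hr0 j]
          · obtain ⟨i₀, hi₀⟩ := Fin.exists_succAbove_eq hr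
            rw [Finset.sum_eq_single i₀]
            · rw [hP]
              simp only []
              rw [if_pos hi₀.symm, one_mul, hB'abs, hA', Matrix.submatrix_apply, hi₀]
              rfl
            · intro i _ hii
              rw [hP]
              simp only []
              rw [if_neg (fun hc => hii (Fin.succAbove_right_injective (by rw [hi₀, ← hc]))),
                zero_mul]
            · intro hix
              exact absurd (Finset.mem_univ i₀) hix
        apply phaselessRank_le_of_exists A B habs
        have h1 : B.rank ≤ B'.rank := by
          rw [hBdef]
          exact Matrix.rank_mul_le_right P B'
        rw [hB'rank] at h1
        -- arithmetic
        have h2 : (n' : ℕ) - (n'-1)/(K+1) ≤ n'+1 - (n'+1-1)/(K+1) := by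
          have h3 : n' ≤ (n'-1)+(K+1) := by omega
          have h4 : n'/(K+1) ≤ ((n'-1)+(K+1))/(K+1) := Nat.div_le_div_right h3
          rw [Nat.add_div_right _ (show 0 < K+1 by omega)] at h4
          have h5 : n'/(K+1) ≤ n' := Nat.div_le_self _ _
          simp only [Nat.add_sub_cancel]
          omega
        have h6 : phaselessRank A' ≤ n' - (n'-1)/(K+2-1) := hres
        have h7 : (K+2-1 : ℕ) = K+1 := rfl
        rw [h7] at h6
        have hqq : q = (n'+1-1)/(K+1) := hqdef
        omega
      · -- n = K+2, zero row: direct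
        have hn : n = K+2 := le_antisymm (not_lt.mp hnk) hk
        classical
        set B : Matrix (Fin n) (Fin m) ℂ :=
          fun i j => if i = r0 then 0 else ((A i j : ℝ) : ℂ) with hBdef
        have habs : ∀ i j, ‖B i j‖ = A i j := by
          intro i j
          rw [hBdef]
          by_cases hi : i = r0
          · simp only [if_pos hi]
            rw [norm_zero, hi, hr0 j]
          · simp only [if_neg hi]
            rw [Complex.norm_real, Real.norm_eq_abs, abs_of_nonneg (hA i j)]
        set v : Fin 1 → Fin n → ℂ := fun _ => Pi.single r0 (1:ℂ) with hvdef
        have hvB : ∀ s, v s ᵥ* B = 0 := by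
          intro s
          funext j
          simp only [Matrix.vecMul, dotProduct, hvdef, Pi.zero_apply]
          rw [Finset.sum_eq_single r0]
          · rw [Pi.single_eq_same, one_mul, hBdef]
            simp
          · intro r _ hr
            rw [Pi.single_eq_of_ne hr, zero_mul]
          · intro h
            exact absurd (Finset.mem_univ r0) h
        have hind : LinearIndependent ℂ v := by
          apply linearIndependent_unique_iff.mpr
          intro h
          have h2 := congrFun h r0
          simp only [hvdef, Pi.single_eq_same, Pi.zero_apply] at h2
          exact one_ne_zero h2
        have hrank := rank_add_le_of_kernel B v hind hvB
        apply phaselessRank_le_of_exists A B habs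
        have hq1' : q = 1 := by
          rw [hqdef, hn]
          simp [Nat.div_self]
        omega


theorem stmt_16 {n m k : ℕ} (hnm : n ≤ m) (hk : k ≤ n)
    (A : Matrix (Fin n) (Fin m) ℝ) (hA : ∀ i j, 0 ≤ A i j)
    (hsub : ∀ (g : Fin k → Fin n) (f : Fin k → Fin m),
      Function.Injective g → Function.Injective f →
      phaselessRank (A.submatrix g f) < k) :
    phaselessRank A ≤ n - (n - 1) / (k - 1) := by
  exact main_aux n m k hnm hk A hA hsub
end

section
/- Let A be a nonnegative n×n matrix and α ≥ 1 a real number. If rank_θ(A) = n, then rank_θ(A^{∘α}) = n, where A^{∘α} is the matrix with entries A_{ij}^α. In particular, if rank_θ(A) < n then the Hadamard square root of A has phaseless rank less than n. -/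
open Matrix

/-! ### Auxiliary lemmas -/

/-- Two variable subadditivity of `rpow` with exponent in `[0,1]`. -/
lemma aux_rpow_add_le {a b β : ℝ} (ha : 0 ≤ a) (hb : 0 ≤ b) (hβ0 : 0 ≤ β) (hβ1 : β ≤ 1) :
    (a + b) ^ β ≤ a ^ β + b ^ β := by
  lift a to NNReal using ha
  lift b to NNReal using hb
  exact_mod_cast NNReal.rpow_add_le_add_rpow a b hβ0 hβ1

/-- Finset subadditivity of `rpow` with exponent in `(0,1]`. -/
lemma aux_rpow_sum_le {ι : Type*} {β : ℝ} (hβ0 : 0 < β) (hβ1 : β ≤ 1)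
    (T : Finset ι) (f : ι → ℝ) (hf : ∀ j, 0 ≤ f j) :
    (∑ j ∈ T, f j) ^ β ≤ ∑ j ∈ T, f j ^ β := by
  classical
  induction T using Finset.induction_on with
  | empty => simp [Real.zero_rpow hβ0.ne']
  | @insert a s ha ih =>
    rw [Finset.sum_insert ha, Finset.sum_insert ha]
    calc (f a + ∑ j ∈ s, f j) ^ β ≤ f a ^ β + (∑ j ∈ s, f j) ^ β :=
          aux_rpow_add_le (hf a) (Finset.sum_nonneg fun j _ => hf j) hβ0.le hβ1
      _ ≤ f a ^ β + ∑ j ∈ s, f j ^ β := by linarith [ih]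

/-- Greedy sign-partition lemma. -/
lemma aux_signs {ι : Type*} [DecidableEq ι] (m : ℝ) (hm : 0 ≤ m) (T : Finset ι) (c : ι → ℝ)
    (h : ∀ j ∈ T, 0 ≤ c j ∧ c j ≤ m) :
    ∃ ε : ι → ℝ, (∀ j, ε j = 1 ∨ ε j = -1) ∧ |∑ j ∈ T, ε j * c j| ≤ m := by
  classical
  induction T using Finset.induction_on with
  | empty => exact ⟨fun _ => 1, fun _ => Or.inl rfl, by simpa⟩
  | @insert a s ha ih =>
    obtain ⟨ε, hε, hsum⟩ := ih (fun j hj => h j (Finset.mem_insert_of_mem hj))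
    have hca := h a (Finset.mem_insert_self a s)
    set s0 := ∑ j ∈ s, ε j * c j with hs0
    by_cases hpos : 0 ≤ s0
    · refine ⟨Function.update ε a (-1), ?_, ?_⟩
      · intro j
        by_cases hj : j = a
        · subst hj; right; simp
        · rw [Function.update_of_ne hj]; exact hε j
      · rw [Finset.sum_insert ha, Function.update_self]
        have : ∑ j ∈ s, Function.update ε a (-1) j * c j = s0 := by
          refine Finset.sum_congr rfl fun j hj => ?_
          rw [Function.update_of_ne (by rintro rfl; exact ha hj)]
        rw [this]
        rw [abs_le] at hsum ⊢
        constructor <;> nlinarith [hca.1, hca.2, hsum.1, hsum.2]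
    · refine ⟨Function.update ε a 1, ?_, ?_⟩
      · intro j
        by_cases hj : j = a
        · subst hj; left; simp
        · rw [Function.update_of_ne hj]; exact hε j
      · rw [Finset.sum_insert ha, Function.update_self]
        have : ∑ j ∈ s, Function.update ε a 1 j * c j = s0 := by
          refine Finset.sum_congr rfl fun j hj => ?_
          rw [Function.update_of_ne (by rintro rfl; exact ha hj)]
        rw [this]
        rw [abs_le] at hsum ⊢
        constructor <;> nlinarith [hca.1, hca.2, hsum.1, hsum.2]

/-- Triangle construction. -/
lemma aux_triangle_s17 {a b c : ℝ} (ha : 0 < a) (hb : 0 ≤ b) (hc : 0 ≤ c)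
    (h1 : a ≤ b + c) (h2 : b ≤ a + c) (h3 : c ≤ a + b) :
    ∃ z w : ℂ, ‖z‖ = b ∧ ‖w‖ = c ∧ (a : ℂ) + z + w = 0 := by
  set x : ℝ := (c ^ 2 - b ^ 2 - a ^ 2) / (2 * a) with hxdef
  have hax : x * (2 * a) = c ^ 2 - b ^ 2 - a ^ 2 := div_mul_cancel₀ _ (by positivity)
  have hx2 : x ^ 2 ≤ b ^ 2 := by
    have hub : x ≤ b := by nlinarith
    have hlb : -b ≤ x := by nlinarith
    nlinarith
  set y : ℝ := Real.sqrt (b ^ 2 - x ^ 2) with hydef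
  have hy2 : y ^ 2 = b ^ 2 - x ^ 2 := Real.sq_sqrt (by linarith)
  refine ⟨⟨x, y⟩, ⟨-a - x, -y⟩, ?_, ?_, ?_⟩
  · rw [Complex.norm_def, Complex.normSq_mk]
    have : x * x + y * y = b ^ 2 := by nlinarith
    rw [this, Real.sqrt_sq hb]
  · rw [Complex.norm_def, Complex.normSq_mk]
    have h' : (-a - x) * (-a - x) + -y * -y = c ^ 2 := by nlinarith
    rw [h', Real.sqrt_sq hc]
  · apply Complex.ext <;> simp

/-- Polygon inequality gives zero sum of unimodular multiples. -/
lemma aux_phases {n : ℕ} (c : Fin n → ℝ) (hc : ∀ j, 0 ≤ c j)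
    (hpoly : ∀ j, 2 * c j ≤ ∑ k, c k) :
    ∃ u : Fin n → ℂ, (∀ j, ‖u j‖ = 1) ∧ ∑ j, (c j : ℂ) * u j = 0 := by
  classical
  by_cases hzero : ∀ j, c j = 0
  · exact ⟨fun _ => 1, fun _ => by simp, by simp [hzero]⟩
  push_neg at hzero
  obtain ⟨j1, hj1⟩ := hzero
  obtain ⟨j0, -, hj0⟩ := Finset.exists_max_image Finset.univ c ⟨j1, Finset.mem_univ j1⟩
  have ha : 0 < c j0 :=
    lt_of_lt_of_le ((hc j1).lt_of_ne (Ne.symm hj1)) (hj0 j1 (Finset.mem_univ _))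
  set T := Finset.univ.erase j0 with hT
  obtain ⟨ε, hε, hεsum⟩ := aux_signs (c j0) ha.le T c
    (fun j _ => ⟨hc j, hj0 j (Finset.mem_univ _)⟩)
  set b := ∑ j ∈ T.filter (fun j => ε j = 1), c j with hbdef
  set d := ∑ j ∈ T.filter (fun j => ¬ ε j = 1), c j with hddef
  have hb : 0 ≤ b := Finset.sum_nonneg fun j _ => hc j
  have hd : 0 ≤ d := Finset.sum_nonneg fun j _ => hc j
  have hbd : b + d = ∑ j ∈ T, c j := Finset.sum_filter_add_sum_filter_not T _ c
  have hsplit : ∑ j ∈ T, ε j * c j = b - d := by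
    rw [← Finset.sum_filter_add_sum_filter_not T (fun j => ε j = 1) (fun j => ε j * c j)]
    have e1 : ∑ j ∈ T.filter (fun j => ε j = 1), ε j * c j = b :=
      Finset.sum_congr rfl fun j hj => by
        rw [(Finset.mem_filter.mp hj).2, one_mul]
    have e2 : ∑ j ∈ T.filter (fun j => ¬ ε j = 1), ε j * c j = -d := by
      rw [hddef, ← Finset.sum_neg_distrib]
      refine Finset.sum_congr rfl fun j hj => ?_
      have : ε j = -1 := (hε j).resolve_left (Finset.mem_filter.mp hj).2
      rw [this]; ring
    rw [e1, e2]; ring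
  have habs : |b - d| ≤ c j0 := hsplit ▸ hεsum
  have hS : c j0 + (b + d) = ∑ j, c j := by
    rw [hbd, hT]; exact Finset.add_sum_erase _ c (Finset.mem_univ j0)
  have h1 : c j0 ≤ b + d := by have := hpoly j0; linarith
  rw [abs_le] at habs
  have h2 : b ≤ c j0 + d := by linarith [habs.2]
  have h3 : d ≤ c j0 + b := by linarith [habs.1]
  obtain ⟨z, w, hz, hw, hzw⟩ := aux_triangle_s17 ha hb hd h1 h2 h3
  set zb : ℂ := if b = 0 then 1 else z / (b : ℂ) with hzb
  set wd : ℂ := if d = 0 then 1 else w / (d : ℂ) with hwd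
  have hzbabs : ‖zb‖ = 1 := by
    rw [hzb]; split_ifs with h0
    · simp
    · rw [norm_div, hz, Complex.norm_real, Real.norm_eq_abs, abs_of_nonneg hb, div_self h0]
  have hwdabs : ‖wd‖ = 1 := by
    rw [hwd]; split_ifs with h0
    · simp
    · rw [norm_div, hw, Complex.norm_real, Real.norm_eq_abs, abs_of_nonneg hd, div_self h0]
  have hzkey : (b : ℂ) * zb = z := by
    rw [hzb]; split_ifs with h0
    · have : z = 0 := by
        rw [← norm_eq_zero, hz, h0]
      simp [this, h0]
    · have hbne : (b : ℂ) ≠ 0 := by exact_mod_cast h0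
      field_simp
  have hwkey : (d : ℂ) * wd = w := by
    rw [hwd]; split_ifs with h0
    · have : w = 0 := by
        rw [← norm_eq_zero, hw, h0]
      simp [this, h0]
    · have hdne : (d : ℂ) ≠ 0 := by exact_mod_cast h0
      field_simp
  refine ⟨fun j => if j = j0 then 1 else if ε j = 1 then zb else wd, ?_, ?_⟩
  · intro j
    by_cases hj : j = j0
    · simp [hj]
    · by_cases hj' : ε j = 1 <;> simp [hj, hj', hzbabs, hwdabs]
  · rw [← Finset.add_sum_erase _ _ (Finset.mem_univ j0)]
    have hrest : ∑ j ∈ Finset.univ.erase j0,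
        (c j : ℂ) * (if j = j0 then 1 else if ε j = 1 then zb else wd)
        = (b : ℂ) * zb + (d : ℂ) * wd := by
      have estep : ∀ j ∈ T, (c j : ℂ) * (if j = j0 then 1 else if ε j = 1 then zb else wd)
          = (c j : ℂ) * (if ε j = 1 then zb else wd) := by
        intro j hj
        rw [if_neg (Finset.ne_of_mem_erase hj)]
      rw [← hT, Finset.sum_congr rfl estep,
        ← Finset.sum_filter_add_sum_filter_not T (fun j => ε j = 1)]
      congr 1
      · rw [Finset.sum_congr rfl (fun j hj => by rw [if_pos (Finset.mem_filter.mp hj).2]),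
          ← Finset.sum_mul, hbdef]
        push_cast
        ring
      · rw [Finset.sum_congr rfl (fun j hj => by rw [if_neg (Finset.mem_filter.mp hj).2]),
          ← Finset.sum_mul, hddef]
        push_cast
        ring
    rw [hrest]
    have hj0if : (fun j => if j = j0 then (1:ℂ) else if ε j = 1 then zb else wd) j0 = 1 := by simp
    rw [hj0if, mul_one, hzkey, hwkey, ← add_assoc]
    exact hzw

/-- Matrix with nontrivial kernel has rank less than `n`. -/
lemma aux_rank_lt {n : ℕ} (C : Matrix (Fin n) (Fin n) ℂ) (v : Fin n → ℂ) (hv : v ≠ 0)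
    (h : C.mulVec v = 0) : C.rank < n := by
  have hk : v ∈ LinearMap.ker C.mulVecLin := by
    rw [LinearMap.mem_ker, Matrix.mulVecLin_apply, h]
  have h1 : C.rank + Module.finrank ℂ (LinearMap.ker C.mulVecLin) = n := by
    rw [Matrix.rank, LinearMap.finrank_range_add_finrank_ker,
      Module.finrank_fintype_fun_eq_card, Fintype.card_fin]
  have h2 : 0 < Module.finrank ℂ (LinearMap.ker C.mulVecLin) := by
    rw [Module.finrank_pos_iff_exists_ne_zero]
    exact ⟨⟨v, hk⟩, by simpa [Submodule.mk_eq_zero] using hv⟩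
  omega

/-- phaselessRank is at most n for nonneg matrices. -/
lemma aux_pr_le {n : ℕ} (M : Matrix (Fin n) (Fin n) ℝ) (hM : ∀ i j, 0 ≤ M i j) :
    phaselessRank M ≤ n := by
  have h1 : phaselessRank M ≤ (Matrix.of fun i j => (M i j : ℂ)).rank :=
    Nat.sInf_le ⟨_, fun i j => by simp [abs_of_nonneg (hM i j)], rfl⟩
  exact h1.trans (Matrix.rank_le_width _)

/-- Polygon data for a nonneg matrix implies phaseless rank < n. -/
lemma aux_pr_lt_of {n : ℕ} (M : Matrix (Fin n) (Fin n) ℝ) (hM : ∀ i j, 0 ≤ M i j)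
    (s : Fin n → ℝ) (hs0 : ∀ j, 0 ≤ s j) (hs : ∃ j, s j ≠ 0)
    (hrow : ∀ i j, 2 * (M i j * s j) ≤ ∑ k, M i k * s k) :
    phaselessRank M < n := by
  choose u hu1 hu2 using fun i =>
    aux_phases (fun j => M i j * s j) (fun j => mul_nonneg (hM i j) (hs0 j)) (hrow i)
  set C : Matrix (Fin n) (Fin n) ℂ := Matrix.of fun i j => (M i j : ℂ) * u i j with hC
  have habs : ∀ i j, ‖C i j‖ = M i j := by
    intro i j
    simp only [hC, Matrix.of_apply, norm_mul, Complex.norm_real, Real.norm_eq_abs, hu1 i j, mul_one]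
    exact abs_of_nonneg (hM i j)
  have hmul : C.mulVec (fun j => (s j : ℂ)) = 0 := by
    funext i
    have := hu2 i
    simp only [Matrix.mulVec, dotProduct, hC, Matrix.of_apply, Pi.zero_apply]
    rw [← this]
    refine Finset.sum_congr rfl fun j _ => ?_
    push_cast
    ring
  have hv : (fun j => (s j : ℂ)) ≠ 0 := by
    obtain ⟨j, hj⟩ := hs
    intro hcon
    have h0 : (s j : ℂ) = 0 := by simpa using congrFun hcon j
    exact hj (by exact_mod_cast h0)
  have hrank : C.rank < n := aux_rank_lt C _ hv hmul
  exact lt_of_le_of_lt (Nat.sInf_le ⟨C, habs, rfl⟩) hrank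

/-- From phaseless rank < n, extract singular matrix with given moduli. -/
lemma aux_pr_lt_extract {n : ℕ} (M : Matrix (Fin n) (Fin n) ℝ) (hM : ∀ i j, 0 ≤ M i j)
    (h : phaselessRank M < n) :
    ∃ B : Matrix (Fin n) (Fin n) ℂ, (∀ i j, ‖B i j‖ = M i j) ∧ B.rank < n := by
  have hne : {r | ∃ B : Matrix (Fin n) (Fin n) ℂ,
      (∀ i j, ‖B i j‖ = M i j) ∧ B.rank = r}.Nonempty :=
    ⟨_, ⟨Matrix.of fun i j => (M i j : ℂ), fun i j => by simp [abs_of_nonneg (hM i j)], rfl⟩⟩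
  obtain ⟨B, hB, hr⟩ := Nat.sInf_mem hne
  exact ⟨B, hB, by rw [hr]; exact h⟩

/-- The key lemma: phaseless singularity of the α-th Hadamard power (α ≥ 1)
implies phaseless singularity of the matrix itself. -/
lemma aux_key {n : ℕ} (A : Matrix (Fin n) (Fin n) ℝ) (hA : ∀ i j, 0 ≤ A i j)
    (α : ℝ) (hα : 1 ≤ α)
    (h : phaselessRank (Matrix.of fun i j => A i j ^ α) < n) : phaselessRank A < n := by
  classical
  set M : Matrix (Fin n) (Fin n) ℝ := Matrix.of fun i j => A i j ^ α with hMdef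
  have hM : ∀ i j, 0 ≤ M i j := fun i j => Real.rpow_nonneg (hA i j) α
  obtain ⟨B, hB, hBr⟩ := aux_pr_lt_extract M hM h
  -- B singular
  have hdet : B.det = 0 := by
    by_contra hdet
    have : B.rank = n := by
      rw [Matrix.rank_of_isUnit B ((Matrix.isUnit_iff_isUnit_det B).mpr (Ne.isUnit hdet)),
        Fintype.card_fin]
    omega
  obtain ⟨v, hv, hmul⟩ := (Matrix.exists_mulVec_eq_zero_iff).mpr hdet
  set r : Fin n → ℝ := fun j => ‖v j‖ with hrdef
  have hr0 : ∀ j, 0 ≤ r j := fun j => norm_nonneg _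
  -- polygon inequalities for M, r
  have hpoly : ∀ i j, 2 * (M i j * r j) ≤ ∑ k, M i k * r k := by
    intro i j
    have h0 : ∑ k, B i k * v k = 0 := by
      have := congrFun hmul i
      simpa [Matrix.mulVec, dotProduct] using this
    have hsplit : B i j * v j + ∑ k ∈ Finset.univ.erase j, B i k * v k = 0 := by
      rw [Finset.add_sum_erase Finset.univ (fun k => B i k * v k) (Finset.mem_univ j)]
      exact h0
    have heq : B i j * v j = -∑ k ∈ Finset.univ.erase j, B i k * v k := by linear_combination hsplit
    have hle : M i j * r j ≤ ∑ k ∈ Finset.univ.erase j, M i k * r k := by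
      have e1 : M i j * r j = ‖B i j * v j‖ := by
        rw [norm_mul, hB i j]
      rw [e1, heq, norm_neg]
      refine le_trans (norm_sum_le _ _) ?_
      refine le_of_eq (Finset.sum_congr rfl fun k _ => ?_)
      rw [norm_mul, hB i k]
    have hsum : M i j * r j + ∑ k ∈ Finset.univ.erase j, M i k * r k
        = ∑ k, M i k * r k :=
      Finset.add_sum_erase Finset.univ (fun k => M i k * r k) (Finset.mem_univ j)
    linarith
  -- power step
  have hαpos : 0 < α := lt_of_lt_of_le one_pos hα
  set β : ℝ := α⁻¹ with hβdef
  have hβpos : 0 < β := inv_pos.mpr hαpos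
  have hβle : β ≤ 1 := by
    rw [hβdef]
    exact inv_le_one_of_one_le₀ hα
  set s : Fin n → ℝ := fun j => r j ^ β with hsdef
  have hs0 : ∀ j, 0 ≤ s j := fun j => Real.rpow_nonneg (hr0 j) β
  have hsne : ∃ j, s j ≠ 0 := by
    have : ∃ j, v j ≠ 0 := by
      by_contra hcon
      push_neg at hcon
      exact hv (funext hcon)
    obtain ⟨j, hj⟩ := this
    have hrj : 0 < r j := by
      rw [hrdef]
      exact norm_pos_iff.mpr hj
    exact ⟨j, (Real.rpow_pos_of_pos hrj β).ne'⟩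
  have hkey : ∀ i k, A i k * s k = (M i k * r k) ^ β := by
    intro i k
    have hMk : M i k = A i k ^ α := rfl
    rw [Real.mul_rpow (hM i k) (hr0 k), hMk, ← Real.rpow_mul (hA i k),
      hβdef, mul_inv_cancel₀ hαpos.ne', Real.rpow_one]
  exact aux_pr_lt_of A hA s hs0 hsne (by
    intro i j
    have hcnn : ∀ k, 0 ≤ M i k * r k := fun k => mul_nonneg (hM i k) (hr0 k)
    have h2cj : M i j * r j ≤ ∑ k ∈ Finset.univ.erase j, M i k * r k := by
      have := hpoly i j
      have hsum : M i j * r j + ∑ k ∈ Finset.univ.erase j, M i k * r k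
          = ∑ k, M i k * r k :=
        Finset.add_sum_erase Finset.univ (fun k => M i k * r k) (Finset.mem_univ j)
      linarith
    have step1 : (M i j * r j) ^ β ≤ (∑ k ∈ Finset.univ.erase j, M i k * r k) ^ β :=
      Real.rpow_le_rpow (hcnn j) h2cj hβpos.le
    have step2 : (∑ k ∈ Finset.univ.erase j, M i k * r k) ^ β
        ≤ ∑ k ∈ Finset.univ.erase j, (M i k * r k) ^ β :=
      aux_rpow_sum_le hβpos hβle _ _ hcnn
    have hsum2 : (M i j * r j) ^ β + ∑ k ∈ Finset.univ.erase j, (M i k * r k) ^ β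
        = ∑ k, (M i k * r k) ^ β :=
      Finset.add_sum_erase Finset.univ (fun k => (M i k * r k) ^ β) (Finset.mem_univ j)
    have final : 2 * ((M i j * r j) ^ β) ≤ ∑ k, (M i k * r k) ^ β := by linarith
    calc 2 * (A i j * s j) = 2 * ((M i j * r j) ^ β) := by rw [hkey]
      _ ≤ ∑ k, (M i k * r k) ^ β := final
      _ = ∑ k, A i k * s k := (Finset.sum_congr rfl fun k _ => (hkey i k)).symm)

theorem stmt_17 {n : ℕ} (A : Matrix (Fin n) (Fin n) ℝ) (hA : ∀ i j, 0 ≤ A i j)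
    (α : ℝ) (hα : 1 ≤ α) :
    (phaselessRank A = n →
      phaselessRank (Matrix.of fun i j => A i j ^ α) = n) ∧
    (phaselessRank A < n →
      phaselessRank (Matrix.of fun i j => Real.sqrt (A i j)) < n) := by
  constructor
  · intro h
    have hle : phaselessRank (Matrix.of fun i j => A i j ^ α) ≤ n :=
      aux_pr_le _ (fun i j => Real.rpow_nonneg (hA i j) α)
    rcases lt_or_eq_of_le hle with hlt | heq
    · have := aux_key A hA α hα hlt
      omega
    · exact heq
  · intro h
    have h2 : phaselessRank (Matrix.of fun i j =>
        (Matrix.of fun i j => Real.sqrt (A i j)) i j ^ (2 : ℝ)) < n := by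
      have heqM : (Matrix.of fun i j =>
          (Matrix.of fun i j => Real.sqrt (A i j)) i j ^ (2 : ℝ)) = A := by
        ext i j
        rw [Matrix.of_apply, Matrix.of_apply]
        rw [show ((2 : ℝ) = ((2 : ℕ) : ℝ)) by norm_num, Real.rpow_natCast,
          Real.sq_sqrt (hA i j)]
      rw [heqM]
      exact h
    exact aux_key (Matrix.of fun i j => Real.sqrt (A i j))
      (fun i j => Real.sqrt_nonneg _) 2 one_le_two h2
end

section
/- Let d be a positive integer and 0 ≤ α < 1/d. Then the maximum number of complex equiangular lines in ℂ^d with common angle arccos(α) is exactly d. Equivalently: there exist d unit vectors v₁,…,v_d in ℂ^d with |⟨vᵢ,vⱼ⟩| = α for i ≠ j, but no d+1 such unit vectors exist. -/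
open scoped InnerProductSpace

open Finset in
lemma stmt_18_exists (d : ℕ) (hd : 0 < d) (α : ℝ) (hα0 : 0 ≤ α) (hα : α < 1 / d) :
    ∃ v : Fin d → EuclideanSpace ℂ (Fin d),
      (∀ i, ‖v i‖ = 1) ∧
      ∀ i j, i ≠ j → ‖⟪v i, v j⟫_ℂ‖ = α := by
  have hd' : (0:ℝ) < d := by exact_mod_cast hd
  have hd1 : (1:ℝ) ≤ d := by exact_mod_cast hd
  have hα1 : α < 1 := lt_of_lt_of_le hα (by rw [div_le_one hd']; exact hd1)
  set a : ℝ := Real.sqrt (1 - α) with ha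
  set c : ℝ := Real.sqrt (1 - α + d * α) with hc
  set b : ℝ := (c - a) / d with hb
  have h1α : 0 ≤ 1 - α := by linarith
  have hc2 : c ^ 2 = 1 - α + d * α := Real.sq_sqrt (by nlinarith [mul_nonneg hd'.le hα0])
  have ha2 : a ^ 2 = 1 - α := Real.sq_sqrt h1α
  have key0 : (d:ℝ) * b ^ 2 + 2 * a * b = (c ^ 2 - a ^ 2) / d := by
    rw [hb]; field_simp; ring
  have key : (d:ℝ) * b ^ 2 + 2 * a * b = α := by
    rw [key0, hc2, ha2]; field_simp; ring
  set v : Fin d → EuclideanSpace ℂ (Fin d) :=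
    fun i => WithLp.toLp 2 (fun k => (b:ℂ) + if k = i then (a:ℂ) else 0) with hv
  have hinner : ∀ i j : Fin d, ⟪v i, v j⟫_ℂ =
      (((d:ℝ) * b ^ 2 + 2 * a * b : ℝ) : ℂ) + if i = j then ((a^2 : ℝ) : ℂ) else 0 := by
    intro i j
    rw [PiLp.inner_apply]
    have hterm : ∀ k : Fin d, (inner ℂ ((v i) k) ((v j) k) : ℂ) =
        ((b:ℂ)*(b:ℂ) + (if k = j then (b:ℂ)*(a:ℂ) else 0)) +
        ((if k = i then (a:ℂ)*(b:ℂ) else 0) +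
          (if k = i then (if k = j then (a:ℂ)*(a:ℂ) else 0) else 0)) := by
      intro k
      show ((b:ℂ) + if k = j then (a:ℂ) else 0) *
          (starRingEnd ℂ) ((b:ℂ) + if k = i then (a:ℂ) else 0) = _
      rw [map_add, Complex.conj_ofReal, apply_ite (starRingEnd ℂ), map_zero,
        Complex.conj_ofReal]
      split_ifs <;> ring
    rw [Finset.sum_congr rfl fun k _ => hterm k, Finset.sum_add_distrib,
      Finset.sum_add_distrib, Finset.sum_add_distrib, Finset.sum_ite_eq',
      Finset.sum_ite_eq', Finset.sum_ite_eq', Finset.sum_const, Finset.card_univ,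
      Fintype.card_fin]
    rw [if_pos (Finset.mem_univ j), if_pos (Finset.mem_univ i), if_pos (Finset.mem_univ i)]
    by_cases hij : i = j
    · rw [if_pos hij, if_pos hij]
      push_cast
      ring
    · rw [if_neg hij, if_neg hij]
      push_cast
      ring
  refine ⟨v, ?_, ?_⟩
  · intro i
    have h2 : ⟪v i, v i⟫_ℂ = ((‖v i‖ : ℂ))^2 := inner_self_eq_norm_sq_to_K (v i)
    have h3 : ((d:ℝ)*b^2 + 2*a*b + a^2 : ℝ) = ‖v i‖^2 := by
      have h5 := (hinner i i).symm.trans h2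
      rw [if_pos rfl] at h5
      exact_mod_cast h5
    rw [key, ha2] at h3
    nlinarith [norm_nonneg (v i), h3]
  · intro i j hij
    rw [hinner i j, if_neg hij, add_zero, key, Complex.norm_real, Real.norm_of_nonneg hα0]

open Finset in
lemma stmt_18_not_exists (d : ℕ) (hd : 0 < d) (α : ℝ) (hα0 : 0 ≤ α) (hα : α < 1 / d) :
    ¬ (∃ v : Fin (d + 1) → EuclideanSpace ℂ (Fin d),
      (∀ i, ‖v i‖ = 1) ∧
      ∀ i j, i ≠ j → ‖⟪v i, v j⟫_ℂ‖ = α) := by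
  rintro ⟨v, hnorm, hang⟩
  have hd' : (0:ℝ) < d := by exact_mod_cast hd
  have hdα : (d:ℝ) * α < 1 := by
    have := (lt_div_iff₀ hd').mp hα; linarith
  -- linear dependence
  have hnli : ¬ LinearIndependent ℂ v := by
    intro hli
    have := hli.fintype_card_le_finrank
    simp [finrank_euclideanSpace_fin] at this
  rw [Fintype.not_linearIndependent_iff] at hnli
  obtain ⟨g, hsum, i0, hi0⟩ := hnli
  obtain ⟨j, -, hj⟩ := Finset.exists_max_image Finset.univ (fun i => ‖g i‖)
    ⟨i0, Finset.mem_univ i0⟩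
  have hgj : 0 < ‖g j‖ :=
    lt_of_lt_of_le (by simpa using hi0) (hj i0 (Finset.mem_univ i0))
  -- inner product with v j
  have h0 : (0 : ℂ) = ∑ i, g i * ⟪v j, v i⟫_ℂ := by
    calc (0:ℂ) = ⟪v j, (0 : EuclideanSpace ℂ (Fin d))⟫_ℂ := by simp
    _ = ⟪v j, ∑ i, g i • v i⟫_ℂ := by rw [hsum]
    _ = ∑ i, g i * ⟪v j, v i⟫_ℂ := by
        rw [inner_sum]; exact Finset.sum_congr rfl fun i _ => inner_smul_right _ _ _
  have hjj : ⟪v j, v j⟫_ℂ = 1 := by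
    rw [inner_self_eq_norm_sq_to_K, hnorm j]; norm_num
  rw [← Finset.sum_erase_add _ _ (Finset.mem_univ j), hjj, mul_one] at h0
  have hgje : g j = -∑ i ∈ Finset.univ.erase j, g i * ⟪v j, v i⟫_ℂ := by
    linear_combination -h0
  have hbound : ‖g j‖ ≤ (d:ℝ) * α * ‖g j‖ := by
    calc ‖g j‖ = ‖∑ i ∈ Finset.univ.erase j, g i * ⟪v j, v i⟫_ℂ‖ := by
          rw [hgje, norm_neg]
    _ ≤ ∑ i ∈ Finset.univ.erase j, ‖g i * ⟪v j, v i⟫_ℂ‖ :=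
          norm_sum_le _ _
    _ ≤ ∑ i ∈ Finset.univ.erase j, ‖g j‖ * α := by
          refine Finset.sum_le_sum fun i hi => ?_
          rw [norm_mul, hang j i (Ne.symm (Finset.ne_of_mem_erase hi))]
          exact mul_le_mul_of_nonneg_right (hj i (Finset.mem_univ i)) hα0
    _ = (d:ℝ) * α * ‖g j‖ := by
          rw [Finset.sum_const, Finset.card_erase_of_mem (Finset.mem_univ j)]
          simp [Fintype.card_fin]
          ring
  nlinarith [hgj, hdα, hbound]

theorem stmt_18 (d : ℕ) (hd : 0 < d) (α : ℝ) (hα0 : 0 ≤ α) (hα : α < 1 / d) :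
    (∃ v : Fin d → EuclideanSpace ℂ (Fin d),
      (∀ i, ‖v i‖ = 1) ∧
      ∀ i j, i ≠ j → ‖⟪v i, v j⟫_ℂ‖ = α) ∧
    ¬ (∃ v : Fin (d + 1) → EuclideanSpace ℂ (Fin d),
      (∀ i, ‖v i‖ = 1) ∧
      ∀ i j, i ≠ j → ‖⟪v i, v j⟫_ℂ‖ = α) := by
  exact ⟨stmt_18_exists d hd α hα0 hα, stmt_18_not_exists d hd α hα0 hα⟩
end
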